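/- arXiv:2403.01042 — 13 statements merged into one kernel-verified Lean document; each statement's English description precedes it below -/
import Mathlib

section
/- In the QTM, fix an agent i and suppose its vote vector a^i satisfies |a_k^i| > sqrt((max_ℓ v_ℓ^i)/c) for some alternative k. Then a^i is strictly dominated by the all-zeros vote vector: for every profile a^{−i} of the other agents' votes, u^i(0; a^{−i}) > u^i(a^i; a^{−i}). -/
open Real Finset

/-- Softmax selection probabilities of the QTM given aggregate vote totals `A`. -/
noncomputable def softmax {m : ℕ} (A : Fin m → ℝ) (k : Fin m) : ℝ :=
  Real.exp (A k) / ∑ l, Real.exp (A l)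

/-- Expected utility of agent `i` in the QTM with parameter `c`, values `v`, and
vote profile `a`. -/
noncomputable def qtmUtil {n m : ℕ} (c : ℝ) (v : Fin n → Fin m → ℝ)
    (a : Fin n → Fin m → ℝ) (i : Fin n) : ℝ :=
  (∑ k, softmax (fun k => ∑ j, a j k) k * v i k)
    - c * ∑ k, (a i k) ^ 2
    + (c / ((n : ℝ) - 1)) * ∑ j ∈ Finset.univ.erase i, ∑ k, (a j k) ^ 2

/-- Pure-strategy Nash equilibrium of the QTM. -/
def IsNashQTM {n m : ℕ} (c : ℝ) (v : Fin n → Fin m → ℝ)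
    (a : Fin n → Fin m → ℝ) : Prop :=
  ∀ (i : Fin n) (b : Fin m → ℝ),
    qtmUtil c v (Function.update a i b) i ≤ qtmUtil c v a i

theorem stmt0 (n m : ℕ) (hn : 2 ≤ n) (hm : 2 ≤ m)
    (c : ℝ) (hc : 0 < c)
    (v : Fin n → Fin m → ℝ) (hv : ∀ i k, 0 ≤ v i k)
    (i : Fin n) (ai : Fin m → ℝ)
    (hbig : ∃ k, Real.sqrt ((⨆ l, v i l) / c) < |ai k|) :
    ∀ a : Fin n → Fin m → ℝ,
      qtmUtil c v (Function.update a i ai) i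
        < qtmUtil c v (Function.update a i (fun _ => 0)) i := by
  intro a
  obtain ⟨k₀, hk₀⟩ := hbig
  have hm0 : 0 < m := by omega
  have hbdd : BddAbove (Set.range (v i)) := Set.Finite.bddAbove (Set.finite_range _)
  have hM0 : 0 ≤ ⨆ l, v i l :=
    le_trans (hv i ⟨0, hm0⟩) (le_ciSup hbdd ⟨0, hm0⟩)
  have h1 : (⨆ l, v i l) / c < ai k₀ ^ 2 := by
    nlinarith [Real.sq_sqrt (div_nonneg hM0 hc.le),
      Real.sqrt_nonneg ((⨆ l, v i l) / c), sq_abs (ai k₀)]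
  have hkey : (⨆ l, v i l) < c * ai k₀ ^ 2 := by
    rw [div_lt_iff₀ hc] at h1; linarith
  have hsum_exp_pos : ∀ A : Fin m → ℝ, 0 < ∑ l, Real.exp (A l) := fun A =>
    Finset.sum_pos (fun l _ => Real.exp_pos _) ⟨⟨0, hm0⟩, Finset.mem_univ _⟩
  have hsm_nonneg : ∀ (A : Fin m → ℝ) k, 0 ≤ softmax A k := fun A k =>
    div_nonneg (Real.exp_pos _).le (hsum_exp_pos A).le
  have hsm_sum : ∀ A : Fin m → ℝ, ∑ k, softmax A k = 1 := by
    intro A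
    unfold softmax
    rw [← Finset.sum_div, div_self (hsum_exp_pos A).ne']
  have hS_le : ∀ A : Fin m → ℝ, ∑ k, softmax A k * v i k ≤ ⨆ l, v i l := by
    intro A
    calc ∑ k, softmax A k * v i k
        ≤ ∑ k, softmax A k * (⨆ l, v i l) :=
          Finset.sum_le_sum fun k _ =>
            mul_le_mul_of_nonneg_left (le_ciSup hbdd k) (hsm_nonneg A k)
      _ = ⨆ l, v i l := by rw [← Finset.sum_mul, hsm_sum, one_mul]
  have hS0 : ∀ A : Fin m → ℝ, 0 ≤ ∑ k, softmax A k * v i k := fun A =>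
    Finset.sum_nonneg fun k _ => mul_nonneg (hsm_nonneg A k) (hv i k)
  have hT : c * ai k₀ ^ 2 ≤ c * ∑ k, ai k ^ 2 :=
    mul_le_mul_of_nonneg_left
      (Finset.single_le_sum (fun k _ => sq_nonneg (ai k)) (Finset.mem_univ k₀)) hc.le
  have hR : ∀ b : Fin m → ℝ,
      ∑ j ∈ Finset.univ.erase i, ∑ k, (Function.update a i b j k) ^ 2
        = ∑ j ∈ Finset.univ.erase i, ∑ k, (a j k) ^ 2 := by
    intro b
    refine Finset.sum_congr rfl fun j hj => ?_
    rw [Function.update_of_ne (Finset.mem_erase.mp hj).1]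
  unfold qtmUtil
  rw [hR, hR]
  simp only [Function.update_self]
  have h2 : ∑ k : Fin m, ((0 : ℝ)) ^ 2 = 0 := by simp
  have hle1 := hS_le (fun k => ∑ j, Function.update a i ai j k)
  have hge0 := hS0 (fun k => ∑ j, Function.update a i (fun _ => 0) j k)
  simp only [h2]
  linarith
end

section
/- Let M = sqrt((max_{i,k} v_k^i)/c) and let QTM' denote the QTM in which each agent's strategy space is restricted to the compact cube [−M, M]^m. A profile (a^1,…,a^n) with each a^i ∈ [−M, M]^m is a pure-strategy Nash equilibrium of QTM' if and only if it is a pure-strategy Nash equilibrium of the unrestricted QTM (where strategies range over all of ℝ^m). -/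
open Real Finset

lemma softmax_nonneg' {m : ℕ} (A : Fin m → ℝ) (k : Fin m) : 0 ≤ softmax A k := by
  unfold softmax
  positivity

lemma softmax_sum' {m : ℕ} (hm : 0 < m) (A : Fin m → ℝ) : ∑ k, softmax A k = 1 := by
  have hne : Nonempty (Fin m) := Fin.pos_iff_nonempty.mp hm
  unfold softmax
  rw [← Finset.sum_div]
  apply div_self
  have : 0 < ∑ l, Real.exp (A l) :=
    Finset.sum_pos (fun l _ => Real.exp_pos _) Finset.univ_nonempty
  linarith

theorem stmt1 (n m : ℕ) (hn : 2 ≤ n) (hm : 2 ≤ m)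
    (c : ℝ) (hc : 0 < c)
    (v : Fin n → Fin m → ℝ) (hv : ∀ i k, 0 ≤ v i k)
    (M : ℝ) (hM : M = Real.sqrt ((⨆ i, ⨆ k, v i k) / c))
    (a : Fin n → Fin m → ℝ) (ha : ∀ i k, |a i k| ≤ M) :
    (∀ (i : Fin n) (b : Fin m → ℝ), (∀ k, |b k| ≤ M) →
        qtmUtil c v (Function.update a i b) i ≤ qtmUtil c v a i)
      ↔ IsNashQTM c v a := by
  constructor
  · intro h i b
    by_cases hb : ∀ k, |b k| ≤ M
    · exact h i b hb
    · push_neg at hb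
      obtain ⟨k0, hk0⟩ := hb
      have hmpos : 0 < m := by omega
      have hne : Nonempty (Fin m) := Fin.pos_iff_nonempty.mp hmpos
      set V := ⨆ i, ⨆ k, v i k with hV
      have hvV : ∀ i k, v i k ≤ V := by
        intro i k
        refine le_trans (le_ciSup (Set.Finite.bddAbove (Set.finite_range _)) k) ?_
        exact le_ciSup (f := fun i => ⨆ k, v i k)
          (Set.Finite.bddAbove (Set.finite_range _)) i
      have hV0 : 0 ≤ V := le_trans (hv ⟨0, by omega⟩ ⟨0, by omega⟩) (hvV _ _)
      have hM0 : 0 ≤ M := hM ▸ Real.sqrt_nonneg _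
      have hM2 : c * M ^ 2 = V := by
        rw [hM, Real.sq_sqrt (by positivity)]
        field_simp
      have h0 := h i (fun _ => 0) (fun k => by simpa using hM0)
      refine le_trans ?_ h0
      -- rewrite both utilities
      have hR : ∀ b' : Fin m → ℝ,
          ∑ j ∈ Finset.univ.erase i, ∑ k, (Function.update a i b' j k) ^ 2
            = ∑ j ∈ Finset.univ.erase i, ∑ k, (a j k) ^ 2 := by
        intro b'
        refine Finset.sum_congr rfl fun j hj => ?_
        rw [Function.update_of_ne (Finset.ne_of_mem_erase hj)]
      have key : ∀ b' : Fin m → ℝ, qtmUtil c v (Function.update a i b') i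
          = (∑ k, softmax (fun k => ∑ j, Function.update a i b' j k) k * v i k)
            - c * ∑ k, (b' k) ^ 2
            + (c / ((n : ℝ) - 1)) * ∑ j ∈ Finset.univ.erase i, ∑ k, (a j k) ^ 2 := by
        intro b'
        unfold qtmUtil
        rw [hR b']
        simp
      rw [key b, key (fun _ => 0)]
      have hPle : ∀ A : Fin m → ℝ, ∑ k, softmax A k * v i k ≤ V := by
        intro A
        calc ∑ k, softmax A k * v i k
            ≤ ∑ k, softmax A k * V :=
              Finset.sum_le_sum fun k _ =>
                mul_le_mul_of_nonneg_left (hvV i k) (softmax_nonneg' A k)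
          _ = V := by rw [← Finset.sum_mul, softmax_sum' hmpos, one_mul]
      have hPge : ∀ A : Fin m → ℝ, 0 ≤ ∑ k, softmax A k * v i k := fun A =>
        Finset.sum_nonneg fun k _ => mul_nonneg (softmax_nonneg' A k) (hv i k)
      have hSb : M ^ 2 ≤ ∑ k, (b k) ^ 2 := by
        have h1 : M ^ 2 ≤ (b k0) ^ 2 := by
          have := pow_le_pow_left₀ hM0 hk0.le 2
          rwa [sq_abs] at this
        refine le_trans h1 (Finset.single_le_sum (fun k _ => sq_nonneg (b k))
          (Finset.mem_univ k0))
      have hcost : V ≤ c * ∑ k, (b k) ^ 2 := by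
        rw [← hM2]
        exact mul_le_mul_of_nonneg_left hSb hc.le
      have hb1 := hPle (fun k => ∑ j, Function.update a i b j k)
      have h02 := hPge (fun k => ∑ j, Function.update a i (fun _ => 0) j k)
      have : (∑ k : Fin m, ((0:ℝ)) ^ 2) = 0 := by simp
      rw [this]
      linarith
  · intro h i b _
    exact h i b
end

section
/- In the QTM, if c ≥ (1/2)·max_k v_k^i, then for every fixed profile a^{−i} of the other agents' votes, the function a^i ↦ u^i(a^i; a^{−i}) is strictly concave on ℝ^m. -/
open Real Finset

/-- Algebraic identity: the (scaled) numerator of the second derivative of the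
expected-value-of-softmax function along a line equals a weighted sum of squares. -/
lemma qtm_sum_id1 {m : ℕ} (w d e : Fin m → ℝ) :
    (∑ k, e k) * (((∑ k, w k * (d k * (d k * e k))) * (∑ k, e k)
        - (∑ k, w k * e k) * (∑ k, d k * (d k * e k))) * (∑ k, e k)
      - 2 * (∑ k, d k * e k) * ((∑ k, w k * (d k * e k)) * (∑ k, e k)
        - (∑ k, w k * e k) * (∑ k, d k * e k)))
    = ∑ k, e k * (w k * (∑ l, e l) - (∑ l, w l * e l))
        * (d k * (∑ l, e l) - (∑ l, d l * e l)) ^ 2 := by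
  have h : ∀ k ∈ Finset.univ, e k * (w k * (∑ l, e l) - (∑ l, w l * e l))
        * (d k * (∑ l, e l) - (∑ l, d l * e l)) ^ 2
      = (∑ l, e l) ^ 3 * (w k * (d k * (d k * e k)))
        - 2 * (∑ l, e l) ^ 2 * (∑ l, d l * e l) * (w k * (d k * e k))
        + (∑ l, e l) * (∑ l, d l * e l) ^ 2 * (w k * e k)
        - (∑ l, w l * e l) * (∑ l, e l) ^ 2 * (d k * (d k * e k))
        + 2 * (∑ l, w l * e l) * (∑ l, e l) * (∑ l, d l * e l) * (d k * e k)
        - (∑ l, w l * e l) * (∑ l, d l * e l) ^ 2 * e k := fun k _ => by ring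
  rw [Finset.sum_congr rfl h]
  simp only [Finset.sum_add_distrib, Finset.sum_sub_distrib, ← Finset.mul_sum]
  ring

lemma qtm_sum_id2 {m : ℕ} (d e : Fin m → ℝ) (A : ℝ) :
    ∑ k, e k * A * (d k * (∑ l, e l) - (∑ l, d l * e l)) ^ 2
    = A * ((∑ l, e l) ^ 2 * (∑ l, d l * (d l * e l)) - (∑ l, e l) * (∑ l, d l * e l) ^ 2) := by
  have h : ∀ k ∈ Finset.univ, e k * A * (d k * (∑ l, e l) - (∑ l, d l * e l)) ^ 2
      = A * (∑ l, e l) ^ 2 * (d k * (d k * e k))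
        - 2 * A * (∑ l, e l) * (∑ l, d l * e l) * (d k * e k)
        + A * (∑ l, d l * e l) ^ 2 * e k := fun k _ => by ring
  rw [Finset.sum_congr rfl h]
  simp only [Finset.sum_add_distrib, Finset.sum_sub_distrib, ← Finset.mul_sum]
  ring

/-- Key inequality: the second-derivative numerator is strictly dominated. -/
lemma qtm_key_ineq {m : ℕ} (hm : 2 ≤ m) (w d e : Fin m → ℝ) (he : ∀ k, 0 < e k)
    (hw : ∀ k, 0 ≤ w k) (hd : d ≠ 0) (c : ℝ) (hc : 0 < c) (hwc : ∀ k, w k ≤ 2 * c) :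
    ((∑ k, w k * (d k * (d k * e k))) * (∑ k, e k)
        - (∑ k, w k * e k) * (∑ k, d k * (d k * e k))) * (∑ k, e k)
      - 2 * (∑ k, d k * e k) * ((∑ k, w k * (d k * e k)) * (∑ k, e k)
        - (∑ k, w k * e k) * (∑ k, d k * e k))
      < 2 * c * (∑ k, d k ^ 2) * (∑ k, e k) ^ 3 := by
  have hne : Nonempty (Fin m) := ⟨⟨0, by omega⟩⟩
  have hDpos : 0 < ∑ k, e k := Finset.sum_pos (fun k _ => he k) Finset.univ_nonempty
  have hNnn : 0 ≤ ∑ k, w k * e k :=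
    Finset.sum_nonneg fun k _ => mul_nonneg (hw k) (he k).le
  have hstep1 : ∑ k, e k * (w k * (∑ l, e l) - (∑ l, w l * e l))
        * (d k * (∑ l, e l) - (∑ l, d l * e l)) ^ 2
      ≤ ∑ k, e k * (2 * c * (∑ l, e l)) * (d k * (∑ l, e l) - (∑ l, d l * e l)) ^ 2 := by
    apply Finset.sum_le_sum
    intro k _
    apply mul_le_mul_of_nonneg_right _ (sq_nonneg _)
    apply mul_le_mul_of_nonneg_left _ (he k).le
    have h1 : w k * (∑ l, e l) ≤ 2 * c * (∑ l, e l) :=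
      mul_le_mul_of_nonneg_right (hwc k) hDpos.le
    linarith
  have hD2lt : (∑ k, d k * (d k * e k)) < (∑ k, e k) * (∑ k, d k ^ 2) := by
    obtain ⟨l0, hl0⟩ := Function.ne_iff.1 hd
    obtain ⟨k0, hk0⟩ := Fintype.exists_ne_of_one_lt_card (by simp; omega) l0
    have h1 : ∑ k, e k * ((∑ l, d l ^ 2) - d k ^ 2)
        = (∑ k, e k) * (∑ l, d l ^ 2) - ∑ k, d k * (d k * e k) := by
      simp only [mul_sub, Finset.sum_sub_distrib]
      congr 1
      · rw [← Finset.sum_mul]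
      · exact Finset.sum_congr rfl fun k _ => by ring
    have h2 : 0 < ∑ k, e k * ((∑ l, d l ^ 2) - d k ^ 2) := by
      apply Finset.sum_pos'
      · intro k _
        apply mul_nonneg (he k).le
        have : d k ^ 2 ≤ ∑ l, d l ^ 2 :=
          Finset.single_le_sum (fun l _ => sq_nonneg (d l)) (Finset.mem_univ k)
        linarith
      · refine ⟨k0, Finset.mem_univ _, ?_⟩
        apply mul_pos (he k0)
        have hpair : d k0 ^ 2 + d l0 ^ 2 ≤ ∑ l, d l ^ 2 := by
          have hsub : ({k0, l0} : Finset (Fin m)) ⊆ Finset.univ := Finset.subset_univ _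
          have := Finset.sum_le_sum_of_subset_of_nonneg hsub
            (fun l _ _ => sq_nonneg (d l))
          rwa [Finset.sum_pair hk0] at this
        have hl0pos : 0 < d l0 ^ 2 := (sq_nonneg (d l0)).lt_of_ne (Ne.symm (pow_ne_zero 2 hl0))
        nlinarith [sq_nonneg (d k0)]
    linarith
  have c1 := (qtm_sum_id1 w d e).le.trans
    (hstep1.trans (qtm_sum_id2 d e (2 * c * (∑ l, e l))).le)
  have c2 : 2 * c * (∑ l, e l) * ((∑ l, e l) ^ 2 * (∑ l, d l * (d l * e l))
        - (∑ l, e l) * (∑ l, d l * e l) ^ 2)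
      ≤ 2 * c * (∑ l, e l) ^ 3 * (∑ l, d l * (d l * e l)) := by
    have h0 : 0 ≤ 2 * c * (∑ l, e l) ^ 2 * (∑ l, d l * e l) ^ 2 := by positivity
    nlinarith [h0]
  have c3 : 2 * c * (∑ l, e l) ^ 3 * (∑ l, d l * (d l * e l))
      < 2 * c * (∑ l, e l) ^ 3 * ((∑ k, e k) * (∑ k, d k ^ 2)) :=
    mul_lt_mul_of_pos_left hD2lt (by positivity)
  have c4 : (∑ k, e k) * (((∑ k, w k * (d k * (d k * e k))) * (∑ k, e k)
        - (∑ k, w k * e k) * (∑ k, d k * (d k * e k))) * (∑ k, e k)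
      - 2 * (∑ k, d k * e k) * ((∑ k, w k * (d k * e k)) * (∑ k, e k)
        - (∑ k, w k * e k) * (∑ k, d k * e k)))
      < (∑ k, e k) * (2 * c * (∑ k, d k ^ 2) * (∑ k, e k) ^ 3) := by
    calc _ ≤ _ := c1
    _ ≤ _ := c2
    _ < _ := c3
    _ = _ := by ring
  exact lt_of_mul_lt_mul_left c4 hDpos.le

/-- Strict concavity of the utility along any line, proved via the second derivative. -/
lemma qtm_line_concave {m : ℕ} (hm : 2 ≤ m) (c : ℝ) (hc : 0 < c)
    (w : Fin m → ℝ) (hw : ∀ k, 0 ≤ w k) (hwc : ∀ k, w k ≤ 2 * c)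
    (sk x d : Fin m → ℝ) (hd : d ≠ 0) (C : ℝ) :
    StrictConcaveOn ℝ Set.univ (fun t : ℝ =>
      (∑ k, w k * Real.exp (sk k + t * d k)) / (∑ l, Real.exp (sk l + t * d l))
        - c * ∑ k, (x k + t * d k) ^ 2 + C) := by
  have key : ∀ e : Fin m → ℝ, (∀ k, 0 < e k) →
      ((∑ k, w k * (d k * (d k * e k))) * (∑ k, e k)
        - (∑ k, w k * e k) * (∑ k, d k * (d k * e k))) * (∑ k, e k)
      - 2 * (∑ k, d k * e k) * ((∑ k, w k * (d k * e k)) * (∑ k, e k)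
        - (∑ k, w k * e k) * (∑ k, d k * e k))
      < 2 * c * (∑ k, d k ^ 2) * (∑ k, e k) ^ 3 :=
    fun e he => qtm_key_ineq hm w d e he hw hd c hc hwc
  set E : ℝ → Fin m → ℝ := fun t k => Real.exp (sk k + t * d k) with hE
  have hEpos : ∀ t k, 0 < E t k := fun t k => Real.exp_pos _
  have hne : Nonempty (Fin m) := ⟨⟨0, by omega⟩⟩
  have hDpos : ∀ t, 0 < ∑ l, E t l := fun t =>
    Finset.sum_pos (fun k _ => hEpos t k) Finset.univ_nonempty
  have hEder : ∀ t k, HasDerivAt (fun t => Real.exp (sk k + t * d k)) (d k * E t k) t := by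
    intro t k
    have h1 : HasDerivAt (fun t : ℝ => sk k + t * d k) (d k) t := by
      simpa using ((hasDerivAt_id t).mul_const (d k)).const_add (sk k)
    simpa [hE, mul_comm] using h1.exp
  set G1 : ℝ → ℝ := fun t =>
    ((∑ k, w k * (d k * E t k)) * (∑ l, E t l)
      - (∑ k, w k * E t k) * (∑ l, d l * E t l)) / (∑ l, E t l) ^ 2
    - c * ∑ k, 2 * (x k + t * d k) * d k with hG1
  have hg' : ∀ t, HasDerivAt (fun t : ℝ =>
      (∑ k, w k * Real.exp (sk k + t * d k)) / (∑ l, Real.exp (sk l + t * d l))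
        - c * ∑ k, (x k + t * d k) ^ 2 + C) (G1 t) t := by
    intro t
    have hN : HasDerivAt (fun t => ∑ k, w k * Real.exp (sk k + t * d k))
        (∑ k, w k * (d k * E t k)) t :=
      HasDerivAt.fun_sum fun k _ => (hEder t k).const_mul (w k)
    have hD : HasDerivAt (fun t => ∑ l, Real.exp (sk l + t * d l))
        (∑ l, d l * E t l) t :=
      HasDerivAt.fun_sum fun l _ => hEder t l
    have hquot := hN.div hD (hDpos t).ne'
    have hS : HasDerivAt (fun t => ∑ k, (x k + t * d k) ^ 2)
        (∑ k, 2 * (x k + t * d k) * d k) t := by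
      apply HasDerivAt.fun_sum
      intro k _
      have h1 : HasDerivAt (fun t : ℝ => x k + t * d k) (d k) t := by
        simpa using ((hasDerivAt_id t).mul_const (d k)).const_add (x k)
      simpa using h1.fun_pow 2
    exact (hquot.sub (hS.const_mul c)).add_const C
  set G2 : ℝ → ℝ := fun t =>
    (((∑ k, w k * (d k * (d k * E t k))) * (∑ l, E t l)
        + (∑ k, w k * (d k * E t k)) * (∑ l, d l * E t l)
      - ((∑ k, w k * (d k * E t k)) * (∑ l, d l * E t l)
        + (∑ k, w k * E t k) * (∑ l, d l * (d l * E t l)))) * ((∑ l, E t l) ^ 2)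
      - ((∑ k, w k * (d k * E t k)) * (∑ l, E t l)
        - (∑ k, w k * E t k) * (∑ l, d l * E t l))
        * (2 * (∑ l, E t l) * (∑ l, d l * E t l))) / ((∑ l, E t l) ^ 2) ^ 2
    - c * ∑ k, 2 * d k * d k with hG2
  have hg'' : ∀ t, HasDerivAt G1 (G2 t) t := by
    intro t
    have hN1 : HasDerivAt (fun t => ∑ k, w k * (d k * E t k))
        (∑ k, w k * (d k * (d k * E t k))) t :=
      HasDerivAt.fun_sum fun k _ => (((hEder t k).const_mul (d k)).const_mul (w k))
    have hD1 : HasDerivAt (fun t => ∑ l, d l * E t l)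
        (∑ l, d l * (d l * E t l)) t :=
      HasDerivAt.fun_sum fun l _ => (hEder t l).const_mul (d l)
    have hN : HasDerivAt (fun t => ∑ k, w k * E t k)
        (∑ k, w k * (d k * E t k)) t :=
      HasDerivAt.fun_sum fun k _ => (hEder t k).const_mul (w k)
    have hD : HasDerivAt (fun t => ∑ l, E t l) (∑ l, d l * E t l) t :=
      HasDerivAt.fun_sum fun l _ => hEder t l
    have hU : HasDerivAt (fun t => (∑ k, w k * (d k * E t k)) * (∑ l, E t l)
        - (∑ k, w k * E t k) * (∑ l, d l * E t l))
        ((∑ k, w k * (d k * (d k * E t k))) * (∑ l, E t l)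
          + (∑ k, w k * (d k * E t k)) * (∑ l, d l * E t l)
          - ((∑ k, w k * (d k * E t k)) * (∑ l, d l * E t l)
            + (∑ k, w k * E t k) * (∑ l, d l * (d l * E t l)))) t :=
      (hN1.mul hD).sub (hN.mul hD1)
    have hDen : HasDerivAt (fun t => (∑ l, E t l) ^ 2)
        (2 * (∑ l, E t l) * (∑ l, d l * E t l)) t := by
      simpa using hD.fun_pow 2
    have hquot := hU.div hDen (pow_ne_zero 2 (hDpos t).ne')
    have hS1 : HasDerivAt (fun t => ∑ k, 2 * (x k + t * d k) * d k)
        (∑ k, 2 * d k * d k) t := by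
      apply HasDerivAt.fun_sum
      intro k _
      have h1 : HasDerivAt (fun t : ℝ => x k + t * d k) (d k) t := by
        simpa using ((hasDerivAt_id t).mul_const (d k)).const_add (x k)
      exact (h1.const_mul 2).mul_const (d k)
    exact hquot.sub (hS1.const_mul c)
  apply strictConcaveOn_univ_of_deriv2_neg
  · exact continuous_iff_continuousAt.2 fun t => (hg' t).differentiableAt.continuousAt
  · intro t
    have hd1 : deriv (fun t : ℝ =>
        (∑ k, w k * Real.exp (sk k + t * d k)) / (∑ l, Real.exp (sk l + t * d l))
          - c * ∑ k, (x k + t * d k) ^ 2 + C) = G1 :=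
      funext fun t => (hg' t).deriv
    have hiter : deriv^[2] (fun t : ℝ =>
        (∑ k, w k * Real.exp (sk k + t * d k)) / (∑ l, Real.exp (sk l + t * d l))
          - c * ∑ k, (x k + t * d k) ^ 2 + C) t = G2 t := by
      simp only [Function.iterate_succ, Function.iterate_zero, Function.comp_apply, id_eq]
      rw [hd1]
      exact (hg'' t).deriv
    rw [hiter]
    have hkey := key (E t) (hEpos t)
    have hsum2 : ∑ k, 2 * d k * d k = 2 * ∑ k, d k ^ 2 := by
      rw [Finset.mul_sum]; exact Finset.sum_congr rfl fun k _ => by ring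
    rw [hG2, hsum2]
    have hDp := hDpos t
    have hdiv : (((∑ k, w k * (d k * (d k * E t k))) * (∑ l, E t l)
        + (∑ k, w k * (d k * E t k)) * (∑ l, d l * E t l)
      - ((∑ k, w k * (d k * E t k)) * (∑ l, d l * E t l)
        + (∑ k, w k * E t k) * (∑ l, d l * (d l * E t l)))) * ((∑ l, E t l) ^ 2)
      - ((∑ k, w k * (d k * E t k)) * (∑ l, E t l)
        - (∑ k, w k * E t k) * (∑ l, d l * E t l))
        * (2 * (∑ l, E t l) * (∑ l, d l * E t l))) / ((∑ l, E t l) ^ 2) ^ 2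
      < 2 * c * (∑ k, d k ^ 2) := by
      rw [div_lt_iff₀ (by positivity)]
      have h1 : (((∑ k, w k * (d k * (d k * E t k))) * (∑ l, E t l)
          + (∑ k, w k * (d k * E t k)) * (∑ l, d l * E t l)
        - ((∑ k, w k * (d k * E t k)) * (∑ l, d l * E t l)
          + (∑ k, w k * E t k) * (∑ l, d l * (d l * E t l)))) * ((∑ l, E t l) ^ 2)
        - ((∑ k, w k * (d k * E t k)) * (∑ l, E t l)
          - (∑ k, w k * E t k) * (∑ l, d l * E t l))
          * (2 * (∑ l, E t l) * (∑ l, d l * E t l)))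
        = (∑ l, E t l) * (((∑ k, w k * (d k * (d k * E t k))) * (∑ k, E t k)
            - (∑ k, w k * E t k) * (∑ k, d k * (d k * E t k))) * (∑ k, E t k)
          - 2 * (∑ k, d k * E t k) * ((∑ k, w k * (d k * E t k)) * (∑ k, E t k)
            - (∑ k, w k * E t k) * (∑ k, d k * E t k))) := by ring
      have h2 : 2 * c * (∑ k, d k ^ 2) * ((∑ l, E t l) ^ 2) ^ 2
          = (∑ l, E t l) * (2 * c * (∑ k, d k ^ 2) * (∑ k, E t k) ^ 3) := by ring
      rw [h1, h2]
      exact mul_lt_mul_of_pos_left hkey hDp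
    linarith

theorem stmt2 (n m : ℕ) (hn : 2 ≤ n) (hm : 2 ≤ m)
    (c : ℝ) (hc : 0 < c)
    (v : Fin n → Fin m → ℝ) (hv : ∀ i k, 0 ≤ v i k)
    (i : Fin n) (hci : (1 / 2) * (⨆ k, v i k) ≤ c)
    (a : Fin n → Fin m → ℝ) :
    StrictConcaveOn ℝ Set.univ
      (fun b : Fin m → ℝ => qtmUtil c v (Function.update a i b) i) := by
  have hne : Nonempty (Fin m) := ⟨⟨0, by omega⟩⟩
  have hwc : ∀ k, v i k ≤ 2 * c := by
    intro k
    have hbdd : BddAbove (Set.range (v i)) := Set.Finite.bddAbove (Set.finite_range _)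
    have h1 : v i k ≤ ⨆ k, v i k := le_ciSup hbdd k
    linarith
  set R : Fin m → ℝ := fun k => ∑ j ∈ Finset.univ.erase i, a j k with hR
  set C : ℝ := (c / ((n : ℝ) - 1)) * ∑ j ∈ Finset.univ.erase i, ∑ k, (a j k) ^ 2 with hC
  have hf : ∀ b : Fin m → ℝ, qtmUtil c v (Function.update a i b) i
      = (∑ k, v i k * Real.exp (b k + R k)) / (∑ l, Real.exp (b l + R l))
        - c * ∑ k, (b k) ^ 2 + C := by
    intro b
    rw [qtmUtil]
    have h1 : ∀ k, (∑ j, Function.update a i b j k) = b k + R k := by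
      intro k
      rw [← Finset.add_sum_erase _ _ (Finset.mem_univ i)]
      congr 1
      · rw [Function.update_self]
      · exact Finset.sum_congr rfl fun j hj => by
          rw [Function.update_of_ne (Finset.ne_of_mem_erase hj)]
    have h2 : Function.update a i b i = b := Function.update_self i b a
    have h3 : ∑ j ∈ Finset.univ.erase i, ∑ k, (Function.update a i b j k) ^ 2
        = ∑ j ∈ Finset.univ.erase i, ∑ k, (a j k) ^ 2 :=
      Finset.sum_congr rfl fun j hj => by
        rw [Function.update_of_ne (Finset.ne_of_mem_erase hj)]
    rw [h2, h3, ← hC]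
    congr 1
    congr 1
    have h4 : ∀ k : Fin m, softmax (fun k => ∑ j, Function.update a i b j k) k * v i k
        = v i k * Real.exp (b k + R k) / (∑ l, Real.exp (b l + R l)) := by
      intro k
      rw [softmax]
      simp only [h1]
      ring
    rw [Finset.sum_congr rfl fun k _ => h4 k, ← Finset.sum_div]
  constructor
  · exact convex_univ
  intro x hx y hy hxy p q hp hq hpq
  set d : Fin m → ℝ := fun k => y k - x k with hdd
  have hd : d ≠ 0 := by
    intro h
    apply hxy
    funext k
    have := congrFun h k
    simp only [hdd, Pi.zero_apply] at this
    linarith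
  set sk : Fin m → ℝ := fun k => x k + R k with hsk
  have hgc := qtm_line_concave hm c hc (v i) (hv i) hwc sk x d hd C
  have hgf : ∀ t : ℝ, ((∑ k, v i k * Real.exp (sk k + t * d k)) / (∑ l, Real.exp (sk l + t * d l))
        - c * ∑ k, (x k + t * d k) ^ 2 + C)
      = qtmUtil c v (Function.update a i (fun k => x k + t * d k)) i := by
    intro t
    rw [hf]
    have h5 : ∀ k : Fin m, sk k + t * d k = (fun k => x k + t * d k) k + R k := by
      intro k; simp only [hsk]; ring
    simp only [h5]
  have key := hgc.2 (Set.mem_univ (0:ℝ)) (Set.mem_univ (1:ℝ)) (by norm_num) hp hq hpq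
  simp only [smul_eq_mul, mul_zero, mul_one, zero_add] at key
  rw [hgf 0, hgf 1, hgf q] at key
  have e0 : (fun k => x k + (0:ℝ) * d k) = x := by funext k; ring
  have e1 : (fun k => x k + (1:ℝ) * d k) = y := by funext k; simp [hdd]
  have eq : (fun k => x k + q * d k) = p • x + q • y := by
    funext k
    simp only [Pi.add_apply, Pi.smul_apply, smul_eq_mul, hdd]
    have : p = 1 - q := by linarith
    rw [this]; ring
  rw [e0, e1, eq] at key
  simpa only [smul_eq_mul] using key
end

section
/- If c ≥ (1/2)·max_{i,k} v_k^i, then the QTM admits a pure-strategy Nash equilibrium. -/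
open Real Finset

set_option maxHeartbeats 1000000

section Aux

set_option linter.unusedSectionVars false
set_option linter.unusedVariables false

variable {m : ℕ} [NeZero m]

lemma hasDerivAt_NN (B0 x g : Fin m → ℝ) (t : ℝ) :
    HasDerivAt (fun t : ℝ => ∑ k, g k * Real.exp (B0 k + t * x k))
      (∑ k, (g k * x k) * Real.exp (B0 k + t * x k)) t := by
  apply HasDerivAt.fun_sum
  intro k _
  have h1 : HasDerivAt (fun t : ℝ => B0 k + t * x k) (x k) t := by
    simpa using ((hasDerivAt_id t).mul_const (x k)).const_add (B0 k)
  have h2 := (h1.exp).const_mul (g k)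
  exact h2.congr_deriv (by ring)

lemma hasDerivAt_SS (B0 x : Fin m → ℝ) (t : ℝ) :
    HasDerivAt (fun t : ℝ => ∑ k, Real.exp (B0 k + t * x k))
      (∑ k, x k * Real.exp (B0 k + t * x k)) t := by
  have := hasDerivAt_NN B0 x (fun _ => 1) t
  simpa using this

lemma SS_pos (B0 x : Fin m → ℝ) (t : ℝ) : 0 < ∑ k, Real.exp (B0 k + t * x k) :=
  Finset.sum_pos (fun k _ => Real.exp_pos _) Finset.univ_nonempty

lemma hasDerivAt_Q (aa x : Fin m → ℝ) (t : ℝ) :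
    HasDerivAt (fun t : ℝ => ∑ k, (aa k + t * x k)^2)
      (∑ k, 2*(aa k + t * x k)*x k) t := by
  apply HasDerivAt.fun_sum
  intro k _
  have h1 : HasDerivAt (fun t : ℝ => aa k + t * x k) (x k) t := by
    simpa using ((hasDerivAt_id t).mul_const (x k)).const_add (aa k)
  have h2 := h1.pow 2
  exact h2.congr_deriv (by norm_num)

lemma hasDerivAt_G (B0 x w aa : Fin m → ℝ) (c : ℝ) (t : ℝ) :
    HasDerivAt (fun t : ℝ =>
        (∑ k, w k * Real.exp (B0 k + t * x k)) / (∑ k, Real.exp (B0 k + t * x k))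
          - c * ∑ k, (aa k + t * x k)^2)
      (((∑ k, (w k * x k) * Real.exp (B0 k + t * x k)) * (∑ k, Real.exp (B0 k + t * x k))
          - (∑ k, w k * Real.exp (B0 k + t * x k)) * (∑ k, x k * Real.exp (B0 k + t * x k)))
          / (∑ k, Real.exp (B0 k + t * x k))^2
        - c * ∑ k, 2*(aa k + t * x k)*x k) t := by
  exact ((hasDerivAt_NN B0 x w t).div (hasDerivAt_SS B0 x t) (SS_pos B0 x t).ne')
    |>.sub ((hasDerivAt_Q aa x t).const_mul c)

lemma hasDerivAt_Q1 (aa x : Fin m → ℝ) (t : ℝ) :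
    HasDerivAt (fun t : ℝ => ∑ k, 2*(aa k + t * x k)*x k)
      (∑ k, 2*(x k * x k)) t := by
  apply HasDerivAt.fun_sum
  intro k _
  have h1 : HasDerivAt (fun t : ℝ => aa k + t * x k) (x k) t := by
    simpa using ((hasDerivAt_id t).mul_const (x k)).const_add (aa k)
  have h2 := (h1.mul_const (x k)).const_mul 2
  have h2' : (fun y:ℝ => 2*((aa k + y*x k)*x k)) = (fun y:ℝ => 2*(aa k + y*x k)*x k) := by
    funext y; ring
  rw [h2'] at h2
  exact h2

lemma hasDerivAt_G1 (B0 x w aa : Fin m → ℝ) (c : ℝ) (t : ℝ) :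
    HasDerivAt (fun t : ℝ =>
      ((∑ k, (w k * x k) * Real.exp (B0 k + t * x k)) * (∑ k, Real.exp (B0 k + t * x k))
          - (∑ k, w k * Real.exp (B0 k + t * x k)) * (∑ k, x k * Real.exp (B0 k + t * x k)))
          / (∑ k, Real.exp (B0 k + t * x k))^2
        - c * ∑ k, 2*(aa k + t * x k)*x k)
      ((((∑ k, (w k * x k * x k) * Real.exp (B0 k + t * x k)) * (∑ k, Real.exp (B0 k + t * x k))
          + (∑ k, (w k * x k) * Real.exp (B0 k + t * x k)) * (∑ k, x k * Real.exp (B0 k + t * x k))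
          - ((∑ k, (w k * x k) * Real.exp (B0 k + t * x k)) * (∑ k, x k * Real.exp (B0 k + t * x k))
             + (∑ k, w k * Real.exp (B0 k + t * x k)) * (∑ k, (x k * x k) * Real.exp (B0 k + t * x k))))
          * ((∑ k, Real.exp (B0 k + t * x k))^2)
        - ((∑ k, (w k * x k) * Real.exp (B0 k + t * x k)) * (∑ k, Real.exp (B0 k + t * x k))
            - (∑ k, w k * Real.exp (B0 k + t * x k)) * (∑ k, x k * Real.exp (B0 k + t * x k)))
          * ((2:ℕ) * (∑ k, Real.exp (B0 k + t * x k))^1 * (∑ k, x k * Real.exp (B0 k + t * x k))))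
        / ((∑ k, Real.exp (B0 k + t * x k))^2)^2
      - c * ∑ k, 2*(x k * x k)) t := by
  have hwx : HasDerivAt (fun t : ℝ => ∑ k, (w k * x k) * Real.exp (B0 k + t * x k))
      (∑ k, (w k * x k * x k) * Real.exp (B0 k + t * x k)) t := by
    have := hasDerivAt_NN B0 x (fun k => w k * x k) t
    exact this
  have hw := hasDerivAt_NN B0 x w t
  have hxx : HasDerivAt (fun t : ℝ => ∑ k, x k * Real.exp (B0 k + t * x k))
      (∑ k, (x k * x k) * Real.exp (B0 k + t * x k)) t := by
    have := hasDerivAt_NN B0 x x t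
    exact this
  have hS := hasDerivAt_SS B0 x t
  have hP := (hwx.mul hS).sub (hw.mul hxx)
  have hden := hS.pow 2
  have hq := hP.div hden (pow_ne_zero 2 (SS_pos B0 x t).ne')
  exact hq.sub ((hasDerivAt_Q1 aa x t).const_mul c)

lemma F2_le_gen (e x w : Fin m → ℝ) (hepos : ∀ k, 0 < e k) (c : ℝ) (hc : 0 < c)
    (hw0 : ∀ k, 0 ≤ w k) (hwM : ∀ k, w k ≤ 2*c) :
    (((∑ k, (w k*x k*x k)*e k) * (∑ k, e k) + (∑ k, (w k*x k)*e k)*(∑ k, x k*e k)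
      - ((∑ k, (w k*x k)*e k)*(∑ k, x k*e k) + (∑ k, w k*e k)*(∑ k, (x k*x k)*e k))) * ((∑ k, e k)^2)
     - ((∑ k, (w k*x k)*e k)*(∑ k, e k) - (∑ k, w k*e k)*(∑ k, x k*e k)) * ((2:ℕ)*(∑ k, e k)^1*(∑ k, x k*e k)))
     / ((∑ k, e k)^2)^2 ≤ 2*c*∑ k, (x k)^2 := by
  have hs : (0:ℝ) < ∑ k, e k := Finset.sum_pos (fun k _ => hepos k) Finset.univ_nonempty
  set s := ∑ k, e k with hsdef
  set nw := ∑ k, w k * e k with hnw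
  set nx := ∑ k, x k * e k with hnx
  set nwx := ∑ k, (w k * x k) * e k with hnwx
  set nxx := ∑ k, (x k * x k) * e k with hnxx
  set nwxx := ∑ k, (w k * x k * x k) * e k with hnwxx
  have hnw0 : 0 ≤ nw := Finset.sum_nonneg fun k _ => mul_nonneg (hw0 k) (hepos k).le
  have hexp : ∑ k, e k * ((w k - nw/s)*(x k - nx/s)^2)
      = nwxx - 2*(nx/s)*nwx + (nx/s)^2*nw - (nw/s)*nxx + 2*((nw/s)*(nx/s))*nx - (nw/s)*(nx/s)^2*s := by
    rw [hnwxx, hnwx, hnw, hnxx, hnx, hsdef]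
    simp only [Finset.mul_sum, ← Finset.sum_add_distrib, ← Finset.sum_sub_distrib]
    exact Finset.sum_congr rfl fun k _ => by ring
  have key : ((nwxx*s + nwx*nx - (nwx*nx + nw*nxx)) * (s^2)
      - (nwx*s - nw*nx) * ((2:ℕ)*s^1*nx)) / (s^2)^2
      = (∑ k, e k * ((w k - nw/s)*(x k - nx/s)^2))/s := by
    rw [hexp]
    field_simp
    ring
  rw [key, div_le_iff₀ hs]
  have step1 : ∑ k, e k * ((w k - nw/s)*(x k - nx/s)^2)
      ≤ ∑ k, e k * ((2*c)*(x k - nx/s)^2) := by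
    apply Finset.sum_le_sum; intro k _
    apply mul_le_mul_of_nonneg_left _ (hepos k).le
    apply mul_le_mul_of_nonneg_right _ (sq_nonneg _)
    have h0 : 0 ≤ nw/s := div_nonneg hnw0 hs.le
    linarith [hwM k]
  have step2 : ∑ k, e k * ((2*c)*(x k - nx/s)^2)
      = 2*c*(nxx - 2*(nx/s)*nx + (nx/s)^2*s) := by
    rw [hnxx, hnx, hsdef]
    simp only [Finset.mul_sum, ← Finset.sum_add_distrib, ← Finset.sum_sub_distrib]
    exact Finset.sum_congr rfl fun k _ => by ring
  have step3 : nxx - 2*(nx/s)*nx + (nx/s)^2*s = nxx - nx^2/s := by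
    field_simp
    ring
  have step4 : nxx ≤ (∑ k, (x k)^2)*s := by
    rw [hnxx, hsdef, Finset.sum_mul]
    apply Finset.sum_le_sum; intro k _
    have hek : e k ≤ ∑ l, e l := Finset.single_le_sum (fun l _ => (hepos l).le) (mem_univ k)
    nlinarith [sq_nonneg (x k), (hepos k).le]
  have h5 : 0 ≤ nx^2/s := div_nonneg (sq_nonneg _) hs.le
  calc ∑ k, e k * ((w k - nw/s)*(x k - nx/s)^2)
      ≤ ∑ k, e k * ((2*c)*(x k - nx/s)^2) := step1
    _ = 2*c*(nxx - nx^2/s) := by rw [step2, step3]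
    _ ≤ 2*c*nxx := by nlinarith
    _ ≤ 2*c*((∑ k, (x k)^2)*s) := by nlinarith
    _ = 2*c*(∑ k, (x k)^2)*s := by ring

lemma slice_main (B0 x w aa : Fin m → ℝ) (c : ℝ) (hc : 0 < c)
    (hw0 : ∀ k, 0 ≤ w k) (hwM : ∀ k, w k ≤ 2*c)
    (hfoc : ∀ k, 2*c*aa k * (∑ l, Real.exp (B0 l))^2
      = Real.exp (B0 k) * (w k * (∑ l, Real.exp (B0 l)) - ∑ l, w l * Real.exp (B0 l))) :
    (∑ k, w k * Real.exp (B0 k + x k)) / (∑ k, Real.exp (B0 k + x k)) - c * ∑ k, (aa k + x k)^2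
      ≤ (∑ k, w k * Real.exp (B0 k)) / (∑ k, Real.exp (B0 k)) - c * ∑ k, (aa k)^2 := by
  set G : ℝ → ℝ := fun t =>
    (∑ k, w k * Real.exp (B0 k + t * x k)) / (∑ k, Real.exp (B0 k + t * x k))
      - c * ∑ k, (aa k + t * x k)^2 with hGdef
  set G1 : ℝ → ℝ := fun t =>
    ((∑ k, (w k * x k) * Real.exp (B0 k + t * x k)) * (∑ k, Real.exp (B0 k + t * x k))
        - (∑ k, w k * Real.exp (B0 k + t * x k)) * (∑ k, x k * Real.exp (B0 k + t * x k)))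
        / (∑ k, Real.exp (B0 k + t * x k))^2
      - c * ∑ k, 2*(aa k + t * x k)*x k with hG1def
  have hG : ∀ t, HasDerivAt G (G1 t) t := fun t => hasDerivAt_G B0 x w aa c t
  have hG1 : ∀ t, deriv G1 t ≤ 0 := by
    intro t
    rw [(hasDerivAt_G1 B0 x w aa c t).deriv]
    have hb := F2_le_gen (fun k => Real.exp (B0 k + t * x k)) x w
      (fun k => Real.exp_pos _) c hc hw0 hwM
    have hq : c * ∑ k, 2*(x k * x k) = 2*c*∑ k, (x k)^2 := by
      rw [Finset.mul_sum, Finset.mul_sum]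
      exact Finset.sum_congr rfl fun k _ => by ring
    have := hb
    linarith [hb, hq.le, hq.ge]
  -- G1 is antitone
  have hG1anti : Antitone G1 :=
    antitone_of_deriv_nonpos
      (fun t => (hasDerivAt_G1 B0 x w aa c t).differentiableAt) hG1
  -- G1 0 = 0
  have hzero : ∀ k : Fin m, Real.exp (B0 k + 0 * x k) = Real.exp (B0 k) := by
    intro k; norm_num
  have hG10 : G1 0 = 0 := by
    have hs : (0:ℝ) < ∑ l, Real.exp (B0 l) :=
      Finset.sum_pos (fun l _ => Real.exp_pos _) Finset.univ_nonempty
    have h1 : (c * ∑ k, 2*(aa k + 0 * x k)*x k) * (∑ l, Real.exp (B0 l))^2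
        = ∑ k, Real.exp (B0 k) * (w k * (∑ l, Real.exp (B0 l)) - ∑ l, w l * Real.exp (B0 l)) * x k := by
      rw [Finset.mul_sum, Finset.sum_mul]
      refine Finset.sum_congr rfl fun k _ => ?_
      linear_combination x k * hfoc k
    have h2 : (∑ k, (w k * x k) * Real.exp (B0 k)) * (∑ l, Real.exp (B0 l))
        - (∑ k, w k * Real.exp (B0 k)) * (∑ k, x k * Real.exp (B0 k))
        = ∑ k, Real.exp (B0 k) * (w k * (∑ l, Real.exp (B0 l)) - ∑ l, w l * Real.exp (B0 l)) * x k := by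
      rw [Finset.sum_mul, Finset.mul_sum, ← Finset.sum_sub_distrib]
      refine Finset.sum_congr rfl fun k _ => ?_
      ring
    have hQ : c * ∑ k, 2*(aa k + 0 * x k)*x k
        = (∑ k, Real.exp (B0 k) * (w k * (∑ l, Real.exp (B0 l)) - ∑ l, w l * Real.exp (B0 l)) * x k)
          / (∑ l, Real.exp (B0 l))^2 := by
      rw [eq_div_iff (pow_ne_zero 2 hs.ne')]
      exact h1
    rw [hG1def]
    simp only [hzero]
    rw [h2, hQ, sub_self]
  have hG1le : ∀ t : ℝ, 0 ≤ t → G1 t ≤ 0 := fun t ht => hG10 ▸ hG1anti ht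
  have hGanti : AntitoneOn G (Set.Icc 0 1) := by
    refine antitoneOn_of_deriv_nonpos (convex_Icc 0 1)
      (fun t _ => (hG t).differentiableAt.continuousAt.continuousWithinAt)
      (fun t _ => (hG t).differentiableAt.differentiableWithinAt) (fun t ht => ?_)
    rw [interior_Icc] at ht
    rw [(hG t).deriv]
    exact hG1le t ht.1.le
  have hfin := hGanti (Set.mem_Icc.mpr ⟨le_refl 0, zero_le_one⟩)
    (Set.mem_Icc.mpr ⟨zero_le_one, le_refl 1⟩) zero_le_one
  have e1 : G 1 = (∑ k, w k * Real.exp (B0 k + x k)) / (∑ k, Real.exp (B0 k + x k))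
      - c * ∑ k, (aa k + x k)^2 := by
    rw [hGdef]; norm_num
  have e0 : G 0 = (∑ k, w k * Real.exp (B0 k)) / (∑ k, Real.exp (B0 k))
      - c * ∑ k, (aa k)^2 := by
    rw [hGdef]; norm_num
  rw [e1, e0] at hfin
  exact hfin

end Aux

set_option linter.unusedVariables false in
theorem stmt3 (n m : ℕ) (hn : 2 ≤ n) (hm : 2 ≤ m)
    (c : ℝ) (hc : 0 < c)
    (v : Fin n → Fin m → ℝ) (hv : ∀ i k, 0 ≤ v i k)
    (hcbig : (1 / 2) * (⨆ i, ⨆ k, v i k) ≤ c) :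
    ∃ a : Fin n → Fin m → ℝ, IsNashQTM c v a := by
  haveI : NeZero m := ⟨by omega⟩
  haveI : NeZero n := ⟨by omega⟩
  -- bound on values
  have hvM : ∀ i k, v i k ≤ 2*c := by
    intro i k
    have h1 : v i k ≤ ⨆ k, v i k :=
      le_ciSup (Set.Finite.bddAbove (Set.finite_range _)) k
    have h2 : (⨆ k, v i k) ≤ ⨆ i, ⨆ k, v i k :=
      le_ciSup (f := fun i => ⨆ k, v i k) (Set.Finite.bddAbove (Set.finite_range _)) i
    linarith
  set V : Fin m → ℝ := fun k => ∑ i, v i k with hV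
  have hV0 : ∀ k, 0 ≤ V k := fun k => Finset.sum_nonneg fun i _ => hv i k
  have hSpos : ∀ A : Fin m → ℝ, 0 < ∑ k, Real.exp (A k) :=
    fun A => Finset.sum_pos (fun k _ => Real.exp_pos _) Finset.univ_nonempty
  set Phi : (Fin m → ℝ) → ℝ := fun A =>
    (∑ k, V k * Real.exp (A k)) / (∑ k, Real.exp (A k)) - c * ∑ k, (A k)^2 with hPhi
  -- continuity
  have hcont : Continuous Phi := by
    apply Continuous.sub
    · apply Continuous.div
      · exact continuous_finset_sum _ fun k _ =>
          continuous_const.mul (Real.continuous_exp.comp (continuous_apply k))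
      · exact continuous_finset_sum _ fun k _ =>
          Real.continuous_exp.comp (continuous_apply k)
      · exact fun A => (hSpos A).ne'
    · exact continuous_const.mul
        (continuous_finset_sum _ fun k _ => (continuous_apply k).pow 2)
  -- bounds
  set W : ℝ := ∑ k, V k with hWdef
  have hW0 : 0 ≤ W := Finset.sum_nonneg fun k _ => hV0 k
  have hupper : ∀ A : Fin m → ℝ, (∑ k, V k * Real.exp (A k)) / (∑ k, Real.exp (A k)) ≤ W := by
    intro A
    rw [div_le_iff₀ (hSpos A)]
    calc ∑ k, V k * Real.exp (A k)
        ≤ ∑ k, V k * (∑ l, Real.exp (A l)) := by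
          apply Finset.sum_le_sum; intro k _
          exact mul_le_mul_of_nonneg_left
            (Finset.single_le_sum (fun l _ => (Real.exp_pos (A l)).le) (mem_univ k)) (hV0 k)
      _ = W * ∑ l, Real.exp (A l) := by rw [← Finset.sum_mul]
  have hPhi0 : 0 ≤ Phi 0 := by
    rw [hPhi]
    simp only [Pi.zero_apply]
    have h1 : 0 ≤ (∑ k, V k * Real.exp (0:ℝ)) / (∑ k : Fin m, Real.exp (0:ℝ)) :=
      div_nonneg (Finset.sum_nonneg fun k _ => mul_nonneg (hV0 k) (Real.exp_pos _).le)
        (hSpos 0).le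
    simpa using h1
  set R : ℝ := Real.sqrt (W/c) + 1 with hRdef
  have hsq : Real.sqrt (W/c)^2 = W/c := Real.sq_sqrt (div_nonneg hW0 hc.le)
  have hsnn := Real.sqrt_nonneg (W/c)
  have hRpos : 0 < R := by positivity
  have hR2 : W ≤ c * R^2 := by
    have : W/c ≤ R^2 := by nlinarith
    calc W = c * (W/c) := by field_simp
      _ ≤ c * R^2 := by nlinarith
  -- maximizer
  obtain ⟨Astar, hAK, hmax⟩ := (isCompact_closedBall (0 : Fin m → ℝ) R).exists_isMaxOn
    ⟨0, Metric.mem_closedBall_self hRpos.le⟩ hcont.continuousOn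
  have hglobal : ∀ A, Phi A ≤ Phi Astar := by
    intro A
    by_cases hA : A ∈ Metric.closedBall (0 : Fin m → ℝ) R
    · exact hmax hA
    · have hnorm : R < ‖A‖ := by
        simp only [Metric.mem_closedBall, dist_zero_right, not_le] at hA
        exact hA
      obtain ⟨k0, hk0⟩ : ∃ k, R < |A k| := by
        by_contra hcon
        push_neg at hcon
        have : ‖A‖ ≤ R := by
          rw [pi_norm_le_iff_of_nonneg hRpos.le]
          intro k; rw [Real.norm_eq_abs]; exact hcon k
        linarith
      have h2 : R^2 < ∑ k, (A k)^2 := by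
        have h3 : R^2 < (A k0)^2 := by
          nlinarith [sq_abs (A k0), abs_nonneg (A k0)]
        have h4 : (A k0)^2 ≤ ∑ k, (A k)^2 :=
          Finset.single_le_sum (fun k _ => sq_nonneg (A k)) (mem_univ k0)
        linarith
      have hlt : Phi A ≤ 0 := by
        rw [hPhi]
        have := hupper A
        have hcc : c * R^2 ≤ c * ∑ k, (A k)^2 := by nlinarith
        simp only
        linarith
      have h0K : Phi 0 ≤ Phi Astar := hmax (Metric.mem_closedBall_self hRpos.le)
      linarith
  -- first-order conditions for the aggregate
  set S : ℝ := ∑ l, Real.exp (Astar l) with hSdef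
  have hS : 0 < S := hSpos Astar
  have hfocA : ∀ k, 2*c*Astar k * S^2
      = Real.exp (Astar k) * (V k * S - ∑ l, V l * Real.exp (Astar l)) := by
    intro k
    set x : Fin m → ℝ := fun l => if l = k then 1 else 0 with hx
    have hGd := hasDerivAt_G Astar x V Astar c 0
    have hloc : IsLocalMax (fun t : ℝ =>
        (∑ l, V l * Real.exp (Astar l + t * x l)) / (∑ l, Real.exp (Astar l + t * x l))
          - c * ∑ l, (Astar l + t * x l)^2) 0 := by
      apply Filter.Eventually.of_forall
      intro t
      have h1 : (∑ l, V l * Real.exp (Astar l + t * x l)) / (∑ l, Real.exp (Astar l + t * x l))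
          - c * ∑ l, (Astar l + t * x l)^2 = Phi (fun l => Astar l + t * x l) := by
        rw [hPhi]
      have h2 : (∑ l, V l * Real.exp (Astar l + 0 * x l)) / (∑ l, Real.exp (Astar l + 0 * x l))
          - c * ∑ l, (Astar l + 0 * x l)^2 = Phi Astar := by
        rw [hPhi]; norm_num
      dsimp only
      rw [h1, h2]
      exact hglobal _
    have hder0 := hloc.deriv_eq_zero
    rw [hGd.deriv] at hder0
    simp only [zero_mul, add_zero] at hder0
    -- simplify the indicator sums
    have e1 : ∑ l, (V l * x l) * Real.exp (Astar l) = V k * Real.exp (Astar k) := by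
      rw [hx]
      simp [mul_ite, ite_mul, Finset.sum_ite_eq']
    have e2 : ∑ l, x l * Real.exp (Astar l) = Real.exp (Astar k) := by
      rw [hx]
      simp [ite_mul, Finset.sum_ite_eq']
    have e3 : ∑ l, 2*(Astar l)*x l = 2*Astar k := by
      rw [hx]
      simp [mul_ite, Finset.sum_ite_eq']
    rw [e1, e2, e3] at hder0
    have hS2 : (S:ℝ)^2 ≠ 0 := pow_ne_zero 2 hS.ne'
    have := sub_eq_zero.mp hder0
    field_simp at this
    rw [hSdef]
    linear_combination -this
  -- the equilibrium profile
  set a : Fin n → Fin m → ℝ := fun i k =>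
    Real.exp (Astar k) * (v i k * S - ∑ l, v i l * Real.exp (Astar l)) / (2*c*S^2) with ha
  have hfoci : ∀ i k, 2*c*(a i k) * S^2
      = Real.exp (Astar k) * (v i k * S - ∑ l, v i l * Real.exp (Astar l)) := by
    intro i k
    rw [ha]
    field_simp
  have h3 : ∑ i, ∑ l, v i l * Real.exp (Astar l) = ∑ l, V l * Real.exp (Astar l) := by
    rw [Finset.sum_comm]
    refine Finset.sum_congr rfl fun l _ => ?_
    simp only [hV]
    rw [← Finset.sum_mul]
  have hsum : ∀ k, ∑ i, a i k = Astar k := by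
    intro k
    have h1 : ∑ i, a i k
        = Real.exp (Astar k) * (V k * S - ∑ l, V l * Real.exp (Astar l)) / (2*c*S^2) := by
      rw [ha]
      rw [← Finset.sum_div]
      congr 1
      have h2 : ∑ i, Real.exp (Astar k) * (v i k * S - ∑ l, v i l * Real.exp (Astar l))
          = Real.exp (Astar k) * ((∑ i, v i k) * S - ∑ i, ∑ l, v i l * Real.exp (Astar l)) := by
        rw [← Finset.mul_sum]
        congr 1
        rw [Finset.sum_sub_distrib, ← Finset.sum_mul]
      rw [h2, h3]
    have h4 := hfocA k
    rw [h1, ← h4]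
    field_simp
  refine ⟨a, ?_⟩
  intro i b
  have hAgg : (fun k => ∑ j, a j k) = Astar := funext hsum
  have hAggUpd : (fun k => ∑ j, (Function.update a i b) j k)
      = (fun k => Astar k + (b k - a i k)) := by
    funext k
    have h1 : ∀ j, (Function.update a i b) j k = Function.update (fun j => a j k) i (b k) j := by
      intro j
      rcases eq_or_ne j i with h | h
      · subst h; simp
      · rw [Function.update_of_ne h, Function.update_of_ne h]
    rw [Finset.sum_congr rfl fun j _ => h1 j]
    rw [Finset.sum_update_of_mem (Finset.mem_univ i)]
    rw [Finset.sdiff_singleton_eq_erase]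
    have h2 : a i k + ∑ j ∈ univ.erase i, a j k = ∑ j, a j k :=
      Finset.add_sum_erase univ (fun j => a j k) (Finset.mem_univ i)
    have h5 := hsum k
    linarith
  have hT : ∑ j ∈ Finset.univ.erase i, ∑ k, ((Function.update a i b) j k)^2
      = ∑ j ∈ Finset.univ.erase i, ∑ k, (a j k)^2 := by
    refine Finset.sum_congr rfl fun j hj => ?_
    rw [Function.update_of_ne (Finset.ne_of_mem_erase hj)]
  have hsoft : ∀ (A : Fin m → ℝ) (wv : Fin m → ℝ),
      ∑ k, softmax A k * wv k = (∑ k, wv k * Real.exp (A k)) / (∑ k, Real.exp (A k)) := by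
    intro A wv
    simp only [softmax, div_mul_eq_mul_div]
    rw [← Finset.sum_div]
    congr 1
    exact Finset.sum_congr rfl fun k _ => mul_comm _ _
  have hfoc' : ∀ k, 2*c*((fun k => a i k) k) * (∑ l, Real.exp (Astar l))^2
      = Real.exp (Astar k) * (v i k * (∑ l, Real.exp (Astar l)) - ∑ l, v i l * Real.exp (Astar l)) := by
    intro k
    rw [← hSdef]
    exact hfoci i k
  have hs := slice_main Astar (fun k => b k - a i k) (v i) (fun k => a i k) c hc
    (hv i) (hvM i) hfoc'
  have hb2 : ∑ k, (a i k + (b k - a i k))^2 = ∑ k, (b k)^2 :=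
    Finset.sum_congr rfl fun k _ => by ring
  rw [hb2] at hs
  unfold qtmUtil
  rw [Function.update_self, hT, hAgg, hAggUpd, hsoft, hsoft]
  linarith
end

section
/- First-order conditions: in any pure-strategy Nash equilibrium of the QTM, for every agent i and alternative k, a_k^i = (p_k/(2c))·(v_k^i − Σ_{ℓ=1}^m p_ℓ v_ℓ^i). Consequently, Σ_{k=1}^m a_k^i = 0 for every agent i, and the aggregate vote totals satisfy A_k = (p_k/(2c))·(V_k − Σ_{ℓ=1}^m p_ℓ V_ℓ) for every alternative k. -/
open Real Finset

theorem stmt4 (n m : ℕ) (hn : 2 ≤ n) (hm : 2 ≤ m)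
    (c : ℝ) (hc : 0 < c)
    (v : Fin n → Fin m → ℝ) (hv : ∀ i k, 0 ≤ v i k)
    (a : Fin n → Fin m → ℝ) (ha : IsNashQTM c v a)
    (p : Fin m → ℝ) (hp : p = softmax (fun k => ∑ j, a j k)) :
    (∀ i k, a i k = p k / (2 * c) * (v i k - ∑ l, p l * v i l)) ∧
    (∀ i, ∑ k, a i k = 0) ∧
    (∀ k, (∑ j, a j k)
        = p k / (2 * c) * ((∑ j, v j k) - ∑ l, p l * (∑ j, v j l))) := by
  set A : Fin m → ℝ := fun l => ∑ j, a j l with hAdef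
  set S0 : ℝ := ∑ l, Real.exp (A l) with hS0def
  have hS0 : 0 < S0 :=
    Finset.sum_pos (fun l _ => Real.exp_pos _) ⟨⟨0, by omega⟩, Finset.mem_univ _⟩
  have hpl : ∀ l, p l = Real.exp (A l) / S0 := by
    intro l; rw [hp]; rfl
  have hpsum : ∑ l, p l = 1 := by
    simp only [hpl]
    rw [← Finset.sum_div, ← hS0def, div_self (ne_of_gt hS0)]
  have key : ∀ i k, a i k = p k / (2 * c) * (v i k - ∑ l, p l * v i l) := by
    intro i k
    set d : Fin m → ℝ := fun l => if l = k then 1 else 0 with hddef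
    set f : ℝ → ℝ :=
      fun t => qtmUtil c v (Function.update a i (fun l => a i l + t * d l)) i with hfdef
    have hmax : ∀ t, f t ≤ f 0 := by
      intro t
      have h0 : f 0 = qtmUtil c v a i := by
        have : (fun l => a i l + (0:ℝ) * d l) = a i := by funext l; ring
        rw [hfdef]
        simp only [this, Function.update_eq_self]
      rw [h0]
      exact ha i _
    -- explicit formula for f
    have hsumA : ∀ (t : ℝ) (l : Fin m),
        (∑ j, Function.update a i (fun l' => a i l' + t * d l') j l) = A l + t * d l := by
      intro t l
      have hrw : ∀ j : Fin n, Function.update a i (fun l' => a i l' + t * d l') j l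
          = Function.update (fun j' => a j' l) i (a i l + t * d l) j := by
        intro j
        by_cases hj : j = i
        · subst hj; simp
        · simp [Function.update_of_ne hj]
      rw [Finset.sum_congr rfl (fun j _ => hrw j)]
      rw [Finset.sum_update_of_mem (Finset.mem_univ i), ← Finset.erase_eq]
      have : A l = a i l + ∑ j ∈ Finset.univ.erase i, a j l :=
        (Finset.add_sum_erase _ _ (Finset.mem_univ i)).symm
      rw [this]; ring
    have hf : ∀ t, f t =
        (∑ l, Real.exp (A l + t * d l) * v i l) / (∑ l, Real.exp (A l + t * d l))
          - c * ∑ l, (a i l + t * d l) ^ 2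
          + (c / ((n : ℝ) - 1)) * ∑ j ∈ Finset.univ.erase i, ∑ l, (a j l) ^ 2 := by
      intro t
      rw [hfdef]
      simp only [qtmUtil, softmax]
      congr 1
      congr 1
      · rw [Finset.sum_div]
        refine Finset.sum_congr rfl (fun l _ => ?_)
        rw [div_mul_eq_mul_div]
        congr 2
        · exact congrArg Real.exp (hsumA t l)
        · funext l'; exact congrArg Real.exp (hsumA t l')
      · congr 1
        refine Finset.sum_congr rfl (fun l _ => ?_)
        simp
      · congr 1
        refine Finset.sum_congr rfl (fun j hj => ?_)
        have hji : j ≠ i := Finset.ne_of_mem_erase hj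
        simp [Function.update_of_ne hji]
    -- derivatives
    have hexp : ∀ l : Fin m, HasDerivAt (fun t : ℝ => Real.exp (A l + t * d l))
        (Real.exp (A l) * d l) 0 := by
      intro l
      have h1 : HasDerivAt (fun t : ℝ => A l + t * d l) (d l) 0 :=
        (hasDerivAt_mul_const (d l)).const_add (A l)
      have := h1.exp
      simpa using this
    have hN : HasDerivAt (fun t : ℝ => ∑ l, Real.exp (A l + t * d l) * v i l)
        (Real.exp (A k) * v i k) 0 := by
      have h := HasDerivAt.fun_sum (fun l (_ : l ∈ Finset.univ) => (hexp l).mul_const (v i l))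
      have heq : (∑ l, Real.exp (A l) * d l * v i l) = Real.exp (A k) * v i k := by
        rw [hddef]
        simp only [mul_ite, mul_one, mul_zero, ite_mul, zero_mul]
        rw [Finset.sum_ite_eq']; simp
      rwa [heq] at h
    have hS : HasDerivAt (fun t : ℝ => ∑ l, Real.exp (A l + t * d l)) (Real.exp (A k)) 0 := by
      have h := HasDerivAt.fun_sum (fun l (_ : l ∈ Finset.univ) => hexp l)
      have heq : (∑ l, Real.exp (A l) * d l) = Real.exp (A k) := by
        rw [hddef]
        simp only [mul_ite, mul_one, mul_zero]
        rw [Finset.sum_ite_eq']; simp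
      rwa [heq] at h
    have hS00 : (∑ l, Real.exp (A l + (0:ℝ) * d l)) = S0 := by
      rw [hS0def]; simp
    have hN00 : (∑ l, Real.exp (A l + (0:ℝ) * d l) * v i l) = ∑ l, Real.exp (A l) * v i l := by
      simp
    have hQ : HasDerivAt (fun t : ℝ => ∑ l, (a i l + t * d l) ^ 2) (2 * a i k) 0 := by
      have h : HasDerivAt (fun t : ℝ => ∑ l, (a i l + t * d l) ^ 2)
          (∑ l, 2 * (a i l + (0:ℝ) * d l) ^ (2 - 1) * d l) 0 :=
        HasDerivAt.fun_sum (fun l (_ : l ∈ Finset.univ) =>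
          (((hasDerivAt_mul_const (d l)).const_add (a i l)).fun_pow 2))
      have heq : (∑ l, (2:ℝ) * (a i l + 0 * d l) ^ (2-1) * d l) = 2 * a i k := by
        rw [hddef]
        simp [Finset.sum_ite_eq', mul_ite]
      rwa [heq] at h
    set N0 : ℝ := ∑ l, Real.exp (A l) * v i l with hN0def
    have hdiv : HasDerivAt (fun t : ℝ =>
        (∑ l, Real.exp (A l + t * d l) * v i l) / (∑ l, Real.exp (A l + t * d l)))
        ((Real.exp (A k) * v i k * S0 - N0 * Real.exp (A k)) / S0 ^ 2) 0 := by
      have h := hN.div hS (by rw [hS00]; exact ne_of_gt hS0)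
      rwa [hS00, hN00] at h
    have hfder : HasDerivAt f
        ((Real.exp (A k) * v i k * S0 - N0 * Real.exp (A k)) / S0 ^ 2 - c * (2 * a i k)) 0 := by
      have h := (hdiv.fun_sub ((hQ.const_mul c))).add_const
        ((c / ((n : ℝ) - 1)) * ∑ j ∈ Finset.univ.erase i, ∑ l, (a j l) ^ 2)
      have : f = fun t =>
        (∑ l, Real.exp (A l + t * d l) * v i l) / (∑ l, Real.exp (A l + t * d l))
          - c * ∑ l, (a i l + t * d l) ^ 2
          + (c / ((n : ℝ) - 1)) * ∑ j ∈ Finset.univ.erase i, ∑ l, (a j l) ^ 2 :=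
        funext hf
      rwa [← this] at h
    have hloc : IsLocalMax f 0 := Filter.Eventually.of_forall hmax
    have hzero : (Real.exp (A k) * v i k * S0 - N0 * Real.exp (A k)) / S0 ^ 2
        - c * (2 * a i k) = 0 := hloc.hasDerivAt_eq_zero hfder
    -- convert to target
    have hTsum : ∑ l, p l * v i l = N0 / S0 := by
      simp only [hpl]
      rw [hN0def, Finset.sum_div]
      exact Finset.sum_congr rfl (fun l _ => by ring)
    rw [hpl, hTsum]
    have hS0ne : S0 ≠ 0 := ne_of_gt hS0
    have hcne : c ≠ 0 := ne_of_gt hc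
    field_simp at hzero ⊢
    nlinarith [hzero, sq_nonneg S0]
  refine ⟨key, ?_, ?_⟩
  · intro i
    have : ∑ k, a i k = ∑ k, p k / (2 * c) * (v i k - ∑ l, p l * v i l) :=
      Finset.sum_congr rfl (fun k _ => key i k)
    rw [this]
    have expand : ∀ k : Fin m, p k / (2 * c) * (v i k - ∑ l, p l * v i l)
        = (1 / (2 * c)) * (p k * v i k) - (1 / (2 * c)) * (p k * (∑ l, p l * v i l)) := by
      intro k; ring
    rw [Finset.sum_congr rfl (fun k _ => expand k), Finset.sum_sub_distrib]
    rw [← Finset.mul_sum, ← Finset.mul_sum, ← Finset.sum_mul, hpsum]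
    ring
  · intro k
    have : ∑ j, a j k = ∑ j, p k / (2 * c) * (v j k - ∑ l, p l * v j l) :=
      Finset.sum_congr rfl (fun j _ => key j k)
    rw [this, ← Finset.mul_sum, Finset.sum_sub_distrib]
    congr 1
    congr 1
    rw [Finset.sum_comm]
    rw [Finset.sum_congr rfl (fun l (_ : l ∈ Finset.univ) => (Finset.mul_sum _ _ _).symm)]
end

section
/- In the two-alternative QTM (m = 2), in any pure-strategy Nash equilibrium: a_1^i = (p_1 p_2/(2c))·(v_1^i − v_2^i) for every agent i, the aggregate totals satisfy A_1 = (p_1 p_2/(2c))·(V_1 − V_2), and A_2 = −A_1. -/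
open Real Finset

lemma foc (c v0 v1 s E t₀ : ℝ) (hE : 0 < E)
    (hmax : ∀ t, (Real.exp (t + s) * v0 + E * v1) / (Real.exp (t + s) + E) - c * t ^ 2
      ≤ (Real.exp (t₀ + s) * v0 + E * v1) / (Real.exp (t₀ + s) + E) - c * t₀ ^ 2) :
    2 * c * t₀ = Real.exp (t₀ + s) * E * (v0 - v1) / (Real.exp (t₀ + s) + E) ^ 2 := by
  have hD : ∀ t : ℝ, 0 < Real.exp (t + s) + E := fun t => by positivity
  have hexp : HasDerivAt (fun t : ℝ => Real.exp (t + s)) (Real.exp (t₀ + s)) t₀ := by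
    simpa [Function.comp_def] using (Real.hasDerivAt_exp (t₀ + s)).comp t₀ ((hasDerivAt_id t₀).add_const s)
  have hN : HasDerivAt (fun t : ℝ => Real.exp (t + s) * v0 + E * v1)
      (Real.exp (t₀ + s) * v0) t₀ := (hexp.mul_const v0).add_const (E * v1)
  have hDen : HasDerivAt (fun t : ℝ => Real.exp (t + s) + E) (Real.exp (t₀ + s)) t₀ :=
    hexp.add_const E
  have hq := hN.div hDen (ne_of_gt (hD t₀))
  have hsq : HasDerivAt (fun t : ℝ => c * t ^ 2) (c * (2 * t₀)) t₀ := by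
    simpa using (hasDerivAt_pow 2 t₀).const_mul c
  have hG := hq.sub hsq
  have hloc : IsLocalMax (fun t => (Real.exp (t + s) * v0 + E * v1) / (Real.exp (t + s) + E)
      - c * t ^ 2) t₀ := Filter.Eventually.of_forall hmax
  have h0 := hloc.hasDerivAt_eq_zero hG
  have hDne : Real.exp (t₀ + s) + E ≠ 0 := ne_of_gt (hD t₀)
  rw [sub_eq_zero] at h0
  field_simp at h0 ⊢
  nlinarith [h0, Real.exp_pos (t₀ + s)]

theorem stmt5 (n : ℕ) (hn : 2 ≤ n)
    (c : ℝ) (hc : 0 < c)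
    (v : Fin n → Fin 2 → ℝ) (hv : ∀ i k, 0 ≤ v i k)
    (a : Fin n → Fin 2 → ℝ) (ha : IsNashQTM c v a)
    (p : Fin 2 → ℝ) (hp : p = softmax (fun k => ∑ j, a j k)) :
    (∀ i, a i 0 = p 0 * p 1 / (2 * c) * (v i 0 - v i 1)) ∧
    (∑ j, a j 0) = p 0 * p 1 / (2 * c) * ((∑ i, v i 0) - (∑ i, v i 1)) ∧
    (∑ j, a j 1) = -(∑ j, a j 0) := by
  -- notation
  set A : Fin 2 → ℝ := fun k => ∑ j, a j k with hA
  have hDpos : 0 < Real.exp (A 0) + Real.exp (A 1) := by positivity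
  have hp0 : p 0 = Real.exp (A 0) / (Real.exp (A 0) + Real.exp (A 1)) := by
    rw [hp]; simp [softmax, Fin.sum_univ_two, hA]
  have hp1 : p 1 = Real.exp (A 1) / (Real.exp (A 0) + Real.exp (A 1)) := by
    rw [hp]; simp [softmax, Fin.sum_univ_two, hA]
  -- core fact for each agent
  have key : ∀ i, a i 0 = p 0 * p 1 / (2 * c) * (v i 0 - v i 1) ∧ a i 1 = -(a i 0) := by
    intro i
    set s : Fin 2 → ℝ := fun k => ∑ j ∈ univ.erase i, a j k with hs
    have hAk : ∀ k, A k = a i k + s k := by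
      intro k
      rw [hA, hs]
      exact (Finset.add_sum_erase univ (fun j => a j k) (mem_univ i)).symm
    -- utility under a deviation
    have hQ : ∀ b : Fin 2 → ℝ, qtmUtil c v (Function.update a i b) i =
        (∑ k, softmax (fun k => b k + s k) k * v i k) - c * ∑ k, (b k) ^ 2
        + (c / ((n : ℝ) - 1)) * ∑ j ∈ univ.erase i, ∑ k, (a j k) ^ 2 := by
      intro b
      have h1 : (fun k : Fin 2 => ∑ j, Function.update a i b j k) = fun k => b k + s k := by
        funext k
        rw [← Finset.add_sum_erase univ _ (mem_univ i), Function.update_self]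
        congr 1
        exact Finset.sum_congr rfl fun j hj => by
          rw [Function.update_of_ne (Finset.ne_of_mem_erase hj)]
      have h2 : ∑ j ∈ univ.erase i, ∑ k, (Function.update a i b j k) ^ 2
          = ∑ j ∈ univ.erase i, ∑ k, (a j k) ^ 2 :=
        Finset.sum_congr rfl fun j hj => by
          rw [Function.update_of_ne (Finset.ne_of_mem_erase hj)]
      unfold qtmUtil
      rw [h1, h2, Function.update_self]
    -- Nash inequality with constants cancelled
    have hNE : ∀ b : Fin 2 → ℝ,
        (∑ k, softmax (fun k => b k + s k) k * v i k) - c * ∑ k, (b k) ^ 2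
        ≤ (∑ k, softmax (fun k => a i k + s k) k * v i k) - c * ∑ k, (a i k) ^ 2 := by
      intro b
      have h := ha i b
      rw [show qtmUtil c v a i = qtmUtil c v (Function.update a i (a i)) i by
        rw [Function.update_eq_self]] at h
      rw [hQ b, hQ (a i)] at h
      linarith
    -- explicit form of the deviation payoff, coordinate 0
    have hF0 : ∀ t : ℝ,
        (∑ k, softmax (fun k => Function.update (a i) 0 t k + s k) k * v i k)
          - c * ∑ k, (Function.update (a i) 0 t k) ^ 2
        = (Real.exp (t + s 0) * v i 0 + Real.exp (a i 1 + s 1) * v i 1)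
            / (Real.exp (t + s 0) + Real.exp (a i 1 + s 1))
          - c * t ^ 2 - c * (a i 1) ^ 2 := by
      intro t
      have hne : Real.exp (t + s 0) + Real.exp (a i 1 + s 1) ≠ 0 := by positivity
      simp only [softmax, Fin.sum_univ_two, Function.update_self,
        Function.update_of_ne (show (1 : Fin 2) ≠ 0 by decide)]
      field_simp
      ring
    have hF1 : ∀ t : ℝ,
        (∑ k, softmax (fun k => Function.update (a i) 1 t k + s k) k * v i k)
          - c * ∑ k, (Function.update (a i) 1 t k) ^ 2
        = (Real.exp (t + s 1) * v i 1 + Real.exp (a i 0 + s 0) * v i 0)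
            / (Real.exp (t + s 1) + Real.exp (a i 0 + s 0))
          - c * t ^ 2 - c * (a i 0) ^ 2 := by
      intro t
      have hne : Real.exp (t + s 1) + Real.exp (a i 0 + s 0) ≠ 0 := by positivity
      simp only [softmax, Fin.sum_univ_two, Function.update_self,
        Function.update_of_ne (show (0 : Fin 2) ≠ 1 by decide)]
      field_simp
      ring
    -- first-order conditions
    have h0 : 2 * c * a i 0 = Real.exp (a i 0 + s 0) * Real.exp (a i 1 + s 1) * (v i 0 - v i 1)
        / (Real.exp (a i 0 + s 0) + Real.exp (a i 1 + s 1)) ^ 2 := by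
      apply foc c (v i 0) (v i 1) (s 0) (Real.exp (a i 1 + s 1)) (a i 0) (Real.exp_pos _)
      intro t
      have h := hNE (Function.update (a i) 0 t)
      rw [hF0 t] at h
      have h' := hF0 (a i 0)
      rw [Function.update_eq_self] at h'
      rw [h'] at h
      linarith
    have h1 : 2 * c * a i 1 = Real.exp (a i 1 + s 1) * Real.exp (a i 0 + s 0) * (v i 1 - v i 0)
        / (Real.exp (a i 1 + s 1) + Real.exp (a i 0 + s 0)) ^ 2 := by
      apply foc c (v i 1) (v i 0) (s 1) (Real.exp (a i 0 + s 0)) (a i 1) (Real.exp_pos _)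
      intro t
      have h := hNE (Function.update (a i) 1 t)
      rw [hF1 t] at h
      have h' := hF1 (a i 1)
      rw [Function.update_eq_self] at h'
      rw [h'] at h
      linarith
    rw [← hAk 0, ← hAk 1] at h0 h1
    constructor
    · rw [hp0, hp1]
      have hcne : (2 : ℝ) * c ≠ 0 := by positivity
      have hDne : Real.exp (A 0) + Real.exp (A 1) ≠ 0 := ne_of_gt hDpos
      field_simp at h0 ⊢
      nlinarith [h0]
    · have : 2 * c * a i 1 = -(2 * c * a i 0) := by
        rw [h0, h1]; field_simp; ring
      nlinarith [this]
  refine ⟨fun i => (key i).1, ?_, ?_⟩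
  · calc (∑ j, a j 0) = ∑ j, p 0 * p 1 / (2 * c) * (v j 0 - v j 1) :=
        Finset.sum_congr rfl fun j _ => (key j).1
      _ = p 0 * p 1 / (2 * c) * ((∑ i, v i 0) - (∑ i, v i 1)) := by
        rw [← Finset.mul_sum, Finset.sum_sub_distrib]
  · calc (∑ j, a j 1) = ∑ j, -(a j 0) :=
        Finset.sum_congr rfl fun j _ => (key j).2
      _ = -(∑ j, a j 0) := by rw [Finset.sum_neg_distrib]
end

section
/- In the two-alternative QTM (m = 2) with V_1 ≥ V_2, in any pure-strategy Nash equilibrium, p_1 ≥ 1/2, with strict inequality p_1 > 1/2 whenever V_1 > V_2. In particular, if V_1 > 0 then the expected welfare satisfies p_1 V_1 + p_2 V_2 > V_1/2. -/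
open Real Finset

private lemma foc_aux (cst E w0 w1 cc K x0 : ℝ) (hE : 0 < E)
    (hmax : ∀ t, Real.exp (cst + t) / (Real.exp (cst + t) + E) * w0 +
        E / (Real.exp (cst + t) + E) * w1 - cc * t ^ 2 + K ≤
        Real.exp (cst + x0) / (Real.exp (cst + x0) + E) * w0 +
        E / (Real.exp (cst + x0) + E) * w1 - cc * x0 ^ 2 + K) :
    Real.exp (cst + x0) * E / (Real.exp (cst + x0) + E) ^ 2 * (w0 - w1) = 2 * cc * x0 := by
  set f : ℝ → ℝ := fun t => Real.exp (cst + t) / (Real.exp (cst + t) + E) * w0 +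
        E / (Real.exp (cst + t) + E) * w1 - cc * t ^ 2 + K with hf
  have hpos : ∀ t : ℝ, 0 < Real.exp (cst + t) + E := fun t => by positivity
  have hexp : HasDerivAt (fun t => Real.exp (cst + t)) (Real.exp (cst + x0)) x0 := by
    simpa using ((hasDerivAt_id x0).const_add cst).exp
  have hden : HasDerivAt (fun t => Real.exp (cst + t) + E) (Real.exp (cst + x0)) x0 :=
    hexp.add_const E
  have h1 := (hexp.div hden (hpos x0).ne').mul_const w0
  have h2 := (((hasDerivAt_const x0 E)).div hden (hpos x0).ne').mul_const w1
  have h3 : HasDerivAt (fun t : ℝ => cc * t ^ 2) (cc * (2 * x0)) x0 := by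
    simpa using (hasDerivAt_pow 2 x0).const_mul cc
  have hD : HasDerivAt f
      (Real.exp (cst + x0) * E / (Real.exp (cst + x0) + E) ^ 2 * (w0 - w1) - 2 * cc * x0) x0 := by
    have hne := (hpos x0).ne'
    have := ((h1.add h2).sub h3).add_const K
    refine HasDerivAt.congr_deriv this ?_
    field_simp
    ring
  have hloc : IsLocalMax f x0 := Filter.Eventually.of_forall hmax
  have hz := hloc.hasDerivAt_eq_zero hD
  linarith

private lemma sum_update_at {n : ℕ} (a : Fin n → Fin 2 → ℝ) (i : Fin n) (b : Fin 2 → ℝ)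
    (k : Fin 2) :
    ∑ j, Function.update a i b j k = (∑ j ∈ Finset.univ.erase i, a j k) + b k := by
  have h : ∀ j, Function.update a i b j k = Function.update (fun j => a j k) i (b k) j := by
    intro j; rcases eq_or_ne j i with h | h <;> simp [h, Function.update]
  rw [Finset.sum_congr rfl fun j _ => h j, Finset.sum_update_of_mem (Finset.mem_univ i),
    Finset.erase_eq, add_comm]

private lemma util_eq {n : ℕ} (c : ℝ) (v a : Fin n → Fin 2 → ℝ) (i : Fin n) (b : Fin 2 → ℝ) :
    qtmUtil c v (Function.update a i b) i =
      Real.exp ((∑ j ∈ Finset.univ.erase i, a j 0) + b 0) /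
        (Real.exp ((∑ j ∈ Finset.univ.erase i, a j 0) + b 0) +
          Real.exp ((∑ j ∈ Finset.univ.erase i, a j 1) + b 1)) * v i 0 +
      Real.exp ((∑ j ∈ Finset.univ.erase i, a j 1) + b 1) /
        (Real.exp ((∑ j ∈ Finset.univ.erase i, a j 0) + b 0) +
          Real.exp ((∑ j ∈ Finset.univ.erase i, a j 1) + b 1)) * v i 1 -
      c * (b 0) ^ 2 - c * (b 1) ^ 2 +
      (c / ((n : ℝ) - 1)) * ∑ j ∈ Finset.univ.erase i, ((a j 0) ^ 2 + (a j 1) ^ 2) := by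
  have herase : ∀ j ∈ Finset.univ.erase i,
      ∑ k, (Function.update a i b j k) ^ 2 = (a j 0) ^ 2 + (a j 1) ^ 2 := by
    intro j hj
    rw [Function.update_of_ne (Finset.ne_of_mem_erase hj)]
    simp [Fin.sum_univ_two]
  unfold qtmUtil softmax
  rw [Finset.sum_congr rfl herase]
  simp only [Fin.sum_univ_two, sum_update_at, Function.update_self]
  ring

theorem stmt6 (n : ℕ) (hn : 2 ≤ n)
    (c : ℝ) (hc : 0 < c)
    (v : Fin n → Fin 2 → ℝ) (hv : ∀ i k, 0 ≤ v i k)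
    (hV : ∑ i, v i 1 ≤ ∑ i, v i 0)
    (a : Fin n → Fin 2 → ℝ) (ha : IsNashQTM c v a)
    (p : Fin 2 → ℝ) (hp : p = softmax (fun k => ∑ j, a j k)) :
    1 / 2 ≤ p 0 ∧
    ((∑ i, v i 1 < ∑ i, v i 0) → 1 / 2 < p 0) ∧
    (0 < ∑ i, v i 0 →
      (∑ i, v i 0) / 2 < p 0 * (∑ i, v i 0) + p 1 * (∑ i, v i 1)) := by
  have foc : ∀ i : Fin n,
      Real.exp (∑ j, a j 0) * Real.exp (∑ j, a j 1) /
          (Real.exp (∑ j, a j 0) + Real.exp (∑ j, a j 1)) ^ 2 * (v i 0 - v i 1)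
        = 2 * c * a i 0 ∧
      Real.exp (∑ j, a j 0) * Real.exp (∑ j, a j 1) /
          (Real.exp (∑ j, a j 0) + Real.exp (∑ j, a j 1)) ^ 2 * (v i 1 - v i 0)
        = 2 * c * a i 1 := by
    intro i
    have hs0 : (∑ j ∈ Finset.univ.erase i, a j 0) + a i 0 = ∑ j, a j 0 :=
      Finset.sum_erase_add _ _ (Finset.mem_univ i)
    have hs1 : (∑ j ∈ Finset.univ.erase i, a j 1) + a i 1 = ∑ j, a j 1 :=
      Finset.sum_erase_add _ _ (Finset.mem_univ i)
    have hself := util_eq c v a i (a i)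
    rw [Function.update_eq_self] at hself
    constructor
    · have hmax : ∀ t : ℝ,
          Real.exp ((∑ j ∈ Finset.univ.erase i, a j 0) + t) /
            (Real.exp ((∑ j ∈ Finset.univ.erase i, a j 0) + t) +
              Real.exp ((∑ j ∈ Finset.univ.erase i, a j 1) + a i 1)) * v i 0 +
          Real.exp ((∑ j ∈ Finset.univ.erase i, a j 1) + a i 1) /
            (Real.exp ((∑ j ∈ Finset.univ.erase i, a j 0) + t) +
              Real.exp ((∑ j ∈ Finset.univ.erase i, a j 1) + a i 1)) * v i 1 -
          c * t ^ 2 +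
          ((c / ((n : ℝ) - 1)) * (∑ j ∈ Finset.univ.erase i, ((a j 0) ^ 2 + (a j 1) ^ 2))
            - c * (a i 1) ^ 2) ≤
          Real.exp ((∑ j ∈ Finset.univ.erase i, a j 0) + a i 0) /
            (Real.exp ((∑ j ∈ Finset.univ.erase i, a j 0) + a i 0) +
              Real.exp ((∑ j ∈ Finset.univ.erase i, a j 1) + a i 1)) * v i 0 +
          Real.exp ((∑ j ∈ Finset.univ.erase i, a j 1) + a i 1) /
            (Real.exp ((∑ j ∈ Finset.univ.erase i, a j 0) + a i 0) +
              Real.exp ((∑ j ∈ Finset.univ.erase i, a j 1) + a i 1)) * v i 1 -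
          c * (a i 0) ^ 2 +
          ((c / ((n : ℝ) - 1)) * (∑ j ∈ Finset.univ.erase i, ((a j 0) ^ 2 + (a j 1) ^ 2))
            - c * (a i 1) ^ 2) := by
        intro t
        have h := ha i ![t, a i 1]
        rw [util_eq, hself] at h
        simp only [Matrix.cons_val_zero, Matrix.cons_val_one, Matrix.head_cons] at h
        linarith
      have := foc_aux _ _ _ _ _ _ _ (Real.exp_pos _) hmax
      rw [hs0, hs1] at this
      exact this
    · have hmax : ∀ t : ℝ,
          Real.exp ((∑ j ∈ Finset.univ.erase i, a j 1) + t) /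
            (Real.exp ((∑ j ∈ Finset.univ.erase i, a j 1) + t) +
              Real.exp ((∑ j ∈ Finset.univ.erase i, a j 0) + a i 0)) * v i 1 +
          Real.exp ((∑ j ∈ Finset.univ.erase i, a j 0) + a i 0) /
            (Real.exp ((∑ j ∈ Finset.univ.erase i, a j 1) + t) +
              Real.exp ((∑ j ∈ Finset.univ.erase i, a j 0) + a i 0)) * v i 0 -
          c * t ^ 2 +
          ((c / ((n : ℝ) - 1)) * (∑ j ∈ Finset.univ.erase i, ((a j 0) ^ 2 + (a j 1) ^ 2))
            - c * (a i 0) ^ 2) ≤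
          Real.exp ((∑ j ∈ Finset.univ.erase i, a j 1) + a i 1) /
            (Real.exp ((∑ j ∈ Finset.univ.erase i, a j 1) + a i 1) +
              Real.exp ((∑ j ∈ Finset.univ.erase i, a j 0) + a i 0)) * v i 1 +
          Real.exp ((∑ j ∈ Finset.univ.erase i, a j 0) + a i 0) /
            (Real.exp ((∑ j ∈ Finset.univ.erase i, a j 1) + a i 1) +
              Real.exp ((∑ j ∈ Finset.univ.erase i, a j 0) + a i 0)) * v i 0 -
          c * (a i 1) ^ 2 +
          ((c / ((n : ℝ) - 1)) * (∑ j ∈ Finset.univ.erase i, ((a j 0) ^ 2 + (a j 1) ^ 2))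
            - c * (a i 0) ^ 2) := by
        intro t
        have h := ha i ![a i 0, t]
        rw [util_eq, hself] at h
        simp only [Matrix.cons_val_zero, Matrix.cons_val_one, Matrix.head_cons] at h
        rw [add_comm (Real.exp ((∑ j ∈ Finset.univ.erase i, a j 1) + t))
          (Real.exp ((∑ j ∈ Finset.univ.erase i, a j 0) + a i 0)),
          add_comm (Real.exp ((∑ j ∈ Finset.univ.erase i, a j 1) + a i 1))
          (Real.exp ((∑ j ∈ Finset.univ.erase i, a j 0) + a i 0))]
        linarith
      have := foc_aux _ _ _ _ _ _ _ (Real.exp_pos _) hmax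
      rw [hs0, hs1] at this
      rw [add_comm (Real.exp (∑ j, a j 1)) (Real.exp (∑ j, a j 0)),
        mul_comm (Real.exp (∑ j, a j 1)) (Real.exp (∑ j, a j 0))] at this
      exact this
  set A0 := ∑ j, a j 0 with hA0def
  set A1 := ∑ j, a j 1 with hA1def
  have hQ : 0 < Real.exp A0 * Real.exp A1 / (Real.exp A0 + Real.exp A1) ^ 2 := by positivity
  have sum0 : Real.exp A0 * Real.exp A1 / (Real.exp A0 + Real.exp A1) ^ 2 *
      ((∑ i, v i 0) - ∑ i, v i 1) = 2 * c * A0 := by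
    calc Real.exp A0 * Real.exp A1 / (Real.exp A0 + Real.exp A1) ^ 2 *
        ((∑ i, v i 0) - ∑ i, v i 1)
        = ∑ i, Real.exp A0 * Real.exp A1 / (Real.exp A0 + Real.exp A1) ^ 2 *
            (v i 0 - v i 1) := by
          rw [← Finset.mul_sum, Finset.sum_sub_distrib]
      _ = ∑ i, 2 * c * a i 0 := Finset.sum_congr rfl fun i _ => (foc i).1
      _ = 2 * c * A0 := by rw [← Finset.mul_sum]
  have sum1 : Real.exp A0 * Real.exp A1 / (Real.exp A0 + Real.exp A1) ^ 2 *
      ((∑ i, v i 1) - ∑ i, v i 0) = 2 * c * A1 := by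
    calc Real.exp A0 * Real.exp A1 / (Real.exp A0 + Real.exp A1) ^ 2 *
        ((∑ i, v i 1) - ∑ i, v i 0)
        = ∑ i, Real.exp A0 * Real.exp A1 / (Real.exp A0 + Real.exp A1) ^ 2 *
            (v i 1 - v i 0) := by
          rw [← Finset.mul_sum, Finset.sum_sub_distrib]
      _ = ∑ i, 2 * c * a i 1 := Finset.sum_congr rfl fun i _ => (foc i).2
      _ = 2 * c * A1 := by rw [← Finset.mul_sum]
  have hA10 : A1 ≤ A0 := by
    nlinarith [mul_nonneg hQ.le (sub_nonneg.2 hV)]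
  have hp0 : p 0 = Real.exp A0 / (Real.exp A0 + Real.exp A1) := by
    rw [hp]; unfold softmax; rw [Fin.sum_univ_two]
  have hp1 : p 1 = Real.exp A1 / (Real.exp A0 + Real.exp A1) := by
    rw [hp]; unfold softmax; rw [Fin.sum_univ_two]
  have hS : 0 < Real.exp A0 + Real.exp A1 := by positivity
  have part1 : 1 / 2 ≤ p 0 := by
    rw [hp0, le_div_iff₀ hS]
    have := Real.exp_le_exp.2 hA10
    linarith
  have part2 : (∑ i, v i 1 < ∑ i, v i 0) → 1 / 2 < p 0 := by
    intro hlt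
    have hA10' : A1 < A0 := by
      nlinarith [mul_pos hQ (sub_pos.2 hlt)]
    rw [hp0, lt_div_iff₀ hS]
    have := Real.exp_lt_exp.2 hA10'
    linarith
  refine ⟨part1, part2, ?_⟩
  intro hV0
  have hsum : p 0 + p 1 = 1 := by
    rw [hp0, hp1, ← add_div, div_self hS.ne']
  rcases lt_or_eq_of_le hV with hlt | heq
  · have h2 := part2 hlt
    have hp1nn : 0 ≤ p 1 := by rw [hp1]; positivity
    have hV1 : 0 ≤ ∑ i, v i 1 := Finset.sum_nonneg fun i _ => hv i 1
    nlinarith [mul_nonneg hp1nn hV1]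
  · rw [heq]
    nlinarith
end

section
/- In the two-alternative QTM (m = 2) with V_1 > V_2, in any pure-strategy Nash equilibrium, p_1 ≥ 1 − (8c/(V_1 − V_2))^{2/3}. -/
open Real Finset

lemma sum_update_pt {n : ℕ} (a : Fin n → Fin 2 → ℝ) (i : Fin n) (w : Fin 2 → ℝ) (k : Fin 2) :
    ∑ j, Function.update a i w j k = (∑ j, a j k) + (w k - a i k) := by
  have h : ∀ j, Function.update a i w j k = Function.update (fun j => a j k) i (w k) j := by
    intro j; by_cases h : j = i
    · subst h; simp
    · simp [h]
  simp_rw [h]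
  rw [Finset.sum_update_of_mem (Finset.mem_univ i),
    ← Finset.add_sum_erase _ (fun j => a j k) (Finset.mem_univ i), Finset.erase_eq]
  ring

lemma deriv_main (A0 A1 v0 v1 : ℝ) :
    HasDerivAt (fun ε => (Real.exp (A0+ε) * v0 + Real.exp (A1-ε) * v1) / (Real.exp (A0+ε) + Real.exp (A1-ε)))
      (2 * Real.exp A0 * Real.exp A1 * (v0 - v1) / (Real.exp A0 + Real.exp A1)^2) 0 := by
  have h0 : HasDerivAt (fun ε : ℝ => Real.exp (A0+ε)) (Real.exp A0) 0 := by
    simpa using ((hasDerivAt_id (0:ℝ)).const_add A0).exp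
  have h1 : HasDerivAt (fun ε : ℝ => Real.exp (A1-ε)) (-Real.exp A1) 0 := by
    simpa using ((hasDerivAt_id (0:ℝ)).const_sub A1).exp
  have hnum : HasDerivAt (fun ε => Real.exp (A0+ε) * v0 + Real.exp (A1-ε) * v1)
      (Real.exp A0 * v0 + (-Real.exp A1) * v1) 0 := (h0.mul_const v0).add (h1.mul_const v1)
  have hden : HasDerivAt (fun ε => Real.exp (A0+ε) + Real.exp (A1-ε))
      (Real.exp A0 + (-Real.exp A1)) 0 := h0.add h1
  have hne : (Real.exp (A0+(0:ℝ)) + Real.exp (A1-(0:ℝ))) ≠ 0 := by positivity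
  have := hnum.div hden hne
  refine this.congr_deriv ?_
  simp only [add_zero, sub_zero]
  field_simp
  ring

lemma foc_s7 {n : ℕ} (c : ℝ) (v : Fin n → Fin 2 → ℝ) (a : Fin n → Fin 2 → ℝ)
    (ha : IsNashQTM c v a) (i : Fin n) :
    2 * Real.exp (∑ j, a j 0) * Real.exp (∑ j, a j 1) * (v i 0 - v i 1)
        / (Real.exp (∑ j, a j 0) + Real.exp (∑ j, a j 1))^2
      - c * (2 * a i 0 - 2 * a i 1) = 0 := by
  set A0 := ∑ j, a j 0 with hA0
  set A1 := ∑ j, a j 1 with hA1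
  set w : ℝ → Fin 2 → ℝ := fun ε k => a i k + (if k = 0 then ε else -ε) with hw
  set g : ℝ → ℝ := fun ε =>
    (Real.exp (A0+ε) * v i 0 + Real.exp (A1-ε) * v i 1) / (Real.exp (A0+ε) + Real.exp (A1-ε))
      - c * ((a i 0 + ε)^2 + (a i 1 - ε)^2)
      + (c / ((n : ℝ) - 1)) * ∑ j ∈ Finset.univ.erase i, ∑ k, (a j k) ^ 2 with hgdef
  have hgq : ∀ ε, g ε = qtmUtil c v (Function.update a i (w ε)) i := by
    intro ε
    have hsum0 : ∑ j, Function.update a i (w ε) j 0 = A0 + ε := by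
      rw [sum_update_pt]; simp [hw, hA0]
    have hsum1 : ∑ j, Function.update a i (w ε) j 1 = A1 - ε := by
      rw [sum_update_pt]; simp [hw, hA1]; ring
    have herase : ∑ j ∈ Finset.univ.erase i, ∑ k, (Function.update a i (w ε) j k) ^ 2
        = ∑ j ∈ Finset.univ.erase i, ∑ k, (a j k) ^ 2 := by
      refine Finset.sum_congr rfl fun j hj => ?_
      rw [Function.update_of_ne (Finset.ne_of_mem_erase hj)]
    simp only [qtmUtil, softmax]
    rw [herase]
    simp only [Fin.sum_univ_two, hsum0, hsum1, Function.update_self, hgdef]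
    have : (w ε 0)^2 + (w ε 1)^2 = (a i 0 + ε)^2 + (a i 1 - ε)^2 := by
      simp [hw]; ring
    rw [this]
    ring
  have hmax : ∀ ε, g ε ≤ g 0 := by
    intro ε
    have h0 : w 0 = a i := by
      funext k; simp [hw]
    have : g 0 = qtmUtil c v a i := by
      rw [hgq 0, h0, Function.update_eq_self]
    rw [this, hgq ε]
    exact ha i (w ε)
  have hloc : IsLocalMax g 0 := Filter.Eventually.of_forall hmax
  have hq : HasDerivAt (fun ε => (a i 0 + ε)^2 + (a i 1 - ε)^2) (2 * a i 0 - 2 * a i 1) 0 := by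
    have h1 : HasDerivAt (fun ε : ℝ => (a i 0 + ε)^2) (2 * a i 0) 0 := by
      have := (((hasDerivAt_id (0:ℝ)).const_add (a i 0)).pow 2)
      simp at this
      exact this
    have h2 : HasDerivAt (fun ε : ℝ => (a i 1 - ε)^2) (-(2 * a i 1)) 0 := by
      have := (((hasDerivAt_id (0:ℝ)).const_sub (a i 1)).pow 2)
      simp at this
      exact this
    have := h1.add h2
    simp only [sub_eq_add_neg] at this ⊢
    exact this
  have hd : HasDerivAt g
      (2 * Real.exp A0 * Real.exp A1 * (v i 0 - v i 1) / (Real.exp A0 + Real.exp A1)^2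
        - c * (2 * a i 0 - 2 * a i 1)) 0 :=
    ((deriv_main A0 A1 (v i 0) (v i 1)).sub (hq.const_mul c)).add_const _
  exact hloc.hasDerivAt_eq_zero hd

set_option maxHeartbeats 1600000 in
theorem stmt7_aux (n : ℕ) (hn : 2 ≤ n)
    (c : ℝ) (hc : 0 < c)
    (v : Fin n → Fin 2 → ℝ) (hv : ∀ i k, 0 ≤ v i k)
    (hV : ∑ i, v i 1 < ∑ i, v i 0)
    (a : Fin n → Fin 2 → ℝ)
    (hfoc : ∀ i, 2 * Real.exp (∑ j, a j 0) * Real.exp (∑ j, a j 1) * (v i 0 - v i 1)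
        / (Real.exp (∑ j, a j 0) + Real.exp (∑ j, a j 1))^2
      - c * (2 * a i 0 - 2 * a i 1) = 0)
    (p : Fin 2 → ℝ) (hp : p = softmax (fun k => ∑ j, a j k)) :
    1 - (8 * c / ((∑ i, v i 0) - ∑ i, v i 1)) ^ ((2 : ℝ) / 3) ≤ p 0 := by
  set A0 := ∑ j, a j 0 with hA0
  set A1 := ∑ j, a j 1 with hA1
  set E0 := Real.exp A0 with hE0
  set E1 := Real.exp A1 with hE1
  have hE0pos : 0 < E0 := Real.exp_pos _
  have hE1pos : 0 < E1 := Real.exp_pos _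
  set S := E0 + E1 with hS
  have hSpos : 0 < S := by positivity
  set ΔV := (∑ i, v i 0) - ∑ i, v i 1 with hΔV
  have hΔVpos : 0 < ΔV := sub_pos.mpr hV
  -- sum the FOC over agents
  have hsum : 2 * E0 * E1 * ΔV / S^2 - c * (2 * A0 - 2 * A1) = 0 := by
    have h := Finset.sum_congr rfl (fun i (_ : i ∈ (univ : Finset (Fin n))) => (hfoc i))
    have h2 : ∑ i : Fin n, (2 * E0 * E1 * (v i 0 - v i 1) / S^2 - c * (2 * a i 0 - 2 * a i 1))
        = 2 * E0 * E1 * ΔV / S^2 - c * (2 * A0 - 2 * A1) := by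
      rw [Finset.sum_sub_distrib]
      congr 1
      · rw [← Finset.sum_div, ← Finset.mul_sum, Finset.sum_sub_distrib, hΔV]
      · rw [← Finset.mul_sum, Finset.sum_sub_distrib, ← Finset.mul_sum, ← Finset.mul_sum,
          hA0, hA1]
    rw [← h2, h]
    exact Finset.sum_const_zero
  set D := A0 - A1 with hD
  have hDeq : c * D = (E0 * E1 / S^2) * ΔV := by
    have h1 : 2 * E0 * E1 * ΔV / S^2 = c * (2 * A0 - 2 * A1) := by linarith
    have h2 : 2 * A0 - 2 * A1 = 2 * D := by rw [hD]; ring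
    rw [h2] at h1
    have hS2 : (0:ℝ) < S^2 := by positivity
    field_simp at h1 ⊢
    linarith
  have hDpos : 0 < D := by
    have : 0 < (E0 * E1 / S^2) * ΔV := by positivity
    nlinarith
  set q := E1 / S with hq
  have hqpos : 0 < q := by positivity
  have hp0 : p 0 = E0 / S := by
    rw [hp]; simp only [softmax, Fin.sum_univ_two]; rfl
  have hp0q : p 0 = 1 - q := by
    rw [hp0, hq, hS]; field_simp; ring
  -- q ≤ exp (-D)
  have hqexp : q ≤ Real.exp (-D) := by
    have h1 : E1 / S ≤ E1 / E0 := by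
      apply div_le_div_of_nonneg_left (le_of_lt hE1pos) hE0pos
      rw [hS]; linarith
    have h2 : E1 / E0 = Real.exp (-D) := by
      rw [hE0, hE1, ← Real.exp_sub]
      congr 1
      rw [hD]; ring
    calc q = E1 / S := hq
      _ ≤ E1 / E0 := h1
      _ = Real.exp (-D) := h2
  -- half bound : q * ΔV / (2 * c) ≤ D
  have hhalf : q * ΔV / (2 * c) ≤ D := by
    have hphalf : (1:ℝ)/2 ≤ E0 / S := by
      rw [div_le_div_iff₀ (by norm_num) hSpos, hS]
      have : E1 ≤ E0 := by
        rw [hE0, hE1]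
        exact Real.exp_le_exp.mpr (by linarith)
      linarith
    have hmul : (1/2) * q * ΔV ≤ (E0 / S) * q * ΔV := by
      apply mul_le_mul_of_nonneg_right _ (le_of_lt hΔVpos)
      exact mul_le_mul_of_nonneg_right hphalf (le_of_lt hqpos)
    have heq : (E0 / S) * q * ΔV = c * D := by
      rw [hDeq, hq]
      field_simp
    rw [div_le_iff₀ (by positivity)]
    nlinarith
  -- exp D ≥ D^2 / 4
  have hexpD : D^2 / 4 ≤ Real.exp D := by
    have h1 : D / 2 ≤ Real.exp (D / 2) := by
      linarith [Real.add_one_le_exp (D/2)]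
    have h2 : Real.exp D = Real.exp (D/2) * Real.exp (D/2) := by
      rw [← Real.exp_add]; congr 1; ring
    nlinarith [Real.exp_pos (D/2), sq_nonneg (Real.exp (D/2) - D/2)]
  -- q^3 ≤ 16 c^2 / ΔV^2
  have hq3 : q^3 ≤ 16 * c^2 / ΔV^2 := by
    have hD2 : (0:ℝ) < D^2 := by positivity
    have h3 : q ≤ 4 / D^2 := by
      have h1 : Real.exp (-D) = 1 / Real.exp D := by
        rw [Real.exp_neg]; ring
      have hD2pos : 0 < D^2/4 := by positivity
      calc q ≤ Real.exp (-D) := hqexp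
        _ = 1 / Real.exp D := h1
        _ ≤ 1 / (D^2/4) := by
            apply div_le_div_of_nonneg_left one_pos.le hD2pos hexpD
        _ = 4 / D^2 := by field_simp
    have h4 : q * D^2 ≤ 4 := by
      calc q * D^2 ≤ (4/D^2) * D^2 := mul_le_mul_of_nonneg_right h3 hD2.le
        _ = 4 := by field_simp
    have h6 : (q * ΔV / (2*c))^2 ≤ D^2 := by
      apply pow_le_pow_left₀ (by positivity) hhalf
    have h7 : q * (q * ΔV / (2*c))^2 ≤ 4 :=
      le_trans (mul_le_mul_of_nonneg_left h6 hqpos.le) h4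
    have h2c : (0:ℝ) < (2*c)^2 := by positivity
    rw [div_pow, ← mul_div_assoc, div_le_iff₀ h2c] at h7
    have e1 : q * (q * ΔV)^2 = q^3 * ΔV^2 := by ring
    have e2 : 4 * (2*c)^2 = 16 * c^2 := by ring
    rw [le_div_iff₀ (by positivity)]
    linarith [h7, e1.ge, e1.le]
  -- conclude
  set R := (8 * c / ΔV) ^ ((2:ℝ)/3) with hR
  have hRpos : 0 < R := by
    apply Real.rpow_pos_of_pos; positivity
  have hR3 : R^3 = (8*c/ΔV)^2 := by
    rw [hR, ← Real.rpow_natCast ((8*c/ΔV) ^ ((2:ℝ)/3)) 3, ← Real.rpow_mul (by positivity)]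
    norm_num
  have hqR : q ≤ R := by
    by_contra hcon
    push_neg at hcon
    have hlt : R^3 < q^3 := pow_lt_pow_left₀ hcon hRpos.le (by norm_num)
    have h64 : (8*c/ΔV)^2 = 64 * c^2 / ΔV^2 := by
      rw [div_pow]; congr 1; ring
    have hle : q^3 ≤ R^3 := by
      rw [hR3, h64]
      calc q^3 ≤ 16 * c^2 / ΔV^2 := hq3
        _ ≤ 64 * c^2 / ΔV^2 := by gcongr <;> nlinarith
    linarith
  rw [hp0q]
  linarith

theorem stmt7 (n : ℕ) (hn : 2 ≤ n)
    (c : ℝ) (hc : 0 < c)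
    (v : Fin n → Fin 2 → ℝ) (hv : ∀ i k, 0 ≤ v i k)
    (hV : ∑ i, v i 1 < ∑ i, v i 0)
    (a : Fin n → Fin 2 → ℝ) (ha : IsNashQTM c v a)
    (p : Fin 2 → ℝ) (hp : p = softmax (fun k => ∑ j, a j k)) :
    1 - (8 * c / ((∑ i, v i 0) - ∑ i, v i 1)) ^ ((2 : ℝ) / 3) ≤ p 0 :=
  stmt7_aux n hn c hc v hv hV a (fun i => foc_s7 c v a ha i) p hp
end

section
/- Main QTM welfare theorem: in the two-alternative QTM (m = 2) with V_1 ≥ V_2 > 0 WLOG alternative 1 optimal, suppose max_{i,k} v_k^i > 0, set c = (1/2)·max_{i,k} v_k^i, and let the spread be T = V_1 / max_{i,k} v_k^i. Then a pure-strategy Nash equilibrium exists, and in every pure-strategy Nash equilibrium the expected welfare satisfies p_1 V_1 + p_2 V_2 ≥ (1 − (2/T)^{2/5}) · V_1. -/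
open Real Finset

noncomputable def sig (x : ℝ) : ℝ := Real.exp x / (Real.exp x + 1)

lemma sig_pos (x : ℝ) : 0 < sig x :=
  div_pos (exp_pos x) (by positivity)

lemma sig_lt_one (x : ℝ) : sig x < 1 := by
  rw [sig, div_lt_one (by positivity)]; linarith

lemma hasDerivAt_sig (x : ℝ) : HasDerivAt sig (sig x * (1 - sig x)) x := by
  have h : HasDerivAt sig ((Real.exp x * (Real.exp x + 1) - Real.exp x * Real.exp x) / (Real.exp x + 1)^2) x :=
    (Real.hasDerivAt_exp x).div ((Real.hasDerivAt_exp x).add_const 1) (by positivity)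
  convert h using 1
  have : Real.exp x + 1 ≠ 0 := by positivity
  rw [sig]; field_simp

lemma sig_deriv_le (x : ℝ) : sig x * (1 - sig x) ≤ 1/4 := by
  nlinarith [sq_nonneg (sig x - 1/2)]

lemma sig_deriv_nonneg (x : ℝ) : 0 ≤ sig x * (1 - sig x) := by
  nlinarith [sig_pos x, sig_lt_one x]

lemma sig_lip (u v : ℝ) : |sig u - sig v| ≤ |u - v| / 4 := by
  have h := Convex.norm_image_sub_le_of_norm_hasDerivWithin_le
    (f := sig) (f' := fun x => sig x * (1 - sig x)) (C := 1/4) (s := Set.univ)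
    (fun x _ => (hasDerivAt_sig x).hasDerivWithinAt)
    (fun x _ => by rw [Real.norm_eq_abs, abs_of_nonneg (sig_deriv_nonneg x)]; exact sig_deriv_le x)
    convex_univ (Set.mem_univ v) (Set.mem_univ u)
  rw [Real.norm_eq_abs, Real.norm_eq_abs] at h
  linarith


lemma sig_cont : Continuous sig :=
  Real.continuous_exp.div (Real.continuous_exp.add continuous_const) (fun x => by positivity)

lemma sig_taylor (D y : ℝ) :
    |sig y - sig D - sig D * (1 - sig D) * (y - D)| ≤ (y - D)^2 / 4 := by
  rcases lt_trichotomy D y with h | h | h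
  · obtain ⟨ξ, hξ, heq⟩ := exists_hasDerivAt_eq_slope sig (fun x => sig x * (1 - sig x)) h
      (sig_cont.continuousOn) (fun x _ => hasDerivAt_sig x)
    have hne : y - D ≠ 0 := by intro h'; linarith [sub_eq_zero.mp h']
    have hyD : sig y - sig D = sig ξ * (1 - sig ξ) * (y - D) := by
      rw [heq, div_mul_cancel₀ _ hne]
    have key : sig ξ * (1 - sig ξ) - sig D * (1 - sig D) = (sig ξ - sig D) * (1 - sig ξ - sig D) := by ring
    have h1 : |sig ξ - sig D| ≤ |ξ - D| / 4 := sig_lip ξ D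
    have h2 : |1 - sig ξ - sig D| ≤ 1 := by
      rw [abs_le]; constructor <;> nlinarith [sig_pos ξ, sig_pos D, sig_lt_one ξ, sig_lt_one D]
    have h3 : |ξ - D| ≤ |y - D| := by
      rw [abs_of_pos (by linarith [hξ.1] : (0:ℝ) < ξ - D), abs_of_pos (by linarith : (0:ℝ) < y - D)]
      linarith [hξ.2]
    calc |sig y - sig D - sig D * (1 - sig D) * (y - D)|
        = |(sig ξ - sig D) * (1 - sig ξ - sig D)| * |y - D| := by
          rw [← abs_mul]; congr 1; rw [← key]; linarith [hyD]
      _ ≤ (|y - D|/4 * 1) * |y - D| := by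
          apply mul_le_mul_of_nonneg_right _ (abs_nonneg _)
          rw [abs_mul]
          exact mul_le_mul (le_trans h1 (by linarith)) h2 (abs_nonneg _) (by positivity)
      _ = (y - D)^2 / 4 := by rw [← sq_abs]; ring
  · simp [h]
  · obtain ⟨ξ, hξ, heq⟩ := exists_hasDerivAt_eq_slope sig (fun x => sig x * (1 - sig x)) h
      (sig_cont.continuousOn) (fun x _ => hasDerivAt_sig x)
    have hne : D - y ≠ 0 := by intro h'; linarith [sub_eq_zero.mp h']
    have hyD : sig y - sig D = sig ξ * (1 - sig ξ) * (y - D) := by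
      rw [heq]; field_simp; ring
    have key : sig ξ * (1 - sig ξ) - sig D * (1 - sig D) = (sig ξ - sig D) * (1 - sig ξ - sig D) := by ring
    have h1 : |sig ξ - sig D| ≤ |ξ - D| / 4 := sig_lip ξ D
    have h2 : |1 - sig ξ - sig D| ≤ 1 := by
      rw [abs_le]; constructor <;> nlinarith [sig_pos ξ, sig_pos D, sig_lt_one ξ, sig_lt_one D]
    have h3 : |ξ - D| ≤ |y - D| := by
      rw [abs_of_neg (by linarith [hξ.2] : ξ - D < 0), abs_of_neg (by linarith : y - D < 0)]
      linarith [hξ.1]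
    calc |sig y - sig D - sig D * (1 - sig D) * (y - D)|
        = |(sig ξ - sig D) * (1 - sig ξ - sig D)| * |y - D| := by
          rw [← abs_mul]; congr 1; rw [← key]; linarith [hyD]
      _ ≤ (|y - D|/4 * 1) * |y - D| := by
          apply mul_le_mul_of_nonneg_right _ (abs_nonneg _)
          rw [abs_mul]
          exact mul_le_mul (le_trans h1 (by linarith)) h2 (abs_nonneg _) (by positivity)
      _ = (y - D)^2 / 4 := by rw [← sq_abs]; ring


lemma sig_taylor_lower (D y w : ℝ) :
    sig D * w + sig D * (1 - sig D) * w * (y - D) - |w| * (y - D)^2 / 4 ≤ sig y * w := by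
  have ht := sig_taylor D y
  have h1 : |(sig y - sig D - sig D * (1 - sig D) * (y - D)) * w| ≤ (y - D)^2/4 * |w| := by
    rw [abs_mul]; exact mul_le_mul_of_nonneg_right ht (abs_nonneg w)
  have habs : -((y - D)^2/4 * |w|) ≤ (sig y - sig D - sig D * (1 - sig D) * (y - D)) * w :=
    le_trans (neg_le_neg h1) (neg_abs_le _)
  nlinarith [habs]

/-- Key best-response inequality. -/
lemma key_ineq (c w D x b0 b1 : ℝ) (hc : 0 < c) (hw : |w| ≤ 2*c)
    (hx : 2*c*x = sig D * (1 - sig D) * w) :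
    sig ((D - 2*x) + b0 - b1) * w - c*(b0^2 + b1^2)
      ≤ sig D * w - c*(x^2 + x^2) := by
  set y := (D - 2*x) + b0 - b1 with hy
  have ht := sig_taylor D y
  have h1 : (sig y - sig D - sig D * (1 - sig D) * (y - D)) * w ≤ (y - D)^2/4 * |w| := by
    calc (sig y - sig D - sig D * (1 - sig D) * (y - D)) * w
        ≤ |(sig y - sig D - sig D * (1 - sig D) * (y - D)) * w| := le_abs_self _
      _ = |sig y - sig D - sig D * (1 - sig D) * (y - D)| * |w| := abs_mul _ _
      _ ≤ (y - D)^2/4 * |w| := mul_le_mul_of_nonneg_right ht (abs_nonneg w)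
  have h2 : sig D * (1 - sig D) * (y - D) * w = 2*c*x*(y-D) := by
    have : sig D * (1 - sig D) * (y - D) * w = (sig D * (1 - sig D) * w) * (y - D) := by ring
    rw [this, ← hx]
  have h3 : (y - D)^2/4 * |w| ≤ (y - D)^2/4 * (2*c) :=
    mul_le_mul_of_nonneg_left hw (by positivity)
  have h4 : y - D = b0 - b1 - 2*x := by rw [hy]; ring
  nlinarith [sq_nonneg (b0 + b1)]

lemma eq_zero_of_linear_le_quad (L M : ℝ) (hM : 0 ≤ M) (H : ∀ h : ℝ, L * h ≤ M * h^2) :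
    L = 0 := by
  by_contra hL
  have hM1 : (0:ℝ) < 2*(M+1) := by linarith
  set h0 := L / (2*(M+1)) with hh0
  have hL0 : L = h0 * (2*(M+1)) := by rw [hh0]; field_simp
  have hne : h0 ≠ 0 := by intro h'; exact hL (by rw [hL0, h']; ring)
  have h2 : 0 < h0^2 := by
    have := abs_pos.mpr hne
    nlinarith [this, sq_abs h0]
  have h := H h0
  have h3 : L * h0 = h0^2 * (2*(M+1)) := by rw [hL0]; ring
  linarith [h, h2, h3, mul_nonneg hM h2.le]

/-- First-order conditions from the reduced best-response property. -/
lemma foc_s9 (c w C t0 t1 : ℝ) (hc : 0 < c)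
    (H : ∀ b0 b1 : ℝ, sig (C + b0 - b1) * w - c*(b0^2 + b1^2)
        ≤ sig (C + t0 - t1) * w - c*(t0^2 + t1^2)) :
    2*c*t0 = sig (C + t0 - t1) * (1 - sig (C + t0 - t1)) * w ∧
    2*c*t1 = -(sig (C + t0 - t1) * (1 - sig (C + t0 - t1)) * w) := by
  have hM : (0:ℝ) ≤ c + |w|/4 := by positivity
  constructor
  · have h0 : ∀ h : ℝ, (sig (C + t0 - t1) * (1 - sig (C + t0 - t1)) * w - 2*c*t0) * h
        ≤ (c + |w|/4) * h^2 := by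
      intro h
      have hH := H (t0 + h) t1
      have harg : C + (t0 + h) - t1 = (C + t0 - t1) + h := by ring
      rw [harg] at hH
      have hlow := sig_taylor_lower (C + t0 - t1) ((C + t0 - t1) + h) w
      have hsimp : (C + t0 - t1) + h - (C + t0 - t1) = h := by ring
      rw [hsimp] at hlow
      nlinarith [hlow, hH]
    have := eq_zero_of_linear_le_quad _ _ hM h0
    linarith
  · have h0 : ∀ h : ℝ, (-(sig (C + t0 - t1) * (1 - sig (C + t0 - t1)) * w) - 2*c*t1) * h
        ≤ (c + |w|/4) * h^2 := by
      intro h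
      have hH := H t0 (t1 + h)
      have harg : C + t0 - (t1 + h) = (C + t0 - t1) + (-h) := by ring
      rw [harg] at hH
      have hlow := sig_taylor_lower (C + t0 - t1) ((C + t0 - t1) + (-h)) w
      have hsimp : (C + t0 - t1) + (-h) - (C + t0 - t1) = -h := by ring
      rw [hsimp] at hlow
      nlinarith [hlow, hH]
    have := eq_zero_of_linear_le_quad _ _ hM h0
    linarith


lemma softmax_zero (A : Fin 2 → ℝ) : softmax A 0 = sig (A 0 - A 1) := by
  rw [softmax, sig, Fin.sum_univ_two, Real.exp_sub]
  rw [div_eq_div_iff (by positivity) (by positivity)]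
  field_simp
lemma softmax_one (A : Fin 2 → ℝ) : softmax A 1 = 1 - sig (A 0 - A 1) := by
  have h0 := softmax_zero A
  have : softmax A 0 + softmax A 1 = 1 := by
    rw [softmax, softmax, Fin.sum_univ_two, ← add_div, div_self (by positivity)]
  linarith

lemma qtm_update_eq {n : ℕ} (c : ℝ) (v : Fin n → Fin 2 → ℝ) (a : Fin n → Fin 2 → ℝ)
    (i : Fin n) (b : Fin 2 → ℝ) :
    qtmUtil c v (Function.update a i b) i
      = sig ((b 0 + ∑ j ∈ Finset.univ.erase i, a j 0)
            - (b 1 + ∑ j ∈ Finset.univ.erase i, a j 1)) * (v i 0 - v i 1)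
        + v i 1
        - c * ((b 0)^2 + (b 1)^2)
        + (c / ((n:ℝ)-1)) * ∑ j ∈ Finset.univ.erase i, ((a j 0)^2 + (a j 1)^2) := by
  have hA : ∀ k, (∑ j, Function.update a i b j k)
      = b k + ∑ j ∈ Finset.univ.erase i, a j k := by
    intro k
    rw [← Finset.add_sum_erase _ (fun j => Function.update a i b j k) (Finset.mem_univ i)]
    congr 1
    · rw [Function.update_self]
    · apply Finset.sum_congr rfl
      intro j hj
      rw [Function.update_of_ne (Finset.ne_of_mem_erase hj)]
  have herase : (∑ j ∈ Finset.univ.erase i, ∑ k, (Function.update a i b j k) ^ 2)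
      = ∑ j ∈ Finset.univ.erase i, ((a j 0)^2 + (a j 1)^2) := by
    apply Finset.sum_congr rfl
    intro j hj
    rw [Function.update_of_ne (Finset.ne_of_mem_erase hj), Fin.sum_univ_two]
  rw [qtmUtil]
  have hfun : (fun k => ∑ j, Function.update a i b j k) = fun k => b k + ∑ j ∈ Finset.univ.erase i, a j k := funext hA
  rw [hfun, herase, Fin.sum_univ_two (f := fun k => softmax _ k * v i k)]
  rw [softmax_zero, softmax_one, Function.update_self, Fin.sum_univ_two]
  ring


lemma half_le_sig {x : ℝ} (h : 0 ≤ x) : 1/2 ≤ sig x := by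
  rw [sig, le_div_iff₀ (by positivity)]
  nlinarith [Real.one_le_exp h]

lemma sig_logit (x : ℝ) : x = Real.log (sig x) - Real.log (1 - sig x) := by
  have h1 : 1 - sig x = 1/(Real.exp x + 1) := by rw [sig]; field_simp; ring
  have h2 : sig x / (1 - sig x) = Real.exp x := by
    rw [h1, sig]; field_simp
  have h3 := Real.log_div (ne_of_gt (sig_pos x)) (by nlinarith [sig_lt_one x] : 1 - sig x ≠ 0)
  rw [← h3, h2, Real.log_exp]

lemma welfare_bound (c V0 V2 Δ : ℝ) (hc : 0 < c) (h2c : 2*c ≤ V0) (hV2 : 0 < V2)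
    (hV : V2 ≤ V0) (hfix : c*Δ = sig Δ * (1 - sig Δ) * (V0 - V2)) :
    (1 - (4*c/V0) ^ ((2:ℝ)/5)) * V0 ≤ sig Δ * V0 + (1 - sig Δ) * V2 := by
  have hV0 : 0 < V0 := by linarith
  have hp0 : 0 < sig Δ := sig_pos Δ
  have hp1 : sig Δ < 1 := sig_lt_one Δ
  have hΔ0 : 0 ≤ Δ := by
    have hnn : 0 ≤ sig Δ * (1 - sig Δ) * (V0 - V2) :=
      mul_nonneg (mul_nonneg hp0.le (by linarith)) (by linarith)
    nlinarith [hfix]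
  have hp : 1/2 ≤ sig Δ := half_le_sig hΔ0
  have hε : 0 < 4*c/V0 := by positivity
  have hE : 0 < (4*c/V0) ^ ((2:ℝ)/5) := Real.rpow_pos_of_pos hε _
  set p := sig Δ with hpdef
  set ε := 4*c/V0 with hεdef
  set E := ε ^ ((2:ℝ)/5) with hEdef
  have hgoal : p * V0 + (1 - p) * V2 = V0 - (1-p)*(V0-V2) := by ring
  rw [hgoal]
  have hkey : (1-p)*(V0-V2) ≤ E*V0 := by
    by_cases hq : 1 - p ≤ E
    · calc (1-p)*(V0-V2) ≤ E*(V0-V2) :=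
            mul_le_mul_of_nonneg_right hq (by linarith)
        _ ≤ E*V0 := mul_le_mul_of_nonneg_left (by linarith) hE.le
    · push_neg at hq
      have hq2 : 1 - p ≤ 1/2 := by linarith
      have hE2 : E < 1/2 := lt_of_lt_of_le hq hq2
      have hε1 : ε < 1 := by
        by_contra hcon; push_neg at hcon
        have h1 : (1:ℝ) ^ ((2:ℝ)/5) ≤ ε ^ ((2:ℝ)/5) :=
          Real.rpow_le_rpow (by norm_num) hcon (by norm_num)
        rw [Real.one_rpow] at h1
        linarith
      have hqpos : 0 < 1 - p := by linarith
      have hΔeq : Δ = Real.log p - Real.log (1-p) := sig_logit Δ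
      have hlogp : Real.log p ≤ 0 := Real.log_nonpos hp0.le hp1.le
      have hlogq : Real.log E ≤ Real.log (1-p) := Real.log_le_log hE hq.le
      have hlogE : Real.log E = (2/5) * Real.log ε := Real.log_rpow hε _
      have hΔle : Δ ≤ (2/5) * (-Real.log ε) := by
        rw [hΔeq]; rw [hlogE] at hlogq; linarith
      set u := ε ^ ((3:ℝ)/5) with hudef
      have hu : 0 < u := Real.rpow_pos_of_pos hε _
      have hEu : E * u = ε := by
        rw [hEdef, hudef, ← Real.rpow_add hε]; norm_num
      have hlogu : Real.log u = (3/5) * Real.log ε := Real.log_rpow hε _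
      have hul : -(u * Real.log u) ≤ 1 - u := by
        have h5 := Real.log_le_sub_one_of_pos (show (0:ℝ) < u⁻¹ by positivity)
        rw [Real.log_inv] at h5
        have h6 := mul_le_mul_of_nonneg_left h5 hu.le
        have hinv : u * (u⁻¹ - 1) = 1 - u := by field_simp
        nlinarith [h6, hinv]
      have hX : p * ((1-p)*(V0-V2)) = c*Δ := by rw [hfix]; ring
      have hXn : 0 ≤ (1-p)*(V0-V2) := mul_nonneg hqpos.le (by linarith)
      have hq3 : (1-p)*(V0-V2) ≤ 2*(c*Δ) := by
        nlinarith [hX, mul_nonneg (by linarith : (0:ℝ) ≤ 2*p-1) hXn]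
      have hεV0 : ε * V0 = 4*c := by rw [hεdef]; field_simp
      have hEV0 : E * V0 = 4*c/u := by
        rw [eq_div_iff hu.ne']
        calc E * V0 * u = (E*u) * V0 := by ring
          _ = ε * V0 := by rw [hEu]
          _ = 4*c := hεV0
      have hΔle2 : 2*(c*Δ) ≤ (4*c/3)*(-Real.log u) := by
        have hlogε : Real.log ε = (5/3) * Real.log u := by rw [hlogu]; ring
        have h7 := mul_le_mul_of_nonneg_left hΔle (by linarith : (0:ℝ) ≤ 2*c)
        calc 2*(c*Δ) = 2*c*Δ := by ring
          _ ≤ 2*c*((2/5)*(-Real.log ε)) := h7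
          _ = (4*c/3)*(-Real.log u) := by rw [hlogε]; ring
      have hfin : (4*c/3)*(-Real.log u) ≤ 4*c/u := by
        rw [le_div_iff₀ hu]
        have h8 : (4*c/3)*(-(u*Real.log u)) ≤ (4*c/3)*(1-u) :=
          mul_le_mul_of_nonneg_left hul (by positivity)
        linarith [h8, mul_nonneg hc.le hu.le, hc.le]
      rw [hEV0]
      linarith
  linarith [hkey]


lemma sig_zero : sig 0 = 1/2 := by rw [sig, Real.exp_zero]; norm_num

theorem stmt9 (n : ℕ) (hn : 2 ≤ n)
    (v : Fin n → Fin 2 → ℝ) (hv : ∀ i k, 0 ≤ v i k)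
    (vmax : ℝ) (hvmax : vmax = ⨆ i, ⨆ k, v i k) (hvpos : 0 < vmax)
    (c : ℝ) (hc : c = (1 / 2) * vmax)
    (hV2 : 0 < ∑ i, v i 1) (hV : ∑ i, v i 1 ≤ ∑ i, v i 0)
    (T : ℝ) (hT : T = (∑ i, v i 0) / vmax) :
    (∃ a : Fin n → Fin 2 → ℝ, IsNashQTM c v a) ∧
    ∀ a : Fin n → Fin 2 → ℝ, IsNashQTM c v a →
      (1 - (2 / T) ^ ((2 : ℝ) / 5)) * (∑ i, v i 0)
        ≤ softmax (fun k => ∑ j, a j k) 0 * (∑ i, v i 0)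
          + softmax (fun k => ∑ j, a j k) 1 * (∑ i, v i 1) := by
  have hcpos : 0 < c := by rw [hc]; linarith
  have h2c : 2*c = vmax := by rw [hc]; ring
  have hvm : ∀ i k, v i k ≤ vmax := by
    intro i k; rw [hvmax]
    calc v i k ≤ ⨆ k, v i k := le_ciSup (Set.Finite.bddAbove (Set.finite_range _)) k
      _ ≤ ⨆ i, ⨆ k, v i k :=
          le_ciSup (f := fun i => ⨆ k, v i k) (Set.Finite.bddAbove (Set.finite_range _)) i
  have hwabs : ∀ i, |v i 0 - v i 1| ≤ 2*c := by
    intro i; rw [h2c, abs_le]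
    constructor
    · linarith [hv i 0, hvm i 1]
    · linarith [hv i 1, hvm i 0]
  have hvmaxle : vmax ≤ ∑ i, v i 0 := by
    rw [hvmax]
    have hne : Nonempty (Fin n) := ⟨⟨0, by omega⟩⟩
    apply ciSup_le; intro i; apply ciSup_le; intro k
    fin_cases k
    · exact Finset.single_le_sum (fun j _ => hv j 0) (Finset.mem_univ i)
    · exact le_trans (Finset.single_le_sum (fun j _ => hv j 1) (Finset.mem_univ i)) hV
  set W := (∑ i, v i 0) - (∑ i, v i 1) with hWdef
  have hW : 0 ≤ W := by rw [hWdef]; linarith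
  constructor
  · -- existence
    have hM : (0:ℝ) ≤ W/(4*c) := by positivity
    have hcont : ContinuousOn (fun D => sig D * (1-sig D)*W - c*D) (Set.Icc 0 (W/(4*c))) :=
      (((sig_cont.mul (continuous_const.sub sig_cont)).mul continuous_const).sub
        (continuous_const.mul continuous_id)).continuousOn
    have hf0 : 0 ≤ sig 0 * (1 - sig 0) * W - c * 0 := by
      rw [sig_zero]; nlinarith [hW]
    have hfM : sig (W/(4*c)) * (1 - sig (W/(4*c))) * W - c * (W/(4*c)) ≤ 0 := by
      have h1 : sig (W/(4*c)) * (1 - sig (W/(4*c))) * W ≤ (1/4) * W :=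
        mul_le_mul_of_nonneg_right (sig_deriv_le _) hW
      have h2 : c * (W/(4*c)) = W/4 := by field_simp
      linarith
    obtain ⟨D, hDmem, hfD⟩ := intermediate_value_Icc' hM hcont (Set.mem_Icc.2 ⟨hfM, hf0⟩)
    have hfix : sig D * (1 - sig D) * W = c * D := by
      have : sig D * (1-sig D)*W - c*D = 0 := hfD
      linarith
    set X : Fin n → ℝ := fun j => sig D * (1 - sig D) * (v j 0 - v j 1) / (2*c) with hXdef
    have hXsum : ∑ j, X j = D/2 := by
      rw [hXdef]
      rw [← Finset.sum_div]
      rw [← Finset.mul_sum]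
      rw [Finset.sum_sub_distrib]
      rw [← hWdef, hfix]
      field_simp
    refine ⟨fun j => ![X j, -X j], ?_⟩
    intro i b
    rw [qtm_update_eq]
    conv_rhs => rw [← Function.update_eq_self i (fun j => ![X j, -X j])]
    rw [qtm_update_eq]
    simp only [Matrix.cons_val_zero, Matrix.cons_val_one, Matrix.head_cons]
    rw [Finset.sum_neg_distrib]
    set Sx := ∑ j ∈ Finset.univ.erase i, X j with hSxdef
    have hsplit : ∑ j, X j = X i + Sx := (Finset.add_sum_erase _ X (Finset.mem_univ i)).symm
    have hSx2 : 2*Sx = D - 2*X i := by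
      rw [hXsum] at hsplit; linarith
    have harg1 : (b 0 + Sx) - (b 1 + -Sx) = (D - 2*X i) + b 0 - b 1 := by
      linear_combination hSx2
    have harg2 : (X i + Sx) - (-X i + -Sx) = D := by linear_combination hSx2
    rw [harg1, harg2]
    have hx : 2*c*(X i) = sig D * (1 - sig D) * (v i 0 - v i 1) := by
      rw [hXdef]; field_simp
    have hk := key_ineq c (v i 0 - v i 1) D (X i) (b 0) (b 1) hcpos (hwabs i) hx
    have hsq : (-X i)^2 = (X i)^2 := by ring
    rw [hsq]
    linarith [hk]
  · -- welfare bound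
    intro a hNash
    set A0 := ∑ j, a j 0 with hA0
    set A1 := ∑ j, a j 1 with hA1
    set Δ := A0 - A1 with hΔdef
    have hfoc : ∀ i : Fin n,
        2*c*(a i 0) = sig Δ * (1 - sig Δ) * (v i 0 - v i 1) ∧
        2*c*(a i 1) = -(sig Δ * (1 - sig Δ) * (v i 0 - v i 1)) := by
      intro i
      set S0 := ∑ j ∈ Finset.univ.erase i, a j 0 with hS0
      set S1 := ∑ j ∈ Finset.univ.erase i, a j 1 with hS1
      have hsplit0 : A0 = a i 0 + S0 := (Finset.add_sum_erase _ _ (Finset.mem_univ i)).symm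
      have hsplit1 : A1 = a i 1 + S1 := (Finset.add_sum_erase _ _ (Finset.mem_univ i)).symm
      have hred : ∀ b0 b1 : ℝ, sig ((S0 - S1) + b0 - b1) * (v i 0 - v i 1) - c*(b0^2 + b1^2)
          ≤ sig ((S0 - S1) + a i 0 - a i 1) * (v i 0 - v i 1) - c*((a i 0)^2 + (a i 1)^2) := by
        intro b0 b1
        have hN := hNash i ![b0, b1]
        rw [qtm_update_eq] at hN
        conv_rhs at hN => rw [← Function.update_eq_self i a]
        rw [qtm_update_eq] at hN
        simp only [Matrix.cons_val_zero, Matrix.cons_val_one, Matrix.head_cons] at hN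
        have harg1 : (b0 + S0) - (b1 + S1) = (S0 - S1) + b0 - b1 := by ring
        have harg2 : (a i 0 + S0) - (a i 1 + S1) = (S0 - S1) + a i 0 - a i 1 := by ring
        rw [harg1, harg2] at hN
        linarith [hN]
      have hf := foc_s9 c (v i 0 - v i 1) (S0 - S1) (a i 0) (a i 1) hcpos hred
      have hΔeq : (S0 - S1) + a i 0 - a i 1 = Δ := by
        rw [hΔdef, hsplit0, hsplit1]; ring
      rw [hΔeq] at hf
      exact hf
    have hsum : 2*c*Δ = 2*(sig Δ * (1 - sig Δ) * W) := by
      have h1 : ∀ i : Fin n, 2*c*(a i 0 - a i 1) = 2*(sig Δ * (1 - sig Δ) * (v i 0 - v i 1)) := by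
        intro i
        have := hfoc i
        linarith [this.1, this.2]
      have h2 : ∑ i, (2*c*(a i 0 - a i 1)) = ∑ i, 2*(sig Δ * (1 - sig Δ) * (v i 0 - v i 1)) :=
        Finset.sum_congr rfl (fun i _ => h1 i)
      rw [← Finset.mul_sum, ← Finset.mul_sum] at h2
      rw [Finset.sum_sub_distrib] at h2
      rw [← Finset.mul_sum] at h2
      rw [Finset.sum_sub_distrib] at h2
      rw [← hA0, ← hA1, ← hΔdef, ← hWdef] at h2
      exact h2
    have hfix : c*Δ = sig Δ * (1 - sig Δ) * ((∑ i, v i 0) - (∑ i, v i 1)) := by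
      rw [← hWdef]; linarith [hsum]
    have hwb := welfare_bound c (∑ i, v i 0) (∑ i, v i 1) Δ hcpos
      (by rw [h2c]; exact hvmaxle) hV2 hV hfix
    have hsm0 : softmax (fun k => ∑ j, a j k) 0 = sig Δ := by
      rw [softmax_zero]
    have hsm1 : softmax (fun k => ∑ j, a j k) 1 = 1 - sig Δ := by
      rw [softmax_one]
    rw [hsm0, hsm1]
    have hTε : 2/T = 4*c/(∑ i, v i 0) := by
      have hV0pos : 0 < ∑ i, v i 0 := by linarith [hvmaxle, hvpos]
      rw [hT, ← h2c]
      rw [div_div_eq_mul_div]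
      field_simp
      ring
    rw [hTε]
    exact hwb
end

section
/- Revenue identity: in the two-alternative QTM (m = 2) with V_1 ≠ V_2, in any pure-strategy Nash equilibrium the total payment collected satisfies Σ_{i=1}^n c·((a_1^i)^2 + (a_2^i)^2) = 2c · A_1^2 · (Σ_{i=1}^n (v_1^i − v_2^i)^2) / (V_1 − V_2)^2. -/
open Real Finset

/-- Scalar first-order condition at a global max. -/
lemma foc_scalar (S D w0 w1 c K x0 : ℝ) (hD : 0 < D)
    (hmax : ∀ x : ℝ,
      (Real.exp (x + S) * w0 + D * w1) / (Real.exp (x + S) + D) - c * x ^ 2 + K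
        ≤ (Real.exp (x0 + S) * w0 + D * w1) / (Real.exp (x0 + S) + D) - c * x0 ^ 2 + K) :
    Real.exp (x0 + S) * D * (w0 - w1) / (Real.exp (x0 + S) + D) ^ 2 = 2 * c * x0 := by
  set E := Real.exp (x0 + S) with hE
  have hEpos : 0 < E := Real.exp_pos _
  have hne : E + D ≠ 0 := by positivity
  have hexp : HasDerivAt (fun x : ℝ => Real.exp (x + S)) E x0 := by
    simpa using ((hasDerivAt_id x0).add_const S).exp
  have hnum : HasDerivAt (fun x : ℝ => Real.exp (x + S) * w0 + D * w1) (E * w0) x0 :=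
    (hexp.mul_const w0).add_const _
  have hden : HasDerivAt (fun x : ℝ => Real.exp (x + S) + D) E x0 := hexp.add_const D
  have hdiv := hnum.div hden hne
  have hx2 : HasDerivAt (fun x : ℝ => c * x ^ 2) (c * (2 * x0)) x0 := by
    simpa using (hasDerivAt_pow 2 x0).const_mul c
  have htot := (hdiv.sub hx2).add_const K
  have hlm : IsLocalMax (fun x : ℝ =>
      (Real.exp (x + S) * w0 + D * w1) / (Real.exp (x + S) + D) - c * x ^ 2 + K) x0 :=
    Filter.Eventually.of_forall hmax
  have h0 := hlm.hasDerivAt_eq_zero htot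
  have hq : (E * w0 * (E + D) - (E * w0 + D * w1) * E) / (E + D) ^ 2
      = E * D * (w0 - w1) / (E + D) ^ 2 := by
    rw [div_eq_div_iff (by positivity) (by positivity)]
    ring
  rw [hq] at h0
  linarith [h0]

/-- FOC in the first coordinate. -/
lemma foc0 (S0 S1 w0 w1 c Kb y x0 : ℝ)
    (hmax : ∀ x : ℝ,
      (Real.exp (x + S0) * w0 + Real.exp (y + S1) * w1)
          / (Real.exp (x + S0) + Real.exp (y + S1)) - c * (x ^ 2 + y ^ 2) + Kb
        ≤ (Real.exp (x0 + S0) * w0 + Real.exp (y + S1) * w1)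
          / (Real.exp (x0 + S0) + Real.exp (y + S1)) - c * (x0 ^ 2 + y ^ 2) + Kb) :
    Real.exp (x0 + S0) * Real.exp (y + S1) * (w0 - w1)
      / (Real.exp (x0 + S0) + Real.exp (y + S1)) ^ 2 = 2 * c * x0 := by
  apply foc_scalar S0 (Real.exp (y + S1)) w0 w1 c (Kb - c * y ^ 2) x0 (Real.exp_pos _)
  have e1 : ∀ x : ℝ,
      (Real.exp (x + S0) * w0 + Real.exp (y + S1) * w1)
          / (Real.exp (x + S0) + Real.exp (y + S1)) - c * x ^ 2 + (Kb - c * y ^ 2)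
      = (Real.exp (x + S0) * w0 + Real.exp (y + S1) * w1)
          / (Real.exp (x + S0) + Real.exp (y + S1)) - c * (x ^ 2 + y ^ 2) + Kb := by
    intro x; ring
  intro x
  rw [e1 x, e1 x0]
  exact hmax x

/-- FOC in the second coordinate. -/
lemma foc1 (S0 S1 w0 w1 c Kb y x0 : ℝ)
    (hmax : ∀ x : ℝ,
      (Real.exp (y + S0) * w0 + Real.exp (x + S1) * w1)
          / (Real.exp (y + S0) + Real.exp (x + S1)) - c * (y ^ 2 + x ^ 2) + Kb
        ≤ (Real.exp (y + S0) * w0 + Real.exp (x0 + S1) * w1)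
          / (Real.exp (y + S0) + Real.exp (x0 + S1)) - c * (y ^ 2 + x0 ^ 2) + Kb) :
    Real.exp (x0 + S1) * Real.exp (y + S0) * (w1 - w0)
      / (Real.exp (x0 + S1) + Real.exp (y + S0)) ^ 2 = 2 * c * x0 := by
  apply foc_scalar S1 (Real.exp (y + S0)) w1 w0 c (Kb - c * y ^ 2) x0 (Real.exp_pos _)
  have e1 : ∀ x : ℝ,
      (Real.exp (x + S1) * w1 + Real.exp (y + S0) * w0)
          / (Real.exp (x + S1) + Real.exp (y + S0)) - c * x ^ 2 + (Kb - c * y ^ 2)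
      = (Real.exp (y + S0) * w0 + Real.exp (x + S1) * w1)
          / (Real.exp (y + S0) + Real.exp (x + S1)) - c * (y ^ 2 + x ^ 2) + Kb := by
    intro x
    rw [add_comm (Real.exp (x + S1) * w1) (Real.exp (y + S0) * w0),
      add_comm (Real.exp (x + S1)) (Real.exp (y + S0))]
    ring
  intro x
  rw [e1 x, e1 x0]
  exact hmax x

lemma util_formula {n : ℕ} (c : ℝ) (v a : Fin n → Fin 2 → ℝ) (i : Fin n) (b : Fin 2 → ℝ) :
    qtmUtil c v (Function.update a i b) i =
      (Real.exp (b 0 + ∑ j ∈ univ.erase i, a j 0) * v i 0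
        + Real.exp (b 1 + ∑ j ∈ univ.erase i, a j 1) * v i 1)
        / (Real.exp (b 0 + ∑ j ∈ univ.erase i, a j 0)
            + Real.exp (b 1 + ∑ j ∈ univ.erase i, a j 1))
      - c * ((b 0) ^ 2 + (b 1) ^ 2)
      + (c / ((n : ℝ) - 1)) * ∑ j ∈ univ.erase i, ((a j 0) ^ 2 + (a j 1) ^ 2) := by
  have hsum : ∀ k : Fin 2, (∑ j, Function.update a i b j k)
      = b k + ∑ j ∈ univ.erase i, a j k := by
    intro k
    have h : ∀ j : Fin n, Function.update a i b j k
        = Function.update (fun j => a j k) i (b k) j := by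
      intro j; rcases eq_or_ne j i with h | h
      · subst h; simp
      · simp [h]
    simp_rw [h]
    rw [Finset.sum_update_of_mem (mem_univ i), Finset.sdiff_singleton_eq_erase]
  have herase : ∑ j ∈ univ.erase i, ∑ k, (Function.update a i b j k) ^ 2
      = ∑ j ∈ univ.erase i, ((a j 0) ^ 2 + (a j 1) ^ 2) := by
    refine Finset.sum_congr rfl fun j hj => ?_
    have hji : j ≠ i := (Finset.mem_erase.mp hj).1
    simp [Fin.sum_univ_two, Function.update_of_ne hji]
  have hself : ∑ k, (Function.update a i b i k) ^ 2 = (b 0) ^ 2 + (b 1) ^ 2 := by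
    simp [Fin.sum_univ_two]
  unfold qtmUtil softmax
  rw [herase, hself]
  rw [Fin.sum_univ_two]
  simp only [Fin.sum_univ_two, hsum]
  have hne : Real.exp (b 0 + ∑ j ∈ univ.erase i, a j 0)
      + Real.exp (b 1 + ∑ j ∈ univ.erase i, a j 1) ≠ 0 := by positivity
  field_simp

theorem stmt10 (n : ℕ) (hn : 2 ≤ n)
    (c : ℝ) (hc : 0 < c)
    (v : Fin n → Fin 2 → ℝ) (hv : ∀ i k, 0 ≤ v i k)
    (hV : ∑ i, v i 0 ≠ ∑ i, v i 1)
    (a : Fin n → Fin 2 → ℝ) (ha : IsNashQTM c v a) :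
    ∑ i, c * ((a i 0) ^ 2 + (a i 1) ^ 2)
      = 2 * c * (∑ j, a j 0) ^ 2 * (∑ i, (v i 0 - v i 1) ^ 2)
          / ((∑ i, v i 0) - ∑ i, v i 1) ^ 2 := by
  have h2c : (2 * c) ≠ 0 := by positivity
  set A0 : ℝ := ∑ j, a j 0 with hA0def
  set A1 : ℝ := ∑ j, a j 1 with hA1def
  set t : ℝ := Real.exp A0 * Real.exp A1 / ((Real.exp A0 + Real.exp A1) ^ 2 * (2 * c))
    with htdef
  have hden : (Real.exp A0 + Real.exp A1) ^ 2 ≠ 0 := by positivity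
  have ht : t * (2 * c) = Real.exp A0 * Real.exp A1 / (Real.exp A0 + Real.exp A1) ^ 2 := by
    rw [htdef]; field_simp
  -- FOCs for each agent
  have key : ∀ i : Fin n,
      2 * c * (a i 0) = Real.exp A0 * Real.exp A1 * (v i 0 - v i 1)
          / (Real.exp A0 + Real.exp A1) ^ 2
      ∧ 2 * c * (a i 1) = Real.exp A0 * Real.exp A1 * (v i 1 - v i 0)
          / (Real.exp A0 + Real.exp A1) ^ 2 := by
    intro i
    have hS0 : a i 0 + ∑ j ∈ univ.erase i, a j 0 = A0 :=
      Finset.add_sum_erase univ (fun j => a j 0) (mem_univ i)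
    have hS1 : a i 1 + ∑ j ∈ univ.erase i, a j 1 = A1 :=
      Finset.add_sum_erase univ (fun j => a j 1) (mem_univ i)
    have hrhs : qtmUtil c v a i =
        (Real.exp (a i 0 + ∑ j ∈ univ.erase i, a j 0) * v i 0
          + Real.exp (a i 1 + ∑ j ∈ univ.erase i, a j 1) * v i 1)
          / (Real.exp (a i 0 + ∑ j ∈ univ.erase i, a j 0)
              + Real.exp (a i 1 + ∑ j ∈ univ.erase i, a j 1))
        - c * ((a i 0) ^ 2 + (a i 1) ^ 2)
        + (c / ((n : ℝ) - 1)) * ∑ j ∈ univ.erase i, ((a j 0) ^ 2 + (a j 1) ^ 2) := by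
      conv_lhs => rw [← Function.update_eq_self i a]
      exact util_formula c v a i (a i)
    constructor
    · have h0 := foc0 (∑ j ∈ univ.erase i, a j 0) (∑ j ∈ univ.erase i, a j 1)
        (v i 0) (v i 1) c
        ((c / ((n : ℝ) - 1)) * ∑ j ∈ univ.erase i, ((a j 0) ^ 2 + (a j 1) ^ 2))
        (a i 1) (a i 0) ?_
      · rw [hS0, hS1] at h0
        exact h0.symm
      · intro x
        have h := ha i ![x, a i 1]
        rw [util_formula] at h
        simp only [Matrix.cons_val_zero, Matrix.cons_val_one, Matrix.head_cons] at h
        rw [hrhs] at h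
        exact h
    · have h1 := foc1 (∑ j ∈ univ.erase i, a j 0) (∑ j ∈ univ.erase i, a j 1)
        (v i 0) (v i 1) c
        ((c / ((n : ℝ) - 1)) * ∑ j ∈ univ.erase i, ((a j 0) ^ 2 + (a j 1) ^ 2))
        (a i 0) (a i 1) ?_
      · rw [hS0, hS1] at h1
        rw [h1.symm]
        ring
      · intro x
        have h := ha i ![a i 0, x]
        rw [util_formula] at h
        simp only [Matrix.cons_val_zero, Matrix.cons_val_one, Matrix.head_cons] at h
        rw [hrhs] at h
        exact h
  -- closed form for each vote
  have ha0 : ∀ i : Fin n, a i 0 = t * (v i 0 - v i 1) := by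
    intro i
    apply mul_left_cancel₀ h2c
    have h2 : (2 * c) * (t * (v i 0 - v i 1))
        = Real.exp A0 * Real.exp A1 * (v i 0 - v i 1)
            / (Real.exp A0 + Real.exp A1) ^ 2 := by
      rw [show (2 * c) * (t * (v i 0 - v i 1)) = (t * (2 * c)) * (v i 0 - v i 1) from by ring,
        ht]
      ring
    rw [h2, ← (key i).1]
  have ha1 : ∀ i : Fin n, a i 1 = -(t * (v i 0 - v i 1)) := by
    intro i
    apply mul_left_cancel₀ h2c
    have h2 : (2 * c) * (-(t * (v i 0 - v i 1)))
        = Real.exp A0 * Real.exp A1 * (v i 1 - v i 0)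
            / (Real.exp A0 + Real.exp A1) ^ 2 := by
      rw [show (2 * c) * (-(t * (v i 0 - v i 1))) = (t * (2 * c)) * (v i 1 - v i 0) from by ring,
        ht]
      ring
    rw [h2, ← (key i).2]
  -- sum identity
  have hsum0 : A0 = t * ((∑ i, v i 0) - ∑ i, v i 1) := by
    rw [hA0def]
    calc (∑ j, a j 0) = ∑ j, t * (v j 0 - v j 1) := Finset.sum_congr rfl fun j _ => ha0 j
      _ = t * ∑ j, (v j 0 - v j 1) := by rw [Finset.mul_sum]
      _ = t * ((∑ i, v i 0) - ∑ i, v i 1) := by rw [Finset.sum_sub_distrib]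
  have hL : ∑ i, c * ((a i 0) ^ 2 + (a i 1) ^ 2)
      = 2 * c * t ^ 2 * ∑ i, (v i 0 - v i 1) ^ 2 := by
    calc ∑ i, c * ((a i 0) ^ 2 + (a i 1) ^ 2)
        = ∑ i, 2 * c * t ^ 2 * (v i 0 - v i 1) ^ 2 :=
          Finset.sum_congr rfl fun i _ => by rw [ha0 i, ha1 i]; ring
      _ = 2 * c * t ^ 2 * ∑ i, (v i 0 - v i 1) ^ 2 := by rw [Finset.mul_sum]
  have hVne : ((∑ i, v i 0) - ∑ i, v i 1) ≠ 0 := sub_ne_zero.mpr hV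
  rw [hL, hsum0]
  field_simp
end

section
/- Revenue lower bound: in the two-alternative QTM (m = 2) with V_1 > V_2, in any pure-strategy Nash equilibrium the total payment collected satisfies Σ_{i=1}^n c·((a_1^i)^2 + (a_2^i)^2) ≥ (2c/9) · (Σ_{i=1}^n (v_1^i − v_2^i)^2)/(V_1 − V_2)^2 · (max{0, ln((V_1 − V_2)/(8c))})^2. -/
open Real Finset

lemma foc_aux_s11 (s E1 c w0 w1 x0 : ℝ) (hE1 : 0 < E1)
    (hmax : ∀ x : ℝ, exp (x+s)/(exp (x+s)+E1)*w0 + E1/(exp (x+s)+E1)*w1 - c*x^2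
      ≤ exp (x0+s)/(exp (x0+s)+E1)*w0 + E1/(exp (x0+s)+E1)*w1 - c*x0^2) :
    exp (x0+s)*E1/(exp (x0+s)+E1)^2*(w0-w1) - 2*c*x0 = 0 := by
  set g : ℝ → ℝ := fun x => exp (x+s)/(exp (x+s)+E1)*w0 + E1/(exp (x+s)+E1)*w1 - c*x^2 with hg
  have hden : ∀ x : ℝ, exp (x+s)+E1 ≠ 0 := fun x => by positivity
  have hF : HasDerivAt (fun x : ℝ => exp (x+s)) (exp (x0+s)) x0 := by
    simpa using ((hasDerivAt_id x0).add_const s).exp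
  have hD : HasDerivAt (fun x : ℝ => exp (x+s)+E1) (exp (x0+s)) x0 := hF.add_const E1
  have h1 : HasDerivAt (fun x : ℝ => exp (x+s)/(exp (x+s)+E1))
      ((exp (x0+s)*(exp (x0+s)+E1) - exp (x0+s)*exp (x0+s))/(exp (x0+s)+E1)^2) x0 :=
    hF.div hD (hden x0)
  have h2 : HasDerivAt (fun x : ℝ => E1/(exp (x+s)+E1))
      ((0*(exp (x0+s)+E1) - E1*exp (x0+s))/(exp (x0+s)+E1)^2) x0 :=
    (hasDerivAt_const x0 E1).div hD (hden x0)
  have h3 : HasDerivAt (fun x : ℝ => c*x^2) (c*(2*x0)) x0 := by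
    simpa using (hasDerivAt_pow 2 x0).const_mul c
  have hg' : HasDerivAt g
      (((exp (x0+s)*(exp (x0+s)+E1) - exp (x0+s)*exp (x0+s))/(exp (x0+s)+E1)^2)*w0
        + ((0*(exp (x0+s)+E1) - E1*exp (x0+s))/(exp (x0+s)+E1)^2)*w1 - c*(2*x0)) x0 :=
    ((h1.mul_const w0).add (h2.mul_const w1)).sub h3
  have hloc : IsLocalMax g x0 := Filter.Eventually.of_forall hmax
  have hzero := hloc.hasDerivAt_eq_zero hg'
  have hne : (exp (x0+s)+E1)^2 ≠ 0 := pow_ne_zero _ (hden x0)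
  field_simp at hzero ⊢
  nlinarith [hzero]

set_option maxHeartbeats 1000000

theorem stmt11 (n : ℕ) (hn : 2 ≤ n)
    (c : ℝ) (hc : 0 < c)
    (v : Fin n → Fin 2 → ℝ) (hv : ∀ i k, 0 ≤ v i k)
    (hV : ∑ i, v i 1 < ∑ i, v i 0)
    (a : Fin n → Fin 2 → ℝ) (ha : IsNashQTM c v a) :
    2 * c / 9 * ((∑ i, (v i 0 - v i 1) ^ 2) / ((∑ i, v i 0) - ∑ i, v i 1) ^ 2)
        * (max 0 (Real.log (((∑ i, v i 0) - ∑ i, v i 1) / (8 * c)))) ^ 2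
      ≤ ∑ i, c * ((a i 0) ^ 2 + (a i 1) ^ 2) := by
  have hsum : ∀ (i : Fin n) (b : Fin 2 → ℝ) (k : Fin 2),
      ∑ j, Function.update a i b j k = b k + ∑ j ∈ Finset.univ.erase i, a j k := by
    intro i b k
    rw [← Finset.add_sum_erase _ _ (Finset.mem_univ i), Function.update_self]
    congr 1
    exact Finset.sum_congr rfl fun j hj => by
      rw [Function.update_of_ne (Finset.ne_of_mem_erase hj)]
  have hq : ∀ (i : Fin n) (b : Fin 2 → ℝ),
      qtmUtil c v (Function.update a i b) i =
        exp (b 0 + ∑ j ∈ Finset.univ.erase i, a j 0)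
          / (exp (b 0 + ∑ j ∈ Finset.univ.erase i, a j 0)
            + exp (b 1 + ∑ j ∈ Finset.univ.erase i, a j 1)) * v i 0
        + exp (b 1 + ∑ j ∈ Finset.univ.erase i, a j 1)
          / (exp (b 0 + ∑ j ∈ Finset.univ.erase i, a j 0)
            + exp (b 1 + ∑ j ∈ Finset.univ.erase i, a j 1)) * v i 1
        - c * ((b 0)^2 + (b 1)^2)
        + (c/((n:ℝ)-1)) * ∑ j ∈ Finset.univ.erase i, ((a j 0)^2 + (a j 1)^2) := by
    intro i b
    have herase : ∑ j ∈ Finset.univ.erase i, ∑ k, (Function.update a i b j k)^2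
        = ∑ j ∈ Finset.univ.erase i, ((a j 0)^2 + (a j 1)^2) := by
      refine Finset.sum_congr rfl fun j hj => ?_
      rw [Function.update_of_ne (Finset.ne_of_mem_erase hj), Fin.sum_univ_two]
    unfold qtmUtil softmax
    rw [herase]
    simp only [Fin.sum_univ_two, hsum, Function.update_self]
    try ring
  -- notation
  set A0 : ℝ := ∑ j, a j 0 with hA0def
  set A1 : ℝ := ∑ j, a j 1 with hA1def
  set P : ℝ := exp A0 * exp A1 / (exp A0 + exp A1)^2 with hPdef
  have hP : 0 < P := by positivity
  -- first order conditions
  have foc : ∀ i : Fin n, 2*c*(a i 0) = P * (v i 0 - v i 1)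
      ∧ 2*c*(a i 1) = -(P * (v i 0 - v i 1)) := by
    intro i
    have hqa := hq i (a i)
    rw [Function.update_eq_self] at hqa
    have hA0i : a i 0 + ∑ j ∈ Finset.univ.erase i, a j 0 = A0 := by
      rw [hA0def, ← Finset.add_sum_erase _ _ (Finset.mem_univ i)]
    have hA1i : a i 1 + ∑ j ∈ Finset.univ.erase i, a j 1 = A1 := by
      rw [hA1def, ← Finset.add_sum_erase _ _ (Finset.mem_univ i)]
    constructor
    · have h0 := foc_aux_s11 (∑ j ∈ Finset.univ.erase i, a j 0)
        (exp (a i 1 + ∑ j ∈ Finset.univ.erase i, a j 1)) c (v i 0) (v i 1) (a i 0)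
        (exp_pos _) ?_
      · rw [hA0i, hA1i] at h0
        rw [hPdef]; linear_combination -h0
      · intro x
        have h := ha i (Function.update (a i) 0 x)
        rw [hq i (Function.update (a i) 0 x), hqa] at h
        simp only [Function.update_self,
          Function.update_of_ne (show (1:Fin 2) ≠ 0 by decide)] at h
        linarith [h]
    · have h1 := foc_aux_s11 (∑ j ∈ Finset.univ.erase i, a j 1)
        (exp (a i 0 + ∑ j ∈ Finset.univ.erase i, a j 0)) c (v i 1) (v i 0) (a i 1)
        (exp_pos _) ?_
      · rw [hA0i, hA1i] at h1
        rw [hPdef]; linear_combination -h1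
      · intro x
        have h := ha i (Function.update (a i) 1 x)
        rw [hq i (Function.update (a i) 1 x), hqa] at h
        simp only [Function.update_self,
          Function.update_of_ne (show (0:Fin 2) ≠ 1 by decide)] at h
        rw [show exp (x + ∑ j ∈ Finset.univ.erase i, a j 1)
              + exp (a i 0 + ∑ j ∈ Finset.univ.erase i, a j 0)
            = exp (a i 0 + ∑ j ∈ Finset.univ.erase i, a j 0)
              + exp (x + ∑ j ∈ Finset.univ.erase i, a j 1) from add_comm _ _,
          show exp (a i 1 + ∑ j ∈ Finset.univ.erase i, a j 1)
              + exp (a i 0 + ∑ j ∈ Finset.univ.erase i, a j 0)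
            = exp (a i 0 + ∑ j ∈ Finset.univ.erase i, a j 0)
              + exp (a i 1 + ∑ j ∈ Finset.univ.erase i, a j 1) from add_comm _ _]
        linarith [h]
  set D : ℝ := (∑ i, v i 0) - ∑ i, v i 1 with hDdef
  have hD : 0 < D := sub_pos.mpr hV
  set S : ℝ := ∑ i, (v i 0 - v i 1)^2 with hSdef
  have hS : 0 ≤ S := Finset.sum_nonneg fun i _ => sq_nonneg _
  set L : ℝ := max 0 (Real.log (D / (8*c))) with hLdef
  have hL : 0 ≤ L := le_max_left _ _
  -- sum the FOCs
  have hsum0 : 2*c*A0 = P * D := by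
    rw [hA0def, Finset.mul_sum, hDdef, ← Finset.sum_sub_distrib, Finset.mul_sum]
    exact Finset.sum_congr rfl fun i _ => (foc i).1
  have hsum1 : 2*c*A1 = -(P * D) := by
    calc 2*c*A1 = ∑ i, 2*c*(a i 1) := by rw [hA1def, Finset.mul_sum]
      _ = ∑ i, -(P * (v i 0 - v i 1)) := Finset.sum_congr rfl fun i _ => (foc i).2
      _ = -(P * D) := by
          rw [Finset.sum_neg_distrib, hDdef, ← Finset.sum_sub_distrib, Finset.mul_sum]
  -- revenue identity
  have hrev : ∑ i, c * ((a i 0)^2 + (a i 1)^2) = P^2/(2*c) * S := by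
    rw [hSdef, Finset.mul_sum]
    refine Finset.sum_congr rfl fun i _ => ?_
    have e0 := (foc i).1
    have e1 := (foc i).2
    have ha0 : a i 0 = P * (v i 0 - v i 1)/(2*c) := by
      field_simp; linarith [e0]
    have ha1 : a i 1 = -(P * (v i 0 - v i 1))/(2*c) := by
      field_simp; linarith [e1]
    rw [ha0, ha1]
    field_simp
    ring
  -- equilibrium equation
  have ht : c * (A0 - A1) = P * D := by linarith [hsum0, hsum1]
  have htnn : 0 ≤ A0 - A1 := by nlinarith [mul_pos hP hD]
  -- exponential fixed point bound
  have hkeyt : D/4 ≤ c * ((A0-A1) * exp (A0-A1)) := by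
    have h1 : exp A1 / (4*exp A0) ≤ P := by
      rw [hPdef, div_le_div_iff₀ (by positivity) (by positivity)]
      have hxy : exp A1 ≤ exp A0 := exp_le_exp.mpr (by linarith)
      nlinarith [exp_pos A0, exp_pos A1, hxy,
        mul_nonneg (mul_nonneg (exp_pos A1).le
          (by positivity : (0:ℝ) ≤ 3*exp A0 + exp A1)) (sub_nonneg.mpr hxy)]
    have h2 : exp A1/(4*exp A0) * D ≤ c*(A0-A1) := by
      rw [ht]; exact mul_le_mul_of_nonneg_right h1 hD.le
    have h3 : exp (A0-A1) * (exp A1/(4*exp A0)) = 1/4 := by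
      rw [Real.exp_sub]
      field_simp
    have h4 := mul_le_mul_of_nonneg_left h2 (exp_pos (A0-A1)).le
    calc D/4 = exp (A0-A1) * (exp A1/(4*exp A0) * D) := by rw [← mul_assoc, h3]; ring
      _ ≤ exp (A0-A1) * (c*(A0-A1)) := h4
      _ = c * ((A0-A1)*exp (A0-A1)) := by ring
  -- key inequality : (2/3) L ≤ A0 - A1
  have hkey : (2/3) * L ≤ A0 - A1 := by
    rcases le_or_gt (Real.log (D/(8*c))) 0 with hneg | hpos
    · rw [hLdef, max_eq_left hneg]
      simpa using htnn
    · rw [hLdef, max_eq_right hpos.le]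
      set s := Real.log (D/(8*c)) with hs
      by_contra hcon
      push_neg at hcon
      have hes : exp s = D/(8*c) := Real.exp_log (by positivity)
      have hmono : exp (A0-A1) ≤ exp ((2:ℝ)/3*s) := exp_le_exp.mpr hcon.le
      have hb1 : (A0-A1) * exp (A0-A1) ≤ (2:ℝ)/3*s*exp ((2:ℝ)/3*s) :=
        le_trans (mul_le_mul_of_nonneg_left hmono htnn)
          (mul_le_mul_of_nonneg_right hcon.le (exp_pos _).le)
      have hsplit : exp s = exp (s/3) * exp ((2:ℝ)/3*s) := by
        rw [← Real.exp_add]; ring_nf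
      have hexp3 : s/3 + 1 ≤ exp (s/3) := Real.add_one_le_exp _
      have hD4 : D/4 = 2*c*exp s := by rw [hes]; field_simp; ring
      have h5 : 2*exp s ≤ (A0-A1) * exp (A0-A1) := by
        have h6 := hkeyt
        rw [hD4] at h6
        nlinarith [h6, hc]
      have h7 : 2*exp s ≤ (2:ℝ)/3*s*exp ((2:ℝ)/3*s) := le_trans h5 hb1
      have hmul3 := mul_le_mul_of_nonneg_right hexp3 (exp_pos ((2:ℝ)/3*s)).le
      linarith [h7, hmul3, hsplit, exp_pos ((2:ℝ)/3*s)]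
  -- finish
  rw [hrev]
  have hl : 0 ≤ 2*c/3*L := mul_nonneg (by positivity) hL
  have hle : 2*c/3*L ≤ P*D := by nlinarith [hkey, hc, ht]
  have hsq : (2*c/3*L)^2 ≤ (P*D)^2 := pow_le_pow_left₀ hl hle 2
  have hmul := mul_le_mul_of_nonneg_right hsq hS
  have hpos2 : (0:ℝ) < 2*c*D^2 := by positivity
  have eL : 2*c/9 * (S/D^2) * L^2 = ((2*c/3*L)^2*S)/(2*c*D^2) := by
    field_simp
    ring
  have eR : P^2/(2*c)*S = ((P*D)^2*S)/(2*c*D^2) := by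
    field_simp
  rw [eL, eR]
  exact (div_le_div_iff_of_pos_right hpos2).mpr hmul
end

section
/- Revenue upper bound: in the two-alternative QTM (m = 2), suppose V_1 − V_2 ≥ 8·c·e^3 (which guarantees the equilibrium aggregate total satisfies A_1 ≥ 1). Then in any pure-strategy Nash equilibrium the total payment collected satisfies Σ_{i=1}^n c·((a_1^i)^2 + (a_2^i)^2) ≤ (c/2) · (Σ_{i=1}^n (v_1^i − v_2^i)^2)/(V_1 − V_2)^2 · (ln((V_1 − V_2)/(2c)))^2. -/
open Real Finset

/-- First-order condition for a one-dimensional maximization of the QTM-type payoff. -/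
lemma foc_aux_s12 (c v0 v1 s0 s1 u C t0 : ℝ)
    (hmax : ∀ t : ℝ,
      (Real.exp (t + s0) * v0 + Real.exp (u + s1) * v1) /
          (Real.exp (t + s0) + Real.exp (u + s1)) - c * (t ^ 2 + u ^ 2) + C ≤
      (Real.exp (t0 + s0) * v0 + Real.exp (u + s1) * v1) /
          (Real.exp (t0 + s0) + Real.exp (u + s1)) - c * (t0 ^ 2 + u ^ 2) + C) :
    Real.exp (t0 + s0) * Real.exp (u + s1) /
        (Real.exp (t0 + s0) + Real.exp (u + s1)) ^ 2 * (v0 - v1) = 2 * c * t0 := by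
  set K : ℝ := Real.exp (u + s1) with hK
  have hKpos : 0 < K := Real.exp_pos _
  have hexp : HasDerivAt (fun t : ℝ => Real.exp (t + s0)) (Real.exp (t0 + s0)) t0 := by
    simpa using (((hasDerivAt_id t0).add_const s0).exp)
  have hnum : HasDerivAt (fun t : ℝ => Real.exp (t + s0) * v0 + K * v1)
      (Real.exp (t0 + s0) * v0) t0 := (hexp.mul_const v0).add_const (K * v1)
  have hden : HasDerivAt (fun t : ℝ => Real.exp (t + s0) + K)
      (Real.exp (t0 + s0)) t0 := hexp.add_const K
  have hden0 : Real.exp (t0 + s0) + K ≠ 0 := by positivity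
  have hdiv := hnum.div hden hden0
  have hquad : HasDerivAt (fun t : ℝ => c * (t ^ 2 + u ^ 2)) (c * (2 * t0)) t0 := by
    have := ((hasDerivAt_pow 2 t0).add_const (u ^ 2)).const_mul c
    simpa using this
  have hF := (hdiv.sub hquad).add_const C
  have hzero := (IsLocalMax.hasDerivAt_eq_zero
    (Filter.Eventually.of_forall hmax) hF)
  have : (Real.exp (t0 + s0) * v0 * (Real.exp (t0 + s0) + K) -
      (Real.exp (t0 + s0) * v0 + K * v1) * Real.exp (t0 + s0)) /
      (Real.exp (t0 + s0) + K) ^ 2 - c * (2 * t0) = 0 := hzero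
  have hE : (0:ℝ) < Real.exp (t0 + s0) := Real.exp_pos _
  field_simp at this ⊢
  nlinarith [this, sq_nonneg (Real.exp (t0 + s0) + K)]

/-- Closed form of the QTM utility (two alternatives) as a function of agent `i`'s vote. -/
lemma qtm_form {n : ℕ} (c : ℝ) (v a : Fin n → Fin 2 → ℝ) (i : Fin n) (b : Fin 2 → ℝ) :
    qtmUtil c v (Function.update a i b) i =
      (Real.exp (b 0 + ∑ j ∈ Finset.univ.erase i, a j 0) * v i 0 +
       Real.exp (b 1 + ∑ j ∈ Finset.univ.erase i, a j 1) * v i 1) /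
      (Real.exp (b 0 + ∑ j ∈ Finset.univ.erase i, a j 0) +
       Real.exp (b 1 + ∑ j ∈ Finset.univ.erase i, a j 1))
      - c * ((b 0) ^ 2 + (b 1) ^ 2)
      + c / ((n : ℝ) - 1) * ∑ j ∈ Finset.univ.erase i, ∑ k, (a j k) ^ 2 := by
  have hsum : ∀ k : Fin 2, (∑ j, Function.update a i b j k)
      = b k + ∑ j ∈ Finset.univ.erase i, a j k := by
    intro k
    rw [← Finset.add_sum_erase _ (fun j => Function.update a i b j k) (Finset.mem_univ i)]
    simp only [Function.update_self]
    congr 1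
    exact Finset.sum_congr rfl fun j hj => by
      rw [Function.update_of_ne (Finset.ne_of_mem_erase hj)]
  have herase : ∑ j ∈ Finset.univ.erase i,
        ((Function.update a i b j 0) ^ 2 + (Function.update a i b j 1) ^ 2)
      = ∑ j ∈ Finset.univ.erase i, ((a j 0) ^ 2 + (a j 1) ^ 2) :=
    Finset.sum_congr rfl fun j hj => by
      rw [Function.update_of_ne (Finset.ne_of_mem_erase hj)]
  simp only [qtmUtil, softmax, hsum, Fin.sum_univ_two, Function.update_self]
  rw [herase, div_mul_eq_mul_div, div_mul_eq_mul_div, ← add_div]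

set_option maxHeartbeats 2000000

theorem stmt12 (n : ℕ) (hn : 2 ≤ n)
    (c : ℝ) (hc : 0 < c)
    (v : Fin n → Fin 2 → ℝ) (hv : ∀ i k, 0 ≤ v i k)
    (hV : 8 * c * Real.exp 3 ≤ (∑ i, v i 0) - ∑ i, v i 1)
    (a : Fin n → Fin 2 → ℝ) (ha : IsNashQTM c v a) :
    ∑ i, c * ((a i 0) ^ 2 + (a i 1) ^ 2)
      ≤ c / 2 * ((∑ i, (v i 0 - v i 1) ^ 2) / ((∑ i, v i 0) - ∑ i, v i 1) ^ 2)
          * (Real.log (((∑ i, v i 0) - ∑ i, v i 1) / (2 * c))) ^ 2 := by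
  set D : ℝ := (∑ i, v i 0) - ∑ i, v i 1 with hD_def
  have hD : 0 < D := lt_of_lt_of_le (by positivity) hV
  set A0 : ℝ := ∑ j, a j 0 with hA0_def
  set A1 : ℝ := ∑ j, a j 1 with hA1_def
  set W : ℝ := Real.exp A0 * Real.exp A1 / (Real.exp A0 + Real.exp A1) ^ 2 with hW_def
  -- first-order conditions
  have hadd0 : ∀ i : Fin n, a i 0 + ∑ j ∈ Finset.univ.erase i, a j 0 = A0 := fun i =>
    Finset.add_sum_erase _ (fun j => a j 0) (Finset.mem_univ i)
  have hadd1 : ∀ i : Fin n, a i 1 + ∑ j ∈ Finset.univ.erase i, a j 1 = A1 := fun i =>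
    Finset.add_sum_erase _ (fun j => a j 1) (Finset.mem_univ i)
  have hqa : ∀ i : Fin n, qtmUtil c v a i =
      (Real.exp A0 * v i 0 + Real.exp A1 * v i 1) / (Real.exp A0 + Real.exp A1)
      - c * ((a i 0) ^ 2 + (a i 1) ^ 2)
      + c / ((n : ℝ) - 1) * ∑ j ∈ Finset.univ.erase i, ∑ k, (a j k) ^ 2 := by
    intro i
    conv_lhs => rw [← Function.update_eq_self i a]
    rw [qtm_form, hadd0, hadd1]
  have h0 : ∀ i : Fin n, W * (v i 0 - v i 1) = 2 * c * a i 0 := by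
    intro i
    have hmax : ∀ t : ℝ,
        (Real.exp (t + ∑ j ∈ Finset.univ.erase i, a j 0) * v i 0 +
         Real.exp (a i 1 + ∑ j ∈ Finset.univ.erase i, a j 1) * v i 1) /
        (Real.exp (t + ∑ j ∈ Finset.univ.erase i, a j 0) +
         Real.exp (a i 1 + ∑ j ∈ Finset.univ.erase i, a j 1))
        - c * (t ^ 2 + (a i 1) ^ 2)
        + c / ((n : ℝ) - 1) * ∑ j ∈ Finset.univ.erase i, ∑ k, (a j k) ^ 2 ≤
        (Real.exp (a i 0 + ∑ j ∈ Finset.univ.erase i, a j 0) * v i 0 +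
         Real.exp (a i 1 + ∑ j ∈ Finset.univ.erase i, a j 1) * v i 1) /
        (Real.exp (a i 0 + ∑ j ∈ Finset.univ.erase i, a j 0) +
         Real.exp (a i 1 + ∑ j ∈ Finset.univ.erase i, a j 1))
        - c * ((a i 0) ^ 2 + (a i 1) ^ 2)
        + c / ((n : ℝ) - 1) * ∑ j ∈ Finset.univ.erase i, ∑ k, (a j k) ^ 2 := by
      intro t
      have h := ha i ![t, a i 1]
      rw [qtm_form, hqa i] at h
      simp only [Matrix.cons_val_zero, Matrix.cons_val_one, Matrix.head_cons] at h
      rw [← hadd0 i, ← hadd1 i] at h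
      exact h
    have := foc_aux_s12 c (v i 0) (v i 1) _ _ (a i 1) _ (a i 0) hmax
    rwa [hadd0, hadd1] at this
  have h1 : ∀ i : Fin n, W * (v i 1 - v i 0) = 2 * c * a i 1 := by
    intro i
    have hmax : ∀ t : ℝ,
        (Real.exp (t + ∑ j ∈ Finset.univ.erase i, a j 1) * v i 1 +
         Real.exp (a i 0 + ∑ j ∈ Finset.univ.erase i, a j 0) * v i 0) /
        (Real.exp (t + ∑ j ∈ Finset.univ.erase i, a j 1) +
         Real.exp (a i 0 + ∑ j ∈ Finset.univ.erase i, a j 0))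
        - c * (t ^ 2 + (a i 0) ^ 2)
        + c / ((n : ℝ) - 1) * ∑ j ∈ Finset.univ.erase i, ∑ k, (a j k) ^ 2 ≤
        (Real.exp (a i 1 + ∑ j ∈ Finset.univ.erase i, a j 1) * v i 1 +
         Real.exp (a i 0 + ∑ j ∈ Finset.univ.erase i, a j 0) * v i 0) /
        (Real.exp (a i 1 + ∑ j ∈ Finset.univ.erase i, a j 1) +
         Real.exp (a i 0 + ∑ j ∈ Finset.univ.erase i, a j 0))
        - c * ((a i 1) ^ 2 + (a i 0) ^ 2)
        + c / ((n : ℝ) - 1) * ∑ j ∈ Finset.univ.erase i, ∑ k, (a j k) ^ 2 := by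
      intro t
      have h := ha i ![a i 0, t]
      rw [qtm_form, hqa i] at h
      simp only [Matrix.cons_val_zero, Matrix.cons_val_one, Matrix.head_cons] at h
      rw [← hadd0 i, ← hadd1 i] at h
      rw [add_comm (Real.exp (t + ∑ j ∈ Finset.univ.erase i, a j 1) * v i 1),
        add_comm (Real.exp (t + ∑ j ∈ Finset.univ.erase i, a j 1)),
        add_comm (t ^ 2),
        add_comm (Real.exp (a i 1 + ∑ j ∈ Finset.univ.erase i, a j 1) * v i 1),
        add_comm (Real.exp (a i 1 + ∑ j ∈ Finset.univ.erase i, a j 1)),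
        add_comm ((a i 1) ^ 2)]
      exact h
    have := foc_aux_s12 c (v i 1) (v i 0) _ _ (a i 0) _ (a i 1) hmax
    rw [hadd0, hadd1] at this
    rw [show Real.exp A1 * Real.exp A0 = Real.exp A0 * Real.exp A1 from mul_comm _ _,
      show Real.exp A1 + Real.exp A0 = Real.exp A0 + Real.exp A1 from add_comm _ _] at this
    exact this
  -- a i 1 = - a i 0
  have hai1 : ∀ i : Fin n, a i 1 = - a i 0 := by
    intro i
    have h2c : (2:ℝ) * c ≠ 0 := by positivity
    have hkey : 2 * c * a i 1 = 2 * c * (-(a i 0)) := by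
      linear_combination (-1 : ℝ) * h0 i - h1 i
    exact mul_left_cancel₀ h2c hkey
  -- aggregate FOC
  have hsumA : W * D = 2 * c * A0 := by
    have h := Finset.sum_congr rfl (fun i (_ : i ∈ Finset.univ) => h0 i)
    rw [← Finset.mul_sum, ← Finset.mul_sum, Finset.sum_sub_distrib] at h
    rw [hD_def, hA0_def]
    exact h
  have hA1eq : A1 = -A0 := by
    rw [hA1_def, hA0_def, ← Finset.sum_neg_distrib]
    exact Finset.sum_congr rfl fun i _ => hai1 i
  set x : ℝ := A0 with hx_def
  clear_value D A0 A1 W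
  have hWval : W = 1 / (Real.exp x + Real.exp (-x)) ^ 2 := by
    rw [hW_def, hA1eq]
    rw [← Real.exp_add, add_neg_cancel, Real.exp_zero]
  have hEpos : 0 < Real.exp x + Real.exp (-x) := by positivity
  have hEne : Real.exp x + Real.exp (-x) ≠ 0 := ne_of_gt hEpos
  have key : D = 2 * c * x * (Real.exp x + Real.exp (-x)) ^ 2 := by
    rw [hWval] at hsumA
    field_simp at hsumA
    linear_combination hsumA
  have hxpos : 0 < x := by
    have h2cx : 0 < 2 * c * x := by
      rw [← hsumA, hWval]
      exact mul_pos (by positivity) hD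
    nlinarith [h2cx, hc]
  have he3 : Real.exp 3 = Real.exp 1 * Real.exp 1 * Real.exp 1 := by
    rw [← Real.exp_add, ← Real.exp_add]; norm_num
  have hx1 : 1 ≤ x := by
    by_contra hcon
    push_neg at hcon
    have hex : Real.exp x < Real.exp 1 := Real.exp_lt_exp.mpr hcon
    have hex2 : Real.exp (-x) < 1 := by
      rw [← Real.exp_zero]
      exact Real.exp_lt_exp.mpr (by linarith)
    have hE1 : Real.exp x + Real.exp (-x) < Real.exp 1 + 1 := by linarith
    have hE2 : (Real.exp x + Real.exp (-x)) ^ 2 < (Real.exp 1 + 1) ^ 2 := by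
      nlinarith [hEpos]
    have hxe : x * (Real.exp x + Real.exp (-x)) ^ 2 < (Real.exp 1 + 1) ^ 2 := by
      nlinarith [sq_nonneg (Real.exp x + Real.exp (-x)), hxpos]
    have hlt : D < 2 * c * (Real.exp 1 + 1) ^ 2 := by
      calc D = 2 * c * (x * (Real.exp x + Real.exp (-x)) ^ 2) := by rw [key]; ring
        _ < 2 * c * (Real.exp 1 + 1) ^ 2 :=
          mul_lt_mul_of_pos_left hxe (by positivity)
    have hp : (Real.exp 1 + 1) ^ 2 < 4 * (Real.exp 1 * Real.exp 1 * Real.exp 1) := by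
      nlinarith [Real.exp_one_gt_d9]
    have : 2 * c * (Real.exp 1 + 1) ^ 2 < 8 * c * Real.exp 3 := by
      rw [he3]
      nlinarith [hp, hc]
    linarith [hV]
  have hx2 : 2 * c * Real.exp (2 * x) ≤ D := by
    have h2x : Real.exp (2 * x) = Real.exp x * Real.exp x := by
      rw [← Real.exp_add]; ring_nf
    have hb1 : Real.exp x * Real.exp x ≤ (Real.exp x + Real.exp (-x)) ^ 2 := by
      nlinarith [Real.exp_pos x, Real.exp_pos (-x)]
    have hb2 : (Real.exp x + Real.exp (-x)) ^ 2 ≤ x * (Real.exp x + Real.exp (-x)) ^ 2 := by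
      nlinarith [sq_nonneg (Real.exp x + Real.exp (-x)), hx1]
    calc 2 * c * Real.exp (2 * x) = 2 * c * (Real.exp x * Real.exp x) := by rw [h2x]
      _ ≤ 2 * c * (x * (Real.exp x + Real.exp (-x)) ^ 2) :=
        mul_le_mul_of_nonneg_left (hb1.trans hb2) (by positivity)
      _ = 2 * c * x * (Real.exp x + Real.exp (-x)) ^ 2 := by ring
      _ = D := key.symm
  have hlog : 2 * x ≤ Real.log (D / (2 * c)) := by
    rw [Real.le_log_iff_exp_le (div_pos hD (by positivity))]
    rw [le_div_iff₀ (by positivity)]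
    linarith [hx2]
  have hL0 : (0:ℝ) ≤ Real.log (D / (2 * c)) := le_trans (by linarith) hlog
  -- closed form for each vote
  have hai0 : ∀ i : Fin n, a i 0 = x * (v i 0 - v i 1) / D := by
    intro i
    rw [eq_div_iff hD.ne']
    have h2c : (2:ℝ) * c ≠ 0 := by positivity
    have hkey : 2 * c * (a i 0 * D) = 2 * c * (x * (v i 0 - v i 1)) := by
      linear_combination (-D) * h0 i + (v i 0 - v i 1) * hsumA
    exact mul_left_cancel₀ h2c hkey
  have hsum_eq : ∑ i, c * ((a i 0) ^ 2 + (a i 1) ^ 2)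
      = 2 * c * x ^ 2 / D ^ 2 * ∑ i, (v i 0 - v i 1) ^ 2 := by
    rw [Finset.mul_sum]
    refine Finset.sum_congr rfl fun i _ => ?_
    rw [hai1 i, hai0 i]
    field_simp
    ring
  rw [hsum_eq]
  have hS : (0:ℝ) ≤ ∑ i, (v i 0 - v i 1) ^ 2 := by positivity
  have h2x : (2 * x) ^ 2 ≤ (Real.log (D / (2 * c))) ^ 2 := by nlinarith
  calc 2 * c * x ^ 2 / D ^ 2 * ∑ i, (v i 0 - v i 1) ^ 2
      = c / 2 * ((∑ i, (v i 0 - v i 1) ^ 2) / D ^ 2) * (2 * x) ^ 2 := by ring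
    _ ≤ c / 2 * ((∑ i, (v i 0 - v i 1) ^ 2) / D ^ 2) * (Real.log (D / (2 * c))) ^ 2 := by
        apply mul_le_mul_of_nonneg_left h2x (by positivity)
end

section
/- Price of Anarchy with m alternatives: in the QTM with m ≥ 2 alternatives, if c ≥ (1/2)·max_{i,k} v_k^i, then in any pure-strategy Nash equilibrium the expected welfare satisfies Σ_{k=1}^m p_k V_k ≥ (max_k V_k)/m. -/
open Real Finset

set_option maxHeartbeats 1000000 in
lemma qtm_foc {n m : ℕ} (c : ℝ) (v : Fin n → Fin m → ℝ)
    (a : Fin n → Fin m → ℝ) (ha : IsNashQTM c v a) (i : Fin n) (k : Fin m) :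
    2 * c * a i k
      = softmax (fun k => ∑ j, a j k) k *
        (v i k - ∑ l, softmax (fun k => ∑ j, a j k) l * v i l) := by
  set A : Fin m → ℝ := fun k => ∑ j, a j k with hA
  set E : ℝ := ∑ l ∈ univ.erase k, Real.exp (A l) with hE
  set D : ℝ := ∑ l ∈ univ.erase k, Real.exp (A l) * v i l with hD
  set R : ℝ := ∑ l ∈ univ.erase k, (a i l) ^ 2 with hR
  set C : ℝ := (c / ((n : ℝ) - 1)) * ∑ j ∈ univ.erase i, ∑ l, (a j l) ^ 2 with hC
  set κ : ℝ := Real.exp (A k - a i k) with hκ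
  have hκpos : 0 < κ := Real.exp_pos _
  have hEnn : 0 ≤ E := Finset.sum_nonneg fun l _ => (Real.exp_pos _).le
  have hden : ∀ t : ℝ, 0 < E + κ * Real.exp t := fun t =>
    add_pos_of_nonneg_of_pos hEnn (by positivity)
  set ψ : ℝ → ℝ := fun t =>
    (D + κ * Real.exp t * v i k) / (E + κ * Real.exp t) - c * (R + t ^ 2) + C with hψ
  -- row-sum identity
  have hrow : ∀ (b : Fin m → ℝ) (l : Fin m),
      (∑ j, Function.update a i b j l) = A l - a i l + b l := by
    intro b l
    have h1 : ∀ j, (Function.update a i b j) l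
        = Function.update (fun j' => a j' l) i (b l) j := by
      intro j
      by_cases h : j = i
      · subst h; simp
      · simp [Function.update_of_ne h]
    rw [Finset.sum_congr rfl fun j _ => h1 j,
      Finset.sum_update_of_mem (Finset.mem_univ i)]
    have h2 : ∑ j ∈ univ \ {i}, a j l = A l - a i l := by
      rw [Finset.sdiff_singleton_eq_erase]
      have := Finset.sum_erase_add univ (fun j => a j l) (Finset.mem_univ i)
      simp only [hA]
      linarith [this]
    rw [h2]; ring
  -- qtmUtil along the one-dimensional deviation equals ψ
  have hqtm : ∀ t : ℝ,
      qtmUtil c v (Function.update a i (Function.update (a i) k t)) i = ψ t := by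
    intro t
    set b : Fin m → ℝ := Function.update (a i) k t with hb
    have hbk : b k = t := by simp [hb]
    have hbl : ∀ l, l ≠ k → b l = a i l := by
      intro l hl; simp [hb, Function.update_of_ne hl]
    have hA' : ∀ l, (∑ j, Function.update a i b j l)
        = if l = k then A k - a i k + t else A l := by
      intro l
      rw [hrow]
      by_cases h : l = k
      · subst h; simp [hbk]
      · simp [h, hbl l h]
    unfold qtmUtil
    -- softmax term
    have hZ' : (∑ l, Real.exp (∑ j, Function.update a i b j l)) = E + κ * Real.exp t := by
      rw [← Finset.sum_erase_add _ _ (Finset.mem_univ k)]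
      congr 1
      · apply Finset.sum_congr rfl
        intro l hl
        rw [hA' l, if_neg (Finset.mem_erase.mp hl).1]
      · rw [hA' k, if_pos rfl, hκ, ← Real.exp_add]
    have hNum : (∑ l, Real.exp (∑ j, Function.update a i b j l) * v i l)
        = D + κ * Real.exp t * v i k := by
      rw [← Finset.sum_erase_add _ _ (Finset.mem_univ k)]
      congr 1
      · apply Finset.sum_congr rfl
        intro l hl
        rw [hA' l, if_neg (Finset.mem_erase.mp hl).1]
      · rw [hA' k, if_pos rfl, hκ, ← Real.exp_add]
    have hsm : (∑ l, softmax (fun l => ∑ j, Function.update a i b j l) l * v i l)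
        = (D + κ * Real.exp t * v i k) / (E + κ * Real.exp t) := by
      simp only [softmax]
      simp only [div_mul_eq_mul_div]
      rw [← Finset.sum_div, hNum, hZ']
    have hcost : (∑ l, (Function.update a i b i l) ^ 2) = R + t ^ 2 := by
      rw [Function.update_self]
      rw [← Finset.sum_erase_add _ _ (Finset.mem_univ k)]
      congr 1
      · apply Finset.sum_congr rfl
        intro l hl
        rw [hbl l (Finset.mem_erase.mp hl).1]
      · rw [hbk]
    have hredis : (∑ j ∈ univ.erase i, ∑ l, (Function.update a i b j l) ^ 2)
        = ∑ j ∈ univ.erase i, ∑ l, (a j l) ^ 2 := by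
      apply Finset.sum_congr rfl
      intro j hj
      rw [Function.update_of_ne (Finset.mem_erase.mp hj).1]
    rw [hsm, hcost, hredis, hψ]
  have hsame : qtmUtil c v a i = ψ (a i k) := by
    rw [← hqtm (a i k)]
    congr 1
    rw [Function.update_eq_self, Function.update_eq_self]
  have hmax : IsLocalMax ψ (a i k) := by
    apply Filter.Eventually.of_forall
    intro t
    rw [← hqtm t, ← hsame]
    exact ha i _
  -- derivative of ψ
  set t₀ : ℝ := a i k with ht₀
  have hd1 : HasDerivAt (fun t : ℝ => D + κ * Real.exp t * v i k)
      (κ * Real.exp t₀ * v i k) t₀ := by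
    have := ((Real.hasDerivAt_exp t₀).const_mul κ).mul_const (v i k)
    exact this.const_add D
  have hd2 : HasDerivAt (fun t : ℝ => E + κ * Real.exp t) (κ * Real.exp t₀) t₀ := by
    exact ((Real.hasDerivAt_exp t₀).const_mul κ).const_add E
  have hd3 : HasDerivAt (fun t : ℝ => c * (R + t ^ 2)) (c * (2 * t₀)) t₀ := by
    have h := (hasDerivAt_pow 2 t₀).const_add R
    have := h.const_mul c
    simpa using this
  have hdψ : HasDerivAt ψ
      ((κ * Real.exp t₀ * v i k * (E + κ * Real.exp t₀)
        - (D + κ * Real.exp t₀ * v i k) * (κ * Real.exp t₀)) / (E + κ * Real.exp t₀) ^ 2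
        - c * (2 * t₀)) t₀ := by
    exact ((hd1.div hd2 (hden t₀).ne').sub hd3).add_const C
  have heq0 := hmax.hasDerivAt_eq_zero hdψ
  -- now algebra
  have hs : κ * Real.exp t₀ = Real.exp (A k) := by
    rw [hκ, ← Real.exp_add]; ring_nf
  set Z : ℝ := ∑ l, Real.exp (A l) with hZ
  have hZsplit : Z = E + Real.exp (A k) := by
    rw [hZ, ← Finset.sum_erase_add _ _ (Finset.mem_univ k)]
  have hZpos : 0 < Z := by
    rw [hZsplit]; exact add_pos_of_nonneg_of_pos hEnn (Real.exp_pos _)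
  have hNumsplit : (∑ l, Real.exp (A l) * v i l) = D + Real.exp (A k) * v i k := by
    rw [← Finset.sum_erase_add _ _ (Finset.mem_univ k)]
  have hsmval : (∑ l, softmax A l * v i l) = (D + Real.exp (A k) * v i k) / Z := by
    simp only [softmax]
    simp only [div_mul_eq_mul_div]
    rw [← Finset.sum_div, hNumsplit]
  rw [hs] at heq0
  rw [← hZsplit] at heq0
  show 2 * c * t₀ = softmax A k * (v i k - ∑ l, softmax A l * v i l)
  rw [hsmval, softmax, ← hZ]
  field_simp at heq0 ⊢
  nlinarith [heq0, hZpos]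


set_option maxHeartbeats 1000000 in
theorem stmt13 (n m : ℕ) (hn : 2 ≤ n) (hm : 2 ≤ m)
    (c : ℝ) (hc : 0 < c)
    (v : Fin n → Fin m → ℝ) (hv : ∀ i k, 0 ≤ v i k)
    (hcbig : (1 / 2) * (⨆ i, ⨆ k, v i k) ≤ c)
    (a : Fin n → Fin m → ℝ) (ha : IsNashQTM c v a) :
    (⨆ k, ∑ i, v i k) / (m : ℝ)
      ≤ ∑ k, softmax (fun k => ∑ j, a j k) k * (∑ i, v i k) := by
  have hm' : (0:ℕ) < m := by omega
  haveI : Nonempty (Fin m) := ⟨⟨0, hm'⟩⟩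
  have hmR : (0:ℝ) < (m:ℝ) := by exact_mod_cast hm'
  set A : Fin m → ℝ := fun k => ∑ j, a j k with hA
  set p : Fin m → ℝ := softmax A with hp
  set V : Fin m → ℝ := fun k => ∑ i, v i k with hV
  set W : ℝ := ∑ k, p k * V k with hW
  set Z : ℝ := ∑ l, Real.exp (A l) with hZ
  have hZpos : (0:ℝ) < Z := Finset.sum_pos (fun l _ => Real.exp_pos _) ⟨⟨0, hm'⟩, Finset.mem_univ _⟩
  have hppos : ∀ k, 0 < p k := fun k => div_pos (Real.exp_pos _) hZpos
  have hpval : ∀ k, p k = Real.exp (A k) / Z := fun k => rfl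
  have hpsum : ∑ k, p k = 1 := by
    rw [hp]
    simp only [softmax]
    rw [← Finset.sum_div, ← hZ]
    field_simp
  have hVnn : ∀ k, 0 ≤ V k := fun k => Finset.sum_nonneg fun i _ => hv i k
  have hWnn : 0 ≤ W := Finset.sum_nonneg fun k _ => mul_nonneg (hppos k).le (hVnn k)
  -- aggregate FOC
  have hagg : ∀ k, 2 * c * A k = p k * (V k - W) := by
    intro k
    have : 2 * c * A k = ∑ i, 2 * c * a i k := by
      rw [hA]; rw [Finset.mul_sum]
    rw [this]
    have hfoc : ∀ i : Fin n, 2 * c * a i k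
        = p k * (v i k - ∑ l, p l * v i l) := fun i => qtm_foc c v a ha i k
    rw [Finset.sum_congr rfl fun i _ => hfoc i]
    have hswap : ∑ i, (∑ l, p l * v i l) = W := by
      rw [hW, Finset.sum_comm]
      apply Finset.sum_congr rfl
      intro l _
      rw [hV, Finset.mul_sum]
    calc ∑ i, p k * (v i k - ∑ l, p l * v i l)
        = p k * (∑ i, (v i k - ∑ l, p l * v i l)) := by rw [Finset.mul_sum]
      _ = p k * (V k - W) := by rw [Finset.sum_sub_distrib, hswap, hV]
  -- sum of A is zero
  have hAsum : ∑ k, A k = 0 := by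
    have h1 : 2 * c * ∑ k, A k = ∑ k, p k * (V k - W) := by
      rw [Finset.mul_sum]
      exact Finset.sum_congr rfl fun k _ => hagg k
    have h2 : ∑ k, p k * (V k - W) = 0 := by
      have : ∑ k, p k * (V k - W) = (∑ k, p k * V k) - W * ∑ k, p k := by
        rw [Finset.mul_sum]
        rw [← Finset.sum_sub_distrib]
        apply Finset.sum_congr rfl
        intro k _
        ring
      rw [this, hpsum, ← hW]
      ring
    have := h1.trans h2
    nlinarith [this]
  -- max alternative
  obtain ⟨ks, hks⟩ : ∃ ks : Fin m, ∀ k, V k ≤ V ks := by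
    have : (Finset.univ : Finset (Fin m)).Nonempty := ⟨⟨0, hm'⟩, Finset.mem_univ _⟩
    obtain ⟨ks, _, hks⟩ := Finset.exists_max_image Finset.univ V this
    exact ⟨ks, fun k => hks k (Finset.mem_univ k)⟩
  have hsup : (⨆ k, V k) ≤ V ks := ciSup_le hks
  have hmain : V ks ≤ (m : ℝ) * W := by
    by_cases hAks : A ks ≤ 0
    · have h1 : p ks * (V ks - W) ≤ 0 := by
        rw [← hagg ks]; nlinarith [hAks, hc]
      have h2 : V ks ≤ W := by nlinarith [hppos ks, h1]
      have : (1:ℝ) ≤ (m:ℝ) := by exact_mod_cast (by omega : 1 ≤ m)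
      nlinarith [hWnn, h2, this]
    · push_neg at hAks
      obtain ⟨r, hr⟩ : ∃ r : Fin m, ∀ k, A r ≤ A k := by
        have : (Finset.univ : Finset (Fin m)).Nonempty := ⟨⟨0, hm'⟩, Finset.mem_univ _⟩
        obtain ⟨r, _, hrr⟩ := Finset.exists_min_image Finset.univ A this
        exact ⟨r, fun k => hrr k (Finset.mem_univ k)⟩
      have hrneg : A r < 0 := by
        by_contra hcon
        push_neg at hcon
        have : 0 < ∑ k, A k := Finset.sum_pos' (fun k _ => le_trans hcon (hr k)) ⟨ks, Finset.mem_univ ks, hAks⟩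
        linarith [hAsum]
      -- A ks ≤ (m-1) * (-A r)
      have hb1 : A ks ≤ ((m : ℝ) - 1) * (-A r) := by
        have hsplit : A ks + ∑ k ∈ Finset.univ.erase ks, A k = 0 := by
          rw [Finset.add_sum_erase _ _ (Finset.mem_univ ks)]
          exact hAsum
        have hcard : (Finset.univ.erase ks).card = m - 1 := by
          rw [Finset.card_erase_of_mem (Finset.mem_univ ks), Finset.card_univ, Fintype.card_fin]
        have hlow : ((m : ℝ) - 1) * A r ≤ ∑ k ∈ Finset.univ.erase ks, A k := by
          have := Finset.card_nsmul_le_sum (Finset.univ.erase ks) A (A r) (fun k _ => hr k)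
          rw [hcard] at this
          have hcast : ((m - 1 : ℕ) : ℝ) = (m : ℝ) - 1 := by
            rw [Nat.cast_sub (by omega)]; norm_num
          rw [nsmul_eq_mul, hcast] at this
          exact this
        nlinarith [hsplit, hlow]
      -- V ks - W = 2 c A ks * Z / exp (A ks)
      have hinv : ∀ k, V k - W = 2 * c * A k * Z / Real.exp (A k) := by
        intro k
        rw [eq_div_iff (Real.exp_pos (A k)).ne']
        have h := hagg k
        rw [hpval k] at h
        have h2 : 2 * c * A k * Z = Real.exp (A k) * (V k - W) := by
          rw [h]; field_simp
        linarith [h2]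
      have heks : Real.exp (-(A ks)) ≤ 1 := Real.exp_le_one_iff.mpr (by linarith)
      have her : 1 ≤ Real.exp (-(A r)) := Real.one_le_exp_iff.mpr (by linarith)
      have hstep : V ks - W ≤ ((m:ℝ) - 1) * (W - V r) := by
        have e1 : V ks - W = 2 * c * A ks * Z * Real.exp (-(A ks)) := by
          rw [hinv ks, Real.exp_neg, div_eq_mul_inv]
        have e2 : W - V r = 2 * c * (-(A r)) * Z * Real.exp (-(A r)) := by
          rw [Real.exp_neg, ← div_eq_mul_inv, eq_div_iff (Real.exp_pos (A r)).ne']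
          have h2 : 2 * c * A r * Z = Real.exp (A r) * (V r - W) := by
            rw [hinv r]; field_simp
          linarith [h2]
        rw [e1, e2]
        have h2c : (0:ℝ) ≤ 2 * c := by linarith
        have base1 : (0:ℝ) ≤ 2 * c * A ks * Z :=
          mul_nonneg (mul_nonneg h2c hAks.le) hZpos.le
        have base2 : (0:ℝ) ≤ 2 * c * (-(A r)) * Z :=
          mul_nonneg (mul_nonneg h2c (by linarith)) hZpos.le
        have hm1 : (0:ℝ) ≤ (m:ℝ) - 1 := by
          have : (1:ℝ) ≤ (m:ℝ) := by exact_mod_cast (by omega : 1 ≤ m)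
          linarith
        have c1 : 2 * c * A ks * Z * Real.exp (-(A ks)) ≤ 2 * c * A ks * Z := by
          have := mul_le_mul_of_nonneg_left heks base1
          linarith [this]
        have c2 : 2 * c * A ks * Z ≤ ((m:ℝ)-1) * (2 * c * (-(A r)) * Z) := by
          have := mul_le_mul_of_nonneg_right hb1 (mul_nonneg h2c hZpos.le)
          nlinarith [this]
        have c3 : ((m:ℝ)-1) * (2 * c * (-(A r)) * Z) ≤ ((m:ℝ)-1) * (2 * c * (-(A r)) * Z * Real.exp (-(A r))) := by
          have inner : 2 * c * (-(A r)) * Z ≤ 2 * c * (-(A r)) * Z * Real.exp (-(A r)) :=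
            le_mul_of_one_le_right base2 her
          exact mul_le_mul_of_nonneg_left inner hm1
        linarith [c1, c2, c3]
      have hVr : 0 ≤ V r := hVnn r
      have hm1 : (0:ℝ) ≤ (m:ℝ) - 1 := by
        have : (1:ℝ) ≤ (m:ℝ) := by exact_mod_cast (by omega : 1 ≤ m)
        linarith
      nlinarith [hstep, hVr, hWnn, hm1]
  -- conclude
  rw [div_le_iff₀ hmR]
  calc (⨆ k, V k) ≤ V ks := hsup
    _ ≤ (m:ℝ) * W := hmain
    _ = W * (m:ℝ) := by ring
end
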